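/- arXiv:1304.0139 — 9 statements merged into one kernel-verified Lean document; each statement's English description precedes it below -/
import Mathlib

section
/- Let Γ and Δ be finite groups and let S be a finite set equipped with an action of the product group Γ × Δ. Then for any δ ∈ Δ, the number of Γ-orbits of S (orbits under the action of Γ × {1}) that are fixed setwise by the action of (1, δ), multiplied by |Γ|, equals ∑_{γ ∈ Γ} |{s ∈ S : (γ, δ)·s = s}|. -/
open MulAction


/-- A generalization of Burnside's lemma: if `Γ × Δ` acts on a finite set `S`, then for
any `δ ∈ Δ`, the number of `Γ`-orbits fixed setwise by `(1, δ)`, times `|Γ|`, equals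
`∑ γ ∈ Γ, |{s : (γ, δ) • s = s}|`. -/
theorem burnside_generalization {Γ Δ S : Type*} [Group Γ] [Group Δ]
    [Fintype Γ] [Finite Δ] [Finite S] [MulAction (Γ × Δ) S] (δ : Δ) :
    Nat.card {O : Set S //
        (∃ s : S, O = {t | ∃ γ : Γ, ((γ, (1 : Δ)) : Γ × Δ) • s = t}) ∧
        (fun t => (((1 : Γ), δ) : Γ × Δ) • t) '' O = O} * Nat.card Γ =
      ∑ γ : Γ, Nat.card {s : S // ((γ, δ) : Γ × Δ) • s = s} := by
  classical
  have : Fintype S := Fintype.ofFinite S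
  letI : MulAction Γ S := MulAction.compHom S (MonoidHom.inl Γ Δ)
  have hsmul : ∀ (γ : Γ) (s : S), γ • s = ((γ, (1:Δ)) : Γ × Δ) • s := fun _ _ => rfl
  set φ : S → S := fun t => (((1:Γ), δ) : Γ × Δ) • t with hφ
  have hcomm : ∀ (γ : Γ) (s : S), ((γ, δ) : Γ × Δ) • s = γ • φ s := by
    intro γ s
    rw [hsmul, hφ, smul_smul, Prod.mk_mul_mk, mul_one, one_mul]
  have hequiv : ∀ (γ : Γ) (s : S), φ (γ • s) = γ • φ s := by
    intro γ s
    rw [← hcomm]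
    show (((1:Γ), δ) : Γ × Δ) • ((γ, (1:Δ)) : Γ × Δ) • s = _
    rw [smul_smul, Prod.mk_mul_mk, one_mul, mul_one]
  have horb : ∀ s : S, {t | ∃ γ : Γ, ((γ, (1 : Δ)) : Γ × Δ) • s = t} = orbit Γ s := by
    intro s; ext t; simp [mem_orbit_iff, hsmul]
  have himg : ∀ s : S, φ '' orbit Γ s = orbit Γ (φ s) := by
    intro s; ext t
    constructor
    · rintro ⟨u, ⟨γ, rfl⟩, rfl⟩
      exact ⟨γ, (hequiv γ s).symm⟩
    · rintro ⟨γ, rfl⟩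
      exact ⟨γ • s, mem_orbit s γ, hequiv γ s⟩
  -- fixedness criterion
  have hfix : ∀ s : S, (φ '' orbit Γ s = orbit Γ s) ↔ φ s ∈ orbit Γ s := by
    intro s
    rw [himg]
    constructor
    · intro h; rw [← h]; exact mem_orbit_self _
    · intro h; exact orbit_eq_iff.2 h
  -- per-point count
  have hn : ∀ s : S, Nat.card {γ : Γ // γ • φ s = s} =
      if φ s ∈ orbit Γ s then Nat.card (stabilizer Γ s) else 0 := by
    intro s
    split_ifs with h
    · obtain ⟨g, hg'⟩ := h
      have hg : g • s = φ s := hg'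
      refine Nat.card_congr ⟨fun x => ⟨x.1 * g, ?_⟩, fun y => ⟨y.1 * g⁻¹, ?_⟩, ?_, ?_⟩
      · have := x.2
        simp only [mem_stabilizer_iff, mul_smul, hg, this]
      · have hy := y.2
        rw [mem_stabilizer_iff] at hy
        have hginv : g⁻¹ • φ s = s := by rw [inv_smul_eq_iff, hg]
        simp only [mul_smul, hginv, hy]
      · intro x; ext; simp
      · intro y; ext; simp
    · have : IsEmpty {γ : Γ // γ • φ s = s} := by
        refine ⟨fun x => h ⟨x.1⁻¹, ?_⟩⟩
        rw [inv_smul_eq_iff, x.2]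
      simp [Nat.card_of_isEmpty]
  -- double counting
  have hsum1 : ∑ γ : Γ, Nat.card {s : S // ((γ, δ) : Γ × Δ) • s = s}
      = ∑ s : S, Nat.card {γ : Γ // γ • φ s = s} := by
    simp_rw [Nat.card_eq_fintype_card]
    rw [← Fintype.card_sigma, ← Fintype.card_sigma]
    apply Fintype.card_congr
    calc (Σ γ : Γ, {s : S // ((γ, δ) : Γ × Δ) • s = s})
        ≃ {p : Γ × S // ((p.1, δ) : Γ × Δ) • p.2 = p.2} :=
          (Equiv.subtypeProdEquivSigmaSubtype _).symm
      _ ≃ {p : S × Γ // ((p.2, δ) : Γ × Δ) • p.1 = p.1} :=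
          (Equiv.prodComm Γ S).subtypeEquiv fun _ => Iff.rfl
      _ ≃ Σ s : S, {γ : Γ // ((γ, δ) : Γ × Δ) • s = s} :=
          Equiv.subtypeProdEquivSigmaSubtype fun (s : S) (γ : Γ) => ((γ, δ) : Γ × Δ) • s = s
      _ ≃ Σ s : S, {γ : Γ // γ • φ s = s} :=
          Equiv.sigmaCongrRight fun s => Equiv.subtypeEquivRight fun γ => by rw [hcomm]
  -- decompose over orbits
  have : Fintype (orbitRel.Quotient Γ S) := Fintype.ofFinite _
  have hsum2 : ∑ s : S, Nat.card {γ : Γ // γ • φ s = s}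
      = ∑ ω : orbitRel.Quotient Γ S, ∑ b : orbit Γ ω.out,
          Nat.card {γ : Γ // γ • φ (b : S) = (b : S)} := by
    have hsig : ∑ x : (Σ ω : orbitRel.Quotient Γ S, orbit Γ ω.out),
        Nat.card {γ : Γ // γ • φ (x.2 : S) = (x.2 : S)}
        = ∑ ω : orbitRel.Quotient Γ S, ∑ b : orbit Γ ω.out,
            Nat.card {γ : Γ // γ • φ (b : S) = (b : S)} := by
      rw [← Finset.univ_sigma_univ, Finset.sum_sigma]
    rw [← hsig, ← Equiv.sum_comp (selfEquivSigmaOrbits Γ S)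
      (fun x : (Σ ω : orbitRel.Quotient Γ S, orbit Γ ω.out) =>
        Nat.card {γ : Γ // γ • φ (x.2 : S) = (x.2 : S)})]
    exact Finset.sum_congr rfl fun s _ => rfl
  -- per-orbit sum
  have horbsum : ∀ ω : orbitRel.Quotient Γ S,
      ∑ b : orbit Γ ω.out, Nat.card {γ : Γ // γ • φ (b : S) = (b : S)}
      = if φ '' orbit Γ ω.out = orbit Γ ω.out then Nat.card Γ else 0 := by
    intro ω
    split_ifs with h
    · have hterm : ∀ b : orbit Γ ω.out,
          Nat.card {γ : Γ // γ • φ (b : S) = (b : S)}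
          = Nat.card (stabilizer Γ (ω.out : S)) := by
        rintro ⟨b, hbmem⟩
        have horbeq : orbit Γ b = orbit Γ (ω.out) := orbit_eq_iff.2 hbmem
        rw [hn b, if_pos (by rw [horbeq, ← h]; exact Set.mem_image_of_mem _ hbmem)]
        exact Nat.card_congr (stabilizerEquivStabilizerOfOrbitRel
          ((orbitRel_apply).2 hbmem)).toEquiv
      calc ∑ b : orbit Γ ω.out, Nat.card {γ : Γ // γ • φ (b : S) = (b : S)}
          = ∑ _b : orbit Γ ω.out, Nat.card (stabilizer Γ (ω.out : S)) :=
            Finset.sum_congr rfl fun b _ => hterm b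
        _ = Fintype.card (orbit Γ ω.out) * Fintype.card (stabilizer Γ (ω.out : S)) := by
            rw [Finset.sum_const, Finset.card_univ, smul_eq_mul, Nat.card_eq_fintype_card]
        _ = Nat.card Γ := by
            rw [Nat.card_eq_fintype_card]
            exact card_orbit_mul_card_stabilizer_eq_card_group Γ ω.out
    · refine Finset.sum_eq_zero fun b _ => ?_
      obtain ⟨b, hbmem⟩ := b
      have horbeq : orbit Γ b = orbit Γ (ω.out) := orbit_eq_iff.2 hbmem
      rw [hn b, if_neg]
      intro hmem
      exact h (by
        calc φ '' orbit Γ ω.out = φ '' orbit Γ b := by rw [horbeq]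
          _ = orbit Γ (φ b) := himg b
          _ = orbit Γ b := orbit_eq_iff.2 hmem
          _ = orbit Γ ω.out := horbeq)
  -- assemble
  rw [hsum1, hsum2, Finset.sum_congr rfl fun ω _ => horbsum ω, ← Finset.sum_filter,
    Finset.sum_const, smul_eq_mul]
  congr 1
  -- equiv between set-orbits and quotient orbits
  have e : {ω : orbitRel.Quotient Γ S // φ '' orbit Γ ω.out = orbit Γ ω.out} ≃
      {O : Set S // (∃ s : S, O = {t | ∃ γ : Γ, ((γ, (1 : Δ)) : Γ × Δ) • s = t}) ∧
        φ '' O = O} := by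
    refine Equiv.ofBijective
      (fun ω => ⟨orbit Γ ω.1.out, ⟨ω.1.out, (horb _).symm⟩, ω.2⟩) ⟨?_, ?_⟩
    · intro ω₁ ω₂ hh
      have h1 : orbit Γ (ω₁.1.out : S) = orbit Γ (ω₂.1.out : S) :=
        congrArg Subtype.val hh
      refine Subtype.ext (orbitRel.Quotient.orbit_injective ?_)
      rwa [orbitRel.Quotient.orbit_eq_orbit_out _ Quotient.out_eq',
        orbitRel.Quotient.orbit_eq_orbit_out _ Quotient.out_eq']
    · rintro ⟨O, ⟨s, hOs⟩, hOfix⟩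
      have hOs' : O = orbit Γ s := by rw [hOs, horb]
      have houts : orbit Γ ((Quotient.mk'' s : orbitRel.Quotient Γ S).out) = orbit Γ s := by
        rw [← orbitRel.Quotient.orbit_eq_orbit_out (Quotient.mk'' s) Quotient.out_eq']
        rfl
      refine ⟨⟨Quotient.mk'' s, ?_⟩, ?_⟩
      · rw [houts, ← hOs']; exact hOfix
      · exact Subtype.ext (houts.trans hOs'.symm)
  rw [Nat.card_congr e.symm, Nat.card_eq_fintype_card, Fintype.card_subtype]
end

section
/- In the ring of formal power series ℚ[[x]], let B(x) = ∑_{n≥0} b_n x^n/n!, where b_n is the number of bicolored graphs on Fin n, and let Q(x) = ∑_{n≥0} q_n x^n/n!, where q_n is the number of bipartite simple graphs on Fin n. Then Q(x)² = B(x). -/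
open Finset

/-- Bipartite graphs on `V` (graphs admitting a proper 2-coloring). -/
abbrev Bip (V : Type*) := {G : SimpleGraph V // ∃ c : V → Bool, ∀ u v, G.Adj u v → c u ≠ c v}

/-- A canonical proper coloring of a bipartite graph, depending only on the graph. -/
noncomputable def canon {V : Type*} (G : SimpleGraph V) : V → Bool :=
  letI := Classical.dec (∃ c : V → Bool, ∀ u v, G.Adj u v → c u ≠ c v)
  if h : ∃ c : V → Bool, ∀ u v, G.Adj u v → c u ≠ c v then h.choose else fun _ => false

theorem canon_spec {V : Type*} {G : SimpleGraph V}
    (h : ∃ c : V → Bool, ∀ u v, G.Adj u v → c u ≠ c v) :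
    ∀ u v, G.Adj u v → canon G u ≠ canon G v := by
  simp only [canon]; rw [dif_pos h]; exact h.choose_spec

variable {V : Type*} [Fintype V] [DecidableEq V]

/-- Glue graphs on `S` and `Sᶜ` into a graph on `V`. -/
def glue (S : Finset V) (G₁ : SimpleGraph ↥S) (G₂ : SimpleGraph ↥(Sᶜ)) : SimpleGraph V :=
  SimpleGraph.map (Function.Embedding.subtype _) G₁ ⊔
    SimpleGraph.map (Function.Embedding.subtype _) G₂

theorem glue_adj {S : Finset V} {G₁ : SimpleGraph ↥S} {G₂ : SimpleGraph ↥(Sᶜ)} {u v : V} :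
    (glue S G₁ G₂).Adj u v ↔
      (∃ (hu : u ∈ S) (hv : v ∈ S), G₁.Adj ⟨u, hu⟩ ⟨v, hv⟩) ∨
      (∃ (hu : u ∈ Sᶜ) (hv : v ∈ Sᶜ), G₂.Adj ⟨u, hu⟩ ⟨v, hv⟩) := by
  constructor
  · rintro (⟨-, a, b, hab, rfl, rfl⟩ | ⟨-, a, b, hab, rfl, rfl⟩)
    · exact Or.inl ⟨a.2, b.2, by simpa using hab⟩
    · exact Or.inr ⟨a.2, b.2, by simpa using hab⟩
  · rintro (⟨hu, hv, h⟩ | ⟨hu, hv, h⟩)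
    · exact Or.inl ⟨fun e => h.ne (Subtype.ext e), ⟨u, hu⟩, ⟨v, hv⟩, h, rfl, rfl⟩
    · exact Or.inr ⟨fun e => h.ne (Subtype.ext e), ⟨u, hu⟩, ⟨v, hv⟩, h, rfl, rfl⟩

theorem glue_bip {S : Finset V} {G₁ : SimpleGraph ↥S} {G₂ : SimpleGraph ↥(Sᶜ)}
    (h₁ : ∃ c : ↥S → Bool, ∀ u v, G₁.Adj u v → c u ≠ c v)
    (h₂ : ∃ c : ↥(Sᶜ) → Bool, ∀ u v, G₂.Adj u v → c u ≠ c v) :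
    ∃ c : V → Bool, ∀ u v, (glue S G₁ G₂).Adj u v → c u ≠ c v := by
  obtain ⟨c₁, hc₁⟩ := h₁
  obtain ⟨c₂, hc₂⟩ := h₂
  refine ⟨fun v => if hv : v ∈ S then c₁ ⟨v, hv⟩ else c₂ ⟨v, by simpa using hv⟩, ?_⟩
  intro u v huv
  rcases glue_adj.mp huv with ⟨hu, hv, h⟩ | ⟨hu, hv, h⟩
  · dsimp only; rw [dif_pos hu, dif_pos hv]; exact hc₁ _ _ h
  · have hu' : ¬ u ∈ S := by simpa using hu
    have hv' : ¬ v ∈ S := by simpa using hv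
    dsimp only; rw [dif_neg hu', dif_neg hv']
    have := hc₂ _ _ h
    convert this using 2 <;> simp

/-- Adjacency of the glue restricted to `S` is `G₁`. -/
theorem glue_adj_left {S : Finset V} {G₁ : SimpleGraph ↥S} {G₂ : SimpleGraph ↥(Sᶜ)}
    (a b : ↥S) : (glue S G₁ G₂).Adj a.1 b.1 ↔ G₁.Adj a b := by
  rw [glue_adj]
  constructor
  · rintro (⟨hu, hv, h⟩ | ⟨hu, hv, h⟩)
    · simpa using h
    · exact absurd a.2 (by simpa using hu)
  · intro h
    exact Or.inl ⟨a.2, b.2, by simpa using h⟩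

theorem glue_adj_right {S : Finset V} {G₁ : SimpleGraph ↥S} {G₂ : SimpleGraph ↥(Sᶜ)}
    (a b : ↥(Sᶜ)) : (glue S G₁ G₂).Adj a.1 b.1 ↔ G₂.Adj a b := by
  rw [glue_adj]
  constructor
  · rintro (⟨hu, hv, h⟩ | ⟨hu, hv, h⟩)
    · exact absurd hu (Finset.mem_compl.mp a.2)
    · simpa using h
  · intro h
    exact Or.inr ⟨a.2, b.2, by simpa using h⟩

/-- The inverse map of the main bijection. -/
noncomputable def invMap (V : Type*) [Fintype V] [DecidableEq V] :
    (Σ S : Finset V, Bip ↥S × Bip ↥(Sᶜ)) →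
      {p : (V → Bool) × SimpleGraph V // ∀ u v, p.2.Adj u v → p.1 u ≠ p.1 v} :=
  fun x =>
    let G := glue x.1 x.2.1.1 x.2.2.1
    ⟨(fun v => if v ∈ x.1 then !(canon G v) else canon G v, G), by
      intro u v huv
      have hc := canon_spec (glue_bip x.2.1.2 x.2.2.2) u v huv
      rcases glue_adj.mp huv with ⟨hu, hv, _⟩ | ⟨hu, hv, _⟩
      · dsimp only; rw [if_pos hu, if_pos hv]
        simpa using hc
      · have hu' : ¬ u ∈ x.1 := by simpa using hu
        have hv' : ¬ v ∈ x.1 := by simpa using hv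
        dsimp only; rw [if_neg hu', if_neg hv']
        exact hc⟩

theorem invMap_injective (V : Type*) [Fintype V] [DecidableEq V] :
    Function.Injective (invMap V) := by
  rintro ⟨S, ⟨G₁, h₁⟩, ⟨G₂, h₂⟩⟩ ⟨S', ⟨G₁', h₁'⟩, ⟨G₂', h₂'⟩⟩ heq
  rw [Subtype.ext_iff, Prod.ext_iff] at heq
  obtain ⟨hc, hG⟩ := heq
  dsimp only [invMap] at hc hG
  have hcanon : canon (glue S G₁ G₂) = canon (glue S' G₁' G₂') := by rw [hG]
  have hSS' : S = S' := by
    ext v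
    have := congrFun hc v
    by_cases hv : v ∈ S <;> by_cases hv' : v ∈ S' <;>
      simp only [hv, hv', if_true, if_false, hcanon, iff_true, iff_false,
        true_iff, false_iff] at this ⊢ <;> simp_all
  subst hSS'
  have hG₁ : G₁ = G₁' := by
    ext a b
    rw [← glue_adj_left (G₂ := G₂) a b, ← glue_adj_left (G₂ := G₂') a b, hG]
  have hG₂ : G₂ = G₂' := by
    ext a b
    rw [← glue_adj_right (G₁ := G₁) a b, ← glue_adj_right (G₁ := G₁') a b, hG]
  subst hG₁; subst hG₂; rfl

theorem invMap_surjective (V : Type*) [Fintype V] [DecidableEq V] :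
    Function.Surjective (invMap V) := by
  rintro ⟨⟨c, G⟩, hp⟩
  dsimp only at hp
  classical
  set S : Finset V := Finset.univ.filter (fun v => c v ≠ canon G v) with hS
  have hbip : ∃ c : V → Bool, ∀ u v, G.Adj u v → c u ≠ c v := ⟨c, hp⟩
  have hcan := canon_spec hbip
  -- no cross edges between S and Sᶜ
  have cross : ∀ u v, G.Adj u v → (u ∈ S ↔ v ∈ S) := by
    intro u v huv
    have h1 : c u ≠ c v := hp u v huv
    have h2 := hcan u v huv
    simp only [hS, Finset.mem_filter, Finset.mem_univ, true_and]
    revert h1 h2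
    generalize c u = a; generalize c v = b
    generalize canon G u = a'; generalize canon G v = b'
    revert a b a' b'; decide
  refine ⟨⟨S, ⟨SimpleGraph.comap Subtype.val G, ⟨c ∘ Subtype.val, fun u v h => hp _ _ h⟩⟩,
    ⟨SimpleGraph.comap Subtype.val G, ⟨c ∘ Subtype.val, fun u v h => hp _ _ h⟩⟩⟩, ?_⟩
  have hglue : glue S (SimpleGraph.comap Subtype.val G) (SimpleGraph.comap Subtype.val G) = G := by
    ext u v
    rw [glue_adj]
    constructor
    · rintro (⟨_, _, h⟩ | ⟨_, _, h⟩) <;> exact h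
    · intro h
      by_cases hu : u ∈ S
      · exact Or.inl ⟨hu, (cross u v h).mp hu, h⟩
      · have hv : ¬ v ∈ S := fun hv => hu ((cross u v h).mpr hv)
        exact Or.inr ⟨by simpa using hu, by simpa using hv, h⟩
  apply Subtype.ext
  dsimp only [invMap]
  rw [hglue]
  refine Prod.ext ?_ rfl
  funext v
  dsimp only
  by_cases hv : v ∈ S
  · rw [if_pos hv]
    have : c v ≠ canon G v := by simpa [hS] using hv
    revert this
    generalize c v = a; generalize canon G v = a'
    revert a a'; decide
  · rw [if_neg hv]
    have : c v = canon G v := by simpa [hS] using hv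
    exact this.symm

/-- Transporting bipartite graphs along an equivalence of vertex types. -/
def bipEquiv {α β : Type*} (e : α ≃ β) : Bip α ≃ Bip β where
  toFun := fun ⟨G, h⟩ => ⟨SimpleGraph.comap e.symm G, by
    obtain ⟨c, hc⟩ := h
    exact ⟨c ∘ e.symm, fun u v huv => hc _ _ huv⟩⟩
  invFun := fun ⟨G, h⟩ => ⟨SimpleGraph.comap e G, by
    obtain ⟨c, hc⟩ := h
    exact ⟨c ∘ e, fun u v huv => hc _ _ huv⟩⟩
  left_inv := fun ⟨G, h⟩ => by
    apply Subtype.ext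
    ext a b
    simp [SimpleGraph.comap]
  right_inv := fun ⟨G, h⟩ => by
    apply Subtype.ext
    ext a b
    simp [SimpleGraph.comap]

theorem ncard_sigma {ι : Type*} [Fintype ι] (β : ι → Type*) [∀ i, Finite (β i)] :
    Nat.card (Σ i, β i) = ∑ i, Nat.card (β i) := by
  classical
  letI : ∀ i, Fintype (β i) := fun i => Fintype.ofFinite _
  simp [Nat.card_eq_fintype_card, Fintype.card_sigma]

/-- `q n` : the number of bipartite graphs on `Fin n`. -/
noncomputable def q (n : ℕ) : ℕ := Nat.card (Bip (Fin n))

theorem card_bip_eq (α : Type*) [Fintype α] : Nat.card (Bip α) = q (Fintype.card α) :=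
  Nat.card_congr (bipEquiv (Fintype.equivFin α))

theorem key_count (n : ℕ) :
    Nat.card {p : (Fin n → Bool) × SimpleGraph (Fin n) //
        ∀ u v, p.2.Adj u v → p.1 u ≠ p.1 v} =
      ∑ S : Finset (Fin n), q S.card * q (n - S.card) := by
  rw [← Nat.card_congr (Equiv.ofBijective (invMap (Fin n))
    ⟨invMap_injective (Fin n), invMap_surjective (Fin n)⟩)]
  rw [ncard_sigma]
  refine Finset.sum_congr rfl fun S _ => ?_
  rw [Nat.card_prod, card_bip_eq, card_bip_eq, Fintype.card_coe, Fintype.card_coe,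
    Finset.card_compl, Fintype.card_fin]

/-- In `ℚ[[x]]`, the exponential generating function `Q` for labeled bipartite graphs and
the exponential generating function `B` for labeled bicolored graphs satisfy `Q² = B`. -/
theorem bipartite_egf_sq_eq_bicolored_egf :
    (PowerSeries.mk fun n =>
        (Nat.card {G : SimpleGraph (Fin n) //
            ∃ c : Fin n → Bool, ∀ u v, G.Adj u v → c u ≠ c v} : ℚ) / n.factorial) ^ 2 =
      PowerSeries.mk fun n =>
        (Nat.card {p : (Fin n → Bool) × SimpleGraph (Fin n) //
            ∀ u v, p.2.Adj u v → p.1 u ≠ p.1 v} : ℚ) / n.factorial := by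
  apply PowerSeries.ext
  intro n
  rw [sq, PowerSeries.coeff_mul]
  simp only [PowerSeries.coeff_mk]
  rw [key_count n]
  have hgroup : ∑ S : Finset (Fin n), q S.card * q (n - S.card) =
      ∑ j ∈ Finset.range (n + 1), n.choose j • (q j * q (n - j)) := by
    rw [← Finset.powerset_univ, Finset.sum_powerset_apply_card (fun k => q k * q (n - k))]
    simp
  rw [hgroup]
  rw [Finset.Nat.sum_antidiagonal_eq_sum_range_succ_mk]
  push_cast
  rw [Finset.sum_div]
  refine Finset.sum_congr rfl fun i hi => ?_
  have hle : i ≤ n := Nat.lt_succ_iff.mp (Finset.mem_range.mp hi)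
  simp only [q, smul_eq_mul]
  push_cast
  rw [Nat.cast_choose ℚ hle]
  have h1 : (i.factorial : ℚ) ≠ 0 := Nat.cast_ne_zero.mpr (Nat.factorial_ne_zero i)
  have h2 : ((n - i).factorial : ℚ) ≠ 0 := Nat.cast_ne_zero.mpr (Nat.factorial_ne_zero (n - i))
  have h3 : (n.factorial : ℚ) ≠ 0 := Nat.cast_ne_zero.mpr (Nat.factorial_ne_zero n)
  field_simp
end

section
/- Let V be a finite set, σ a permutation of V, and c : V → Bool a coloring with c ∘ σ = c. Then the number of simple graphs G on V such that every edge of G joins a vertex with c-value true to a vertex with c-value false and such that σ is an automorphism of G equals 2^S, where S = ∑ gcd(|A|, |B|), the sum ranging over all pairs (A, B) with A an orbit (cycle) of σ contained in c⁻¹(true) and B an orbit of σ contained in c⁻¹(false). -/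
open MulAction Subgroup Function

open scoped Classical

set_option linter.unusedSectionVars false
set_option linter.deprecated false

section CountGraphsAux

variable {V : Type*} [Fintype V]

private lemma aux_zpow_mem {G α : Type*} [Group G] [MulAction G α] (σ : G) (s : Set α)
    (h : ∀ x, σ • x ∈ s ↔ x ∈ s) : ∀ (g : zpowers σ) (x : α), g • x ∈ s ↔ x ∈ s := by
  have key : ∀ (n : ℤ) (x : α), σ ^ n • x ∈ s ↔ x ∈ s := by
    intro n
    induction n using Int.induction_on with
    | zero => simp
    | succ k ih => intro x; rw [zpow_add, zpow_one, mul_smul, ih, h]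
    | pred k ih =>
        intro x
        rw [sub_eq_add_neg, zpow_add, mul_smul, ih]
        rw [← h (σ ^ (-1 : ℤ) • x), zpow_neg, zpow_one, smul_inv_smul]
  rintro ⟨-, n, rfl⟩ x
  exact key n x

private lemma aux_orbit_c {G α : Type*} [Group G] [MulAction G α] (σ : G) {c : α → Bool}
    (hc : ∀ x, c (σ • x) = c x) {u v : α} (h : u ∈ orbit (zpowers σ) v) : c u = c v := by
  obtain ⟨g, rfl⟩ := h
  have := aux_zpow_mem σ {x | c x = c v} (fun x => by simp [hc x]) g v
  simpa using this

private def auxPi (σ : Equiv.Perm V) :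
    orbitRel.Quotient (zpowers σ) (V × V) →
      orbitRel.Quotient (zpowers σ) V × orbitRel.Quotient (zpowers σ) V :=
  fun q => Quotient.liftOn' q (fun p => (Quotient.mk'' p.1, Quotient.mk'' p.2))
    (fun p p' h => by
      obtain ⟨g, rfl⟩ := (orbitRel_apply (G := zpowers σ)).mp h
      refine Prod.ext ?_ ?_ <;>
        exact Quotient.sound' ((orbitRel_apply (G := zpowers σ)).mpr (mem_orbit _ g)))

private lemma auxPi_mk (σ : Equiv.Perm V) (p : V × V) :
    auxPi σ (Quotient.mk'' p) = (Quotient.mk'' p.1, Quotient.mk'' p.2) := rfl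

private lemma aux_card_orbit {G α : Type*} [Group G] (a : G) [MulAction G α] (b : α) :
    Nat.card (orbit (zpowers a) b) = Function.minimalPeriod (a • ·) b := by
  rw [Nat.card_congr (orbitZPowersEquiv a b), Nat.card_zmod]

private lemma aux_mem_fiber (σ : Equiv.Perm V) {A B : orbitRel.Quotient (zpowers σ) V}
    {q : orbitRel.Quotient (zpowers σ) (V × V)} (hq : auxPi σ q = (A, B)) {p : V × V}
    (hp : p ∈ q.orbit) : p.1 ∈ A.orbit ∧ p.2 ∈ B.orbit := by
  have h1 : Quotient.mk'' p = q := orbitRel.Quotient.mem_orbit.mp hp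
  rw [← h1, auxPi_mk, Prod.mk.injEq] at hq
  exact ⟨orbitRel.Quotient.mem_orbit.mpr hq.1, orbitRel.Quotient.mem_orbit.mpr hq.2⟩

private lemma aux_card_fiber (σ : Equiv.Perm V) (A B : orbitRel.Quotient (zpowers σ) V) :
    Nat.card {q : orbitRel.Quotient (zpowers σ) (V × V) // auxPi σ q = (A, B)} =
      Nat.gcd (Nat.card A.orbit) (Nat.card B.orbit) := by
  set a := Nat.card A.orbit with ha'
  set b := Nat.card B.orbit with hb'
  have hA : ∀ u ∈ A.orbit, Function.minimalPeriod (σ • ·) u = a := by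
    intro u hu
    rw [ha', ← orbitRel.Quotient.mem_orbit.mp hu, orbitRel.Quotient.orbit_mk, aux_card_orbit]
  have hB : ∀ u ∈ B.orbit, Function.minimalPeriod (σ • ·) u = b := by
    intro u hu
    rw [hb', ← orbitRel.Quotient.mem_orbit.mp hu, orbitRel.Quotient.orbit_mk, aux_card_orbit]
  have hab : ∀ p : V × V, p.1 ∈ A.orbit → p.2 ∈ B.orbit →
      Function.minimalPeriod (σ • ·) p = Nat.lcm a b := by
    intro p h1 h2
    have hmap : ((σ • ·) : V × V → V × V) = Prod.map (σ • ·) (σ • ·) := rfl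
    rw [hmap, Function.minimalPeriod_prodMap, hA _ h1, hB _ h2]
  let e : ↥(A.orbit ×ˢ B.orbit) ≃
      Σ q : {q : orbitRel.Quotient (zpowers σ) (V × V) // auxPi σ q = (A, B)},
        ↥(orbitRel.Quotient.orbit q.1) :=
    { toFun := fun p => ⟨⟨Quotient.mk'' p.1, by
          obtain ⟨h1, h2⟩ := p.2
          rw [auxPi_mk, orbitRel.Quotient.mem_orbit.mp h1, orbitRel.Quotient.mem_orbit.mp h2]⟩,
        ⟨p.1, orbitRel.Quotient.mem_orbit.mpr rfl⟩⟩
      invFun := fun x => ⟨x.2.1, Set.mem_prod.mpr (aux_mem_fiber σ x.1.2 x.2.2)⟩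
      left_inv := fun p => Subtype.ext rfl
      right_inv := fun x => by
        obtain ⟨⟨q, hq⟩, ⟨p, hp⟩⟩ := x
        obtain rfl := orbitRel.Quotient.mem_orbit.mp hp
        rfl }
  have c1 : Nat.card ↥(A.orbit ×ˢ B.orbit) = a * b := by
    rw [Nat.card_congr (Equiv.Set.prod _ _), Nat.card_prod]
  have e2 : ∀ q : {q : orbitRel.Quotient (zpowers σ) (V × V) // auxPi σ q = (A, B)},
      Nat.card (orbitRel.Quotient.orbit q.1) = Nat.lcm a b := by
    rintro ⟨q, hq⟩
    have hout : Quotient.out q ∈ q.orbit := by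
      rw [orbitRel.Quotient.mem_orbit]; exact Quotient.out_eq' q
    obtain ⟨h1, h2⟩ := aux_mem_fiber σ hq hout
    rw [orbitRel.Quotient.orbit_eq_orbit_out _ Quotient.out_eq', aux_card_orbit]
    exact hab _ h1 h2
  have c2 : Nat.card ↥(A.orbit ×ˢ B.orbit) =
      Nat.card {q : orbitRel.Quotient (zpowers σ) (V × V) // auxPi σ q = (A, B)} *
        Nat.lcm a b := by
    rw [Nat.card_congr e, Nat.card_eq_fintype_card, Fintype.card_sigma]
    calc (∑ q : {q : orbitRel.Quotient (zpowers σ) (V × V) // auxPi σ q = (A, B)},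
            Fintype.card (orbitRel.Quotient.orbit q.1))
        = ∑ _q : {q : orbitRel.Quotient (zpowers σ) (V × V) // auxPi σ q = (A, B)},
            Nat.lcm a b :=
          Finset.sum_congr rfl fun q _ => by rw [← Nat.card_eq_fintype_card, e2 q]
      _ = _ := by
          rw [Finset.sum_const, smul_eq_mul, Finset.card_univ, Nat.card_eq_fintype_card]
  have hapos : 0 < a := by
    have := A.nonempty_orbit
    have : Nonempty ↥A.orbit := this.to_subtype
    exact Nat.card_pos
  have hbpos : 0 < b := by
    have := B.nonempty_orbit
    have : Nonempty ↥B.orbit := this.to_subtype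
    exact Nat.card_pos
  have hlcm : 0 < Nat.lcm a b := Nat.pos_of_ne_zero (Nat.lcm_ne_zero hapos.ne' hbpos.ne')
  have := c1 ▸ c2
  rw [← Nat.gcd_mul_lcm a b] at this
  exact Nat.eq_of_mul_eq_mul_right hlcm this.symm

private lemma aux_graph_card (σ : Equiv.Perm V) (c : V → Bool) (hc : c ∘ σ = c) :
    Nat.card {G : SimpleGraph V //
        (∀ u v, G.Adj u v → c u ≠ c v) ∧ (∀ u v, G.Adj (σ u) (σ v) ↔ G.Adj u v)} =
      Nat.card {E : Set (V × V) // E ⊆ {p : V × V | c p.1 = true ∧ c p.2 = false} ∧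
        ∀ p : V × V, σ • p ∈ E ↔ p ∈ E} := by
  have hcs : ∀ x : V, c (σ x) = c x := fun x => congrFun hc x
  apply Nat.card_congr
  refine ⟨fun G => ⟨{p | G.1.Adj p.1 p.2 ∧ c p.1 = true}, ?_, ?_⟩,
          fun E => ⟨SimpleGraph.fromRel (fun u v => (u, v) ∈ E.1), ?_, ?_⟩, ?_, ?_⟩
  · rintro ⟨u, v⟩ ⟨hadj, hcu⟩
    refine ⟨hcu, ?_⟩
    have hne := G.2.1 u v hadj
    cases hv : c v with
    | false => rfl
    | true => exact absurd (hcu.trans hv.symm) hne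
  · intro p
    show (G.1.Adj (σ p.1) (σ p.2) ∧ c (σ p.1) = true) ↔ _
    rw [G.2.2, hcs]
    exact Iff.rfl
  · intro u v hadj
    rw [SimpleGraph.fromRel_adj] at hadj
    obtain ⟨hne, h | h⟩ := hadj
    · obtain ⟨h1, h2⟩ := E.2.1 h
      simp only [Set.mem_setOf_eq] at h1 h2
      rw [h1, h2]; simp
    · obtain ⟨h1, h2⟩ := E.2.1 h
      simp only [Set.mem_setOf_eq] at h1 h2
      rw [h1, h2]; simp
  · intro u v
    rw [SimpleGraph.fromRel_adj, SimpleGraph.fromRel_adj]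
    exact and_congr σ.injective.ne_iff (or_congr (E.2.2 (u, v)) (E.2.2 (v, u)))
  · rintro ⟨G, hG⟩
    apply Subtype.ext
    ext u v
    simp only [SimpleGraph.fromRel_adj, Set.mem_setOf_eq]
    constructor
    · rintro ⟨hne, ⟨h, -⟩ | ⟨h, -⟩⟩
      · exact h
      · exact h.symm
    · intro h
      refine ⟨G.ne_of_adj h, ?_⟩
      have hne := hG.1 u v h
      cases hcu : c u with
      | true => exact Or.inl ⟨h, rfl⟩
      | false =>
          cases hcv : c v with
          | true => exact Or.inr ⟨h.symm, rfl⟩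
          | false => exact absurd (hcu.trans hcv.symm) hne
  · rintro ⟨E, hE⟩
    apply Subtype.ext
    ext ⟨u, v⟩
    simp only [SimpleGraph.fromRel_adj, Set.mem_setOf_eq]
    constructor
    · rintro ⟨⟨hne, h | h⟩, hcu⟩
      · exact h
      · obtain ⟨-, h2⟩ := hE.1 h
        simp only [Set.mem_setOf_eq] at h2
        exact absurd (hcu.symm.trans h2) (by simp)
    · intro h
      obtain ⟨h1, h2⟩ := hE.1 h
      simp only [Set.mem_setOf_eq] at h1 h2
      refine ⟨⟨?_, Or.inl h⟩, h1⟩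
      intro huv
      exact absurd (h1.symm.trans ((congrArg c huv).trans h2)) (by simp)

private lemma aux_inv_card {G : Type*} [Group G] (σ : G) [MulAction G V]
    (P : Set V) :
    Nat.card {E : Set V // E ⊆ P ∧ ∀ p : V, σ • p ∈ E ↔ p ∈ E} =
      Nat.card (Set {q : orbitRel.Quotient (zpowers σ) V // q.orbit ⊆ P}) := by
  apply Nat.card_congr
  refine ⟨fun E => {q | Quotient.out q.1 ∈ E.1},
          fun S => ⟨{p | ∃ h : orbitRel.Quotient.orbit (Quotient.mk'' p : orbitRel.Quotient (zpowers σ) V) ⊆ P,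
            (⟨Quotient.mk'' p, h⟩ : {q : orbitRel.Quotient (zpowers σ) V // q.orbit ⊆ P}) ∈ S},
            ?_, ?_⟩, ?_, ?_⟩
  · rintro p ⟨h, -⟩
    exact h (orbitRel.Quotient.mem_orbit.mpr rfl)
  · intro p
    have hmk : (Quotient.mk'' (σ • p) : orbitRel.Quotient (zpowers σ) V) = Quotient.mk'' p :=
      Quotient.sound' ((orbitRel_apply (G := zpowers σ)).mpr
        ⟨⟨σ, mem_zpowers σ⟩, rfl⟩)
    show (∃ h : orbitRel.Quotient.orbit (Quotient.mk'' (σ • p) : orbitRel.Quotient (zpowers σ) V) ⊆ P, _) ↔ _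
    rw [hmk]
    exact Iff.rfl
  · rintro ⟨E, hEP, hEinv⟩
    have hEz := aux_zpow_mem σ E hEinv
    apply Subtype.ext
    ext p
    show (∃ _h : orbitRel.Quotient.orbit (Quotient.mk'' p : orbitRel.Quotient (zpowers σ) V) ⊆ P,
        Quotient.out (Quotient.mk'' p : orbitRel.Quotient (zpowers σ) V) ∈ E) ↔ p ∈ E
    have hout : Quotient.out (Quotient.mk'' p : orbitRel.Quotient (zpowers σ) V)
        ∈ orbit (zpowers σ) p := by
      rw [← orbitRel_apply, ← Quotient.eq'']
      exact Quotient.out_eq' _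
    obtain ⟨g, hg⟩ := hout
    constructor
    · rintro ⟨-, hE⟩
      rw [← hg] at hE
      exact (hEz g p).mp hE
    · intro hp
      refine ⟨?_, ?_⟩
      · rw [orbitRel.Quotient.orbit_mk]
        rintro x ⟨g', rfl⟩
        exact hEP ((hEz g' p).mpr hp)
      · rw [← hg]
        exact (hEz g p).mpr hp
  · intro S
    ext ⟨q, hq⟩
    show (∃ h : orbitRel.Quotient.orbit (Quotient.mk'' (Quotient.out q) : orbitRel.Quotient (zpowers σ) V) ⊆ P,
        (⟨Quotient.mk'' (Quotient.out q), h⟩ :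
          {q : orbitRel.Quotient (zpowers σ) V // q.orbit ⊆ P}) ∈ S) ↔ _
    constructor
    · rintro ⟨h, hS⟩
      have : (⟨Quotient.mk'' (Quotient.out q), h⟩ :
          {q : orbitRel.Quotient (zpowers σ) V // q.orbit ⊆ P}) = ⟨q, hq⟩ :=
        Subtype.ext (Quotient.out_eq' q)
      rwa [this] at hS
    · intro hS
      have h : orbitRel.Quotient.orbit (Quotient.mk'' (Quotient.out q) : orbitRel.Quotient (zpowers σ) V) ⊆ P := by
        have e : (Quotient.mk'' (Quotient.out q) : orbitRel.Quotient (zpowers σ) V) = q :=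
          Quotient.out_eq' q
        rw [e]; exact hq
      refine ⟨h, ?_⟩
      have : (⟨Quotient.mk'' (Quotient.out q), h⟩ :
          {q : orbitRel.Quotient (zpowers σ) V // q.orbit ⊆ P}) = ⟨q, hq⟩ :=
        Subtype.ext (Quotient.out_eq' q)
      rwa [this]

private lemma aux_card_fiber_cond (σ : Equiv.Perm V) (c : V → Bool) (hc : c ∘ σ = c)
    (A B : orbitRel.Quotient (zpowers σ) V) :
    Nat.card {q : orbitRel.Quotient (zpowers σ) (V × V) //
        q.orbit ⊆ {p : V × V | c p.1 = true ∧ c p.2 = false} ∧ auxPi σ q = (A, B)} =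
      if A.orbit ⊆ c ⁻¹' {true} ∧ B.orbit ⊆ c ⁻¹' {false} then
        Nat.gcd (Nat.card A.orbit) (Nat.card B.orbit) else 0 := by
  have hcs : ∀ x : V, c (σ • x) = c x := fun x => congrFun hc x
  split_ifs with h
  · rw [← aux_card_fiber σ A B]
    apply Nat.card_congr
    apply Equiv.subtypeEquivRight
    intro q
    constructor
    · exact And.right
    · intro hq
      refine ⟨?_, hq⟩
      intro p hp
      obtain ⟨h1, h2⟩ := aux_mem_fiber σ hq hp
      exact ⟨by simpa using h.1 h1, by simpa using h.2 h2⟩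
  · have hempty : IsEmpty {q : orbitRel.Quotient (zpowers σ) (V × V) //
        q.orbit ⊆ {p : V × V | c p.1 = true ∧ c p.2 = false} ∧ auxPi σ q = (A, B)} := by
      rw [isEmpty_subtype]
      rintro q ⟨hP, hπ⟩
      apply h
      have hout : Quotient.out q ∈ q.orbit := by
        rw [orbitRel.Quotient.mem_orbit]; exact Quotient.out_eq' q
      obtain ⟨h1, h2⟩ := aux_mem_fiber σ hπ hout
      have hp := hP hout
      constructor
      · intro u hu
        have hu' : u ∈ orbit (zpowers σ) (Quotient.out q).1 := by
          rwa [← orbitRel.Quotient.mem_orbit.mp h1, orbitRel.Quotient.orbit_mk] at hu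
        have hcu := aux_orbit_c σ hcs hu'
        simp only [Set.mem_preimage, Set.mem_singleton_iff]
        rw [hcu]
        exact hp.1
      · intro u hu
        have hu' : u ∈ orbit (zpowers σ) (Quotient.out q).2 := by
          rwa [← orbitRel.Quotient.mem_orbit.mp h2, orbitRel.Quotient.orbit_mk] at hu
        have hcu := aux_orbit_c σ hcs hu'
        simp only [Set.mem_preimage, Set.mem_singleton_iff]
        rw [hcu]
        exact hp.2
    exact Nat.card_of_isEmpty

end CountGraphsAux

open scoped Classical in
/-- Fix a finite vertex set `V`, a permutation `σ` of `V`, and a coloring `c : V → Bool`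
with `c ∘ σ = c`.  The number of simple graphs `G` on `V` all of whose edges join a
`true`-colored vertex to a `false`-colored vertex and for which `σ` is an automorphism
equals `2 ^ S`, where `S` is the sum of `gcd (|A|, |B|)` over all pairs `(A, B)` of a
cycle `A` of `σ` inside `c⁻¹ true` and a cycle `B` of `σ` inside `c⁻¹ false`. -/
theorem count_graphs_color_preserving_automorphism {V : Type*} [Fintype V]
    (σ : Equiv.Perm V) (c : V → Bool) (hc : c ∘ σ = c) :
    Nat.card {G : SimpleGraph V //
        (∀ u v, G.Adj u v → c u ≠ c v) ∧ (∀ u v, G.Adj (σ u) (σ v) ↔ G.Adj u v)} =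
      2 ^ (∑ᶠ (A : MulAction.orbitRel.Quotient (Subgroup.zpowers σ) V)
             (B : MulAction.orbitRel.Quotient (Subgroup.zpowers σ) V),
             if A.orbit ⊆ c ⁻¹' {true} ∧ B.orbit ⊆ c ⁻¹' {false} then
               Nat.gcd (Nat.card A.orbit) (Nat.card B.orbit) else 0) := by
  set P : Set (V × V) := {p : V × V | c p.1 = true ∧ c p.2 = false} with hPdef
  rw [aux_graph_card σ c hc, aux_inv_card (V := V × V) σ P]
  have hset : Nat.card (Set {q : orbitRel.Quotient (zpowers σ) (V × V) // q.orbit ⊆ P}) =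
      2 ^ Nat.card {q : orbitRel.Quotient (zpowers σ) (V × V) // q.orbit ⊆ P} := by
    have e1 : Set {q : orbitRel.Quotient (zpowers σ) (V × V) // q.orbit ⊆ P} ≃
        ({q : orbitRel.Quotient (zpowers σ) (V × V) // q.orbit ⊆ P} → Bool) :=
      Equiv.arrowCongr (Equiv.refl _) Equiv.propEquivBool
    rw [Nat.card_congr e1, Nat.card_fun]
    congr 1
    simp [Nat.card_eq_fintype_card]
  rw [hset]
  congr 1
  have hdecomp : Nat.card {q : orbitRel.Quotient (zpowers σ) (V × V) // q.orbit ⊆ P} =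
      ∑ y : orbitRel.Quotient (zpowers σ) V × orbitRel.Quotient (zpowers σ) V,
        Nat.card {q : orbitRel.Quotient (zpowers σ) (V × V) //
          q.orbit ⊆ P ∧ auxPi σ q = y} := by
    rw [Nat.card_congr (Equiv.sigmaFiberEquiv
        (fun x : {q : orbitRel.Quotient (zpowers σ) (V × V) // q.orbit ⊆ P} =>
          auxPi σ x.1)).symm,
      Nat.card_eq_fintype_card, Fintype.card_sigma]
    apply Finset.sum_congr rfl
    intro y _
    rw [← Nat.card_eq_fintype_card]
    exact Nat.card_congr (Equiv.subtypeSubtypeEquivSubtypeInter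
      (fun q : orbitRel.Quotient (zpowers σ) (V × V) => q.orbit ⊆ P)
      (fun q => auxPi σ q = y))
  rw [hdecomp, Fintype.sum_prod_type, finsum_eq_sum_of_fintype]
  apply Finset.sum_congr rfl
  intro A _
  rw [finsum_eq_sum_of_fintype]
  apply Finset.sum_congr rfl
  intro B _
  exact aux_card_fiber_cond σ c hc A B
end

section
/- Let n ≥ 1 and let σ be a permutation of Fin n with cycle type λ, the multiset of sizes of all orbits of σ (fixed points contributing parts equal to 1). Then the number of bicolored graphs (c, G) on Fin n such that c ∘ σ = c and σ is an automorphism of G equals ∑_{(μ,ν) : μ ∪ ν = λ} (z_λ/(z_μ z_ν)) · ∏ 2^{gcd(i,j)}, where the sum is over ordered pairs of multisets (μ, ν) whose multiset union is λ, the product runs over all pairs (i, j) of a part i of μ and a part j of ν counted with multiplicity, and for a multiset κ of positive integers z_κ = ∏_i i^{k_i}·k_i! with k_i the multiplicity of i in κ. -/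
/-- The full cycle type of a permutation `σ` of a finite set: the multiset of the sizes
of all orbits of `σ`, fixed points contributing parts equal to `1`. -/
noncomputable def cycleTypeFull {V : Type*} [Fintype V] (σ : Equiv.Perm V) : Multiset ℕ :=
  letI := Fintype.ofFinite (MulAction.orbitRel.Quotient (Subgroup.zpowers σ) V)
  (Finset.univ : Finset (MulAction.orbitRel.Quotient (Subgroup.zpowers σ) V)).val.map
    fun q => Nat.card q.orbit

/-- For a multiset `κ` of positive integers, `zMult κ = ∏ i, i ^ kᵢ * kᵢ!`, where `kᵢ` is
the multiplicity of `i` in `κ`. -/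
def zMult (κ : Multiset ℕ) : ℕ :=
  ∏ i ∈ κ.toFinset, i ^ κ.count i * (κ.count i).factorial

open MulAction Function Subgroup

set_option linter.unusedSectionVars false

namespace BG

variable {V : Type*} [Fintype V] [DecidableEq V]

abbrev Qt (σ : Equiv.Perm V) := orbitRel.Quotient (zpowers σ) V

noncomputable instance (σ : Equiv.Perm V) : Fintype (Qt σ) := Fintype.ofFinite _

/-- orbit size -/
noncomputable def sz (σ : Equiv.Perm V) (q : Qt σ) : ℕ := Nat.card (orbitRel.Quotient.orbit q)

def tau (σ : Equiv.Perm V) : Equiv.Perm (V × V) := Equiv.prodCongr σ σ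

abbrev QP (σ : Equiv.Perm V) := orbitRel.Quotient (zpowers (tau σ)) (V × V)

noncomputable instance (σ : Equiv.Perm V) : Fintype (QP σ) := Fintype.ofFinite _

variable (σ : Equiv.Perm V)

lemma tau_pow (m : ℕ) : (tau σ) ^ m = Equiv.prodCongr (σ ^ m) (σ ^ m) := by
  induction m with
  | zero => ext x <;> simp
  | succ m ih =>
    rw [tau] at ih ⊢
    ext x
    · simp [pow_succ, Equiv.Perm.mul_apply, ih]
    · simp [pow_succ, Equiv.Perm.mul_apply, ih]

lemma tau_zpow (k : ℤ) : (tau σ) ^ k = Equiv.prodCongr (σ ^ k) (σ ^ k) := by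
  cases k with
  | ofNat m => simpa [zpow_natCast] using tau_pow σ m
  | negSucc m =>
    rw [zpow_negSucc, zpow_negSucc, tau_pow]
    ext x
    · simp [Equiv.Perm.inv_def, Equiv.prodCongr_symm]
    · simp [Equiv.Perm.inv_def, Equiv.prodCongr_symm]

lemma mem_orbit_zpowers_iff {G : Type*} [Group G] (g : G) {α : Type*} [MulAction G α]
    (x y : α) : y ∈ orbit (zpowers g) x ↔ ∃ k : ℤ, g ^ k • x = y := by
  constructor
  · rintro ⟨⟨h, hh⟩, rfl⟩
    obtain ⟨k, rfl⟩ := mem_zpowers_iff.mp hh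
    exact ⟨k, rfl⟩
  · rintro ⟨k, rfl⟩
    exact ⟨⟨g ^ k, zpow_mem (mem_zpowers g) k⟩, rfl⟩

lemma qv_eq_iff (x y : V) :
    (Quotient.mk'' x : Qt σ) = Quotient.mk'' y ↔ ∃ k : ℤ, (σ ^ k) y = x := by
  rw [Quotient.eq'']
  change (orbitRel (zpowers σ) V) x y ↔ _
  rw [orbitRel_apply, mem_orbit_zpowers_iff]
  simp [Equiv.Perm.smul_def]

lemma qp_eq_iff (x y : V × V) :
    (Quotient.mk'' x : QP σ) = Quotient.mk'' y ↔
      ∃ k : ℤ, ((σ ^ k) y.1, (σ ^ k) y.2) = x := by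
  rw [Quotient.eq'']
  change (orbitRel (zpowers (tau σ)) (V × V)) x y ↔ _
  rw [orbitRel_apply, mem_orbit_zpowers_iff]
  constructor
  · rintro ⟨k, hk⟩
    refine ⟨k, ?_⟩
    rw [Equiv.Perm.smul_def, tau_zpow] at hk
    exact hk
  · rintro ⟨k, hk⟩
    refine ⟨k, ?_⟩
    rw [Equiv.Perm.smul_def, tau_zpow]
    exact hk

lemma qv_mk_apply (x : V) : (Quotient.mk'' (σ x) : Qt σ) = Quotient.mk'' x :=
  (qv_eq_iff σ _ _).mpr ⟨1, by simp⟩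

/-- the projection from pair-orbits to pairs of orbits -/
def pi (p : QP σ) : Qt σ × Qt σ :=
  Quotient.liftOn' p (fun x => (Quotient.mk'' x.1, Quotient.mk'' x.2)) (by
    intro a b hab
    have : (Quotient.mk'' a : QP σ) = Quotient.mk'' b := Quotient.sound' hab
    obtain ⟨k, hk⟩ := (qp_eq_iff σ a b).mp this
    have h1 : (Quotient.mk'' a.1 : Qt σ) = Quotient.mk'' b.1 :=
      (qv_eq_iff σ _ _).mpr ⟨k, congrArg Prod.fst hk⟩
    have h2 : (Quotient.mk'' a.2 : Qt σ) = Quotient.mk'' b.2 :=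
      (qv_eq_iff σ _ _).mpr ⟨k, congrArg Prod.snd hk⟩
    rw [Prod.ext_iff]; exact ⟨h1, h2⟩)

@[simp] lemma pi_mk (x : V × V) :
    pi σ (Quotient.mk'' x) = (Quotient.mk'' x.1, Quotient.mk'' x.2) := rfl

lemma sz_mk (x : V) : sz σ (Quotient.mk'' x) = minimalPeriod (σ • ·) x := by
  unfold sz
  rw [orbitRel.Quotient.orbit_mk, Nat.card_congr (orbitZPowersEquiv σ x), Nat.card_zmod]

lemma sz_pos (q : Qt σ) : 0 < sz σ q := by
  induction q using Quotient.inductionOn'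
  rw [sz_mk]
  have := MulAction.minimalPeriod_pos σ (by assumption)
  exact Nat.pos_of_ne_zero this.out


lemma nat_card_sigma {ι : Type*} [Fintype ι] (f : ι → Type*) [∀ i, Finite (f i)] :
    Nat.card (Σ i, f i) = ∑ i, Nat.card (f i) := by
  letI := fun i => Fintype.ofFinite (f i)
  simp [Nat.card_eq_fintype_card, Fintype.card_sigma]

lemma card_mk_fiber (q : Qt σ) : Nat.card {x : V // (Quotient.mk'' x : Qt σ) = q} = sz σ q := by
  unfold sz
  have e : {x : V // (Quotient.mk'' x : Qt σ) = q} ≃ {x : V // x ∈ orbitRel.Quotient.orbit q} :=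
    Equiv.subtypeEquivRight fun x => orbitRel.Quotient.mem_orbit.symm
  exact Nat.card_congr e

lemma card_mk_fiber_pair (p : QP σ) :
    Nat.card {x : V × V // (Quotient.mk'' x : QP σ) = p} =
      Nat.card (orbitRel.Quotient.orbit p) := by
  have e : {x : V × V // (Quotient.mk'' x : QP σ) = p} ≃
      {x : V × V // x ∈ orbitRel.Quotient.orbit p} :=
    Equiv.subtypeEquivRight fun x => orbitRel.Quotient.mem_orbit.symm
  exact Nat.card_congr e

lemma card_pi_point_fiber (q q' : Qt σ) :
    Nat.card {x : V × V // pi σ (Quotient.mk'' x) = (q, q')} = sz σ q * sz σ q' := by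
  have e : {x : V × V // pi σ (Quotient.mk'' x) = (q, q')} ≃
      {x : V // (Quotient.mk'' x : Qt σ) = q} × {x : V // (Quotient.mk'' x : Qt σ) = q'} := by
    refine (Equiv.subtypeEquivRight fun x => ?_).trans (Equiv.subtypeProdEquivProd)
    rw [pi_mk, Prod.ext_iff]
  rw [Nat.card_congr e, Nat.card_prod, card_mk_fiber, card_mk_fiber]

lemma card_orbit_pair (x : V × V) :
    Nat.card (orbitRel.Quotient.orbit (Quotient.mk'' x : QP σ)) =
      Nat.lcm (sz σ (Quotient.mk'' x.1)) (sz σ (Quotient.mk'' x.2)) := by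
  rw [orbitRel.Quotient.orbit_mk, Nat.card_congr (orbitZPowersEquiv (tau σ) x), Nat.card_zmod,
    sz_mk, sz_mk]
  have h : (fun y => tau σ • y) = Prod.map (σ • ·) (σ • ·) := funext fun y => by
    obtain ⟨a, b⟩ := y
    show tau σ (a, b) = (σ a, σ b)
    rfl
  rw [h, minimalPeriod_prodMap]

lemma card_orbit_eq_lcm (p : QP σ) :
    Nat.card (orbitRel.Quotient.orbit p) =
      Nat.lcm (sz σ (pi σ p).1) (sz σ (pi σ p).2) := by
  induction p using Quotient.inductionOn' with
  | h x => rw [pi_mk]; exact card_orbit_pair σ x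

lemma card_pi_fiber_mul_lcm (q q' : Qt σ) :
    Nat.card {p : QP σ // pi σ p = (q, q')} * Nat.lcm (sz σ q) (sz σ q') =
      sz σ q * sz σ q' := by
  classical
  have e : (Σ p : {p : QP σ // pi σ p = (q, q')}, {x : V × V // (Quotient.mk'' x : QP σ) = p.1})
      ≃ {x : V × V // pi σ (Quotient.mk'' x) = (q, q')} := by
    refine Equiv.trans ?_ (Equiv.sigmaFiberEquiv
      (fun x : {x : V × V // pi σ (Quotient.mk'' x) = (q, q')} =>
        (⟨Quotient.mk'' x.1, x.2⟩ : {p : QP σ // pi σ p = (q, q')})))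
    refine Equiv.sigmaCongrRight fun p => ?_
    exact
      { toFun := fun y => ⟨⟨y.1, by rw [y.2]; exact p.2⟩, Subtype.ext y.2⟩
        invFun := fun a => ⟨a.1.1, congrArg Subtype.val a.2⟩
        left_inv := fun y => rfl
        right_inv := fun a => Subtype.ext (Subtype.ext rfl) }
  have hcards := Nat.card_congr e
  rw [nat_card_sigma, card_pi_point_fiber] at hcards
  have hsum : ∀ p : {p : QP σ // pi σ p = (q, q')},
      Nat.card {x : V × V // (Quotient.mk'' x : QP σ) = p.1} =
        Nat.lcm (sz σ q) (sz σ q') := by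
    intro p
    rw [card_mk_fiber_pair, card_orbit_eq_lcm, p.2]
  rw [Finset.sum_congr rfl (fun p _ => hsum p), Finset.sum_const, smul_eq_mul] at hcards
  rw [← hcards, Nat.card_eq_fintype_card, Finset.card_univ]

lemma card_pi_fiber (q q' : Qt σ) :
    Nat.card {p : QP σ // pi σ p = (q, q')} = Nat.gcd (sz σ q) (sz σ q') := by
  have h1 := card_pi_fiber_mul_lcm σ q q'
  have h2 : Nat.gcd (sz σ q) (sz σ q') * Nat.lcm (sz σ q) (sz σ q') = sz σ q * sz σ q' :=
    Nat.gcd_mul_lcm _ _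
  have hl : 0 < Nat.lcm (sz σ q) (sz σ q') :=
    Nat.pos_of_ne_zero (Nat.lcm_ne_zero (sz_pos σ q).ne' (sz_pos σ q').ne')
  exact Nat.eq_of_mul_eq_mul_right hl (h1.trans h2.symm)


lemma adj_zpow {G : SimpleGraph V} (h : ∀ u v, G.Adj (σ u) (σ v) ↔ G.Adj u v) (k : ℤ)
    (u v : V) : G.Adj ((σ ^ k) u) ((σ ^ k) v) ↔ G.Adj u v := by
  have hn : ∀ m : ℕ, ∀ u v : V, G.Adj ((σ ^ m) u) ((σ ^ m) v) ↔ G.Adj u v := by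
    intro m
    induction m with
    | zero => intro u v; simp
    | succ m ih =>
      intro u v
      rw [pow_succ, Equiv.Perm.mul_apply, Equiv.Perm.mul_apply, ih, h]
  cases k with
  | ofNat m => simpa using hn m u v
  | negSucc m =>
    have h2 := hn (m + 1) (((σ ^ (m + 1))⁻¹) u) (((σ ^ (m + 1))⁻¹) v)
    simp only [Equiv.Perm.coe_inv, Equiv.apply_symm_apply] at h2
    rw [zpow_negSucc]
    exact h2.symm

variable (f : Qt σ → Bool)

/-- σ-invariant bicolored graphs for the coloring induced by f -/
def GraphSub : Type _ :=
  {G : SimpleGraph V // (∀ u v, G.Adj u v → f (Quotient.mk'' u) ≠ f (Quotient.mk'' v)) ∧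
    ∀ u v, G.Adj (σ u) (σ v) ↔ G.Adj u v}

/-- pair-orbits from a false-colored orbit to a true-colored orbit -/
def OrbSub : Type _ :=
  {p : QP σ // f (pi σ p).1 = false ∧ f (pi σ p).2 = true}

instance : Finite (OrbSub σ f) := by unfold OrbSub; infer_instance

lemma mk_pair_sigma (u v : V) :
    (Quotient.mk'' (σ u, σ v) : QP σ) = Quotient.mk'' (u, v) :=
  (qp_eq_iff σ _ _).mpr ⟨1, by simp⟩

def graphEquiv : GraphSub σ f ≃
    ({h : QP σ → Prop // ∀ p, h p → f (pi σ p).1 = false ∧ f (pi σ p).2 = true}) where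
  toFun G := by
    refine ⟨fun p => Quotient.liftOn' p
      (fun x => G.1.Adj x.1 x.2 ∧ f (Quotient.mk'' x.1) = false) ?_, ?_⟩
    · intro a b hab
      obtain ⟨k, hk⟩ := (qp_eq_iff σ a b).mp (Quotient.sound' hab)
      obtain ⟨hk1, hk2⟩ := Prod.ext_iff.mp hk.symm
      dsimp only at hk1 hk2 ⊢
      have hmk : (Quotient.mk'' ((σ ^ k) b.1) : Qt σ) = Quotient.mk'' b.1 :=
        (qv_eq_iff σ _ _).mpr ⟨k, rfl⟩
      rw [hk1, hk2]
      apply propext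
      rw [adj_zpow σ G.2.2 k, hmk]
    · intro p hp
      induction p using Quotient.inductionOn' with
      | h x =>
        obtain ⟨hadj, hffalse⟩ := hp
        refine ⟨hffalse, ?_⟩
        have := G.2.1 x.1 x.2 hadj
        rw [hffalse] at this
        simp only [pi_mk]
        cases hb : f (Quotient.mk'' x.2)
        · exact absurd hb.symm this
        · rfl
  invFun h := by
    refine ⟨⟨fun u v => h.1 (Quotient.mk'' (u, v)) ∨ h.1 (Quotient.mk'' (v, u)), ?_, ?_⟩, ?_, ?_⟩
    · constructor; intro u v h; exact Or.symm h
    · constructor; intro u hu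
      rcases hu with hu | hu <;>
      · obtain ⟨h1, h2⟩ := h.2 _ hu
        simp only [pi_mk] at h1 h2
        rw [h1] at h2
        exact absurd h2 (by simp)
    · intro u v hadj
      rcases hadj with hu | hu <;>
      · obtain ⟨h1, h2⟩ := h.2 _ hu
        simp only [pi_mk] at h1 h2
        rw [h1, h2]
        simp
    · intro u v
      show h.1 (Quotient.mk'' (σ u, σ v)) ∨ h.1 (Quotient.mk'' (σ v, σ u)) ↔ _
      rw [mk_pair_sigma, mk_pair_sigma]
  left_inv := by
    rintro ⟨G, hG1, hG2⟩
    apply Subtype.ext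
    apply SimpleGraph.ext
    funext u v
    apply propext
    show (G.Adj u v ∧ f (Quotient.mk'' u) = false) ∨
      (G.Adj v u ∧ f (Quotient.mk'' v) = false) ↔ G.Adj u v
    constructor
    · rintro (⟨h1, _⟩ | ⟨h1, _⟩)
      · exact h1
      · exact h1.symm
    · intro hadj
      have hne := hG1 u v hadj
      cases hu : f (Quotient.mk'' u)
      · exact Or.inl ⟨hadj, rfl⟩
      · refine Or.inr ⟨hadj.symm, ?_⟩
        rw [hu] at hne
        cases hv : f (Quotient.mk'' v)
        · rfl
        · exact absurd hv.symm hne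
  right_inv := by
    rintro ⟨h, hh⟩
    apply Subtype.ext
    funext p
    induction p using Quotient.inductionOn' with
    | h x =>
      apply propext
      show ((h (Quotient.mk'' (x.1, x.2)) ∨ h (Quotient.mk'' (x.2, x.1))) ∧
        f (Quotient.mk'' x.1) = false) ↔ h (Quotient.mk'' x)
      constructor
      · rintro ⟨hu | hu, hf⟩
        · exact hu
        · obtain ⟨h1, h2⟩ := hh _ hu
          simp only [pi_mk] at h1 h2
          rw [hf] at h2
          exact absurd h2 (by simp)
      · intro hx
        have := hh _ hx
        simp only [pi_mk] at this
        exact ⟨Or.inl hx, this.1⟩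

lemma card_graphSub : Nat.card (GraphSub σ f) = 2 ^ Nat.card (OrbSub σ f) := by
  classical
  have e2 : {h : QP σ → Prop // ∀ p, h p → f (pi σ p).1 = false ∧ f (pi σ p).2 = true} ≃
      ((OrbSub σ f) → Prop) :=
    { toFun := fun h p => h.1 p.1
      invFun := fun s =>
        ⟨fun p => ∃ hp : f (pi σ p).1 = false ∧ f (pi σ p).2 = true, s ⟨p, hp⟩,
         fun p hp => hp.1⟩
      left_inv := fun h => Subtype.ext (funext fun p => propext
        ⟨fun ⟨_, hs⟩ => hs, fun hs => ⟨h.2 p hs, hs⟩⟩)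
      right_inv := fun s => funext fun p => propext
        ⟨fun ⟨hp, hs⟩ => by exact hs,
         fun hs => ⟨p.2, by exact hs⟩⟩ }
  rw [Nat.card_congr ((graphEquiv σ f).trans e2)]
  letI := Fintype.ofFinite (OrbSub σ f)
  rw [Nat.card_eq_fintype_card, Nat.card_eq_fintype_card, Fintype.card_fun, Fintype.card_prop]

lemma card_orbSub : Nat.card (OrbSub σ f) =
    ∑ z ∈ Finset.univ.filter (fun z : Qt σ × Qt σ => f z.1 = false ∧ f z.2 = true),
      Nat.gcd (sz σ z.1) (sz σ z.2) := by
  classical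
  rw [show OrbSub σ f = {p : QP σ // f (pi σ p).1 = false ∧ f (pi σ p).2 = true} from rfl]
  rw [Nat.card_eq_fintype_card, Fintype.card_subtype]
  rw [Finset.card_eq_sum_card_fiberwise (f := pi σ)
    (t := Finset.univ.filter (fun z : Qt σ × Qt σ => f z.1 = false ∧ f z.2 = true))
    (fun p hp => by simpa using hp)]
  refine Finset.sum_congr rfl fun z hz => ?_
  simp only [Finset.mem_filter, Finset.mem_univ, true_and] at hz
  have heq : Finset.filter (fun p => pi σ p = z)
      (Finset.univ.filter (fun p : QP σ => f (pi σ p).1 = false ∧ f (pi σ p).2 = true)) =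
      Finset.filter (fun p : QP σ => pi σ p = z) Finset.univ := by
    ext p
    simp only [Finset.mem_filter, Finset.mem_univ, true_and]
    constructor
    · rintro ⟨_, h2⟩; exact h2
    · intro h2; rw [h2]; exact ⟨hz, rfl⟩
  rw [heq, ← Fintype.card_subtype, ← Nat.card_eq_fintype_card]
  obtain ⟨q, q'⟩ := z
  exact card_pi_fiber σ q q'


lemma color_zpow {c : V → Bool} (hc : c ∘ σ = c) (k : ℤ) (v : V) : c ((σ ^ k) v) = c v := by
  have hc1 : ∀ v : V, c (σ v) = c v := fun v => congrFun hc v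
  have hn : ∀ m : ℕ, ∀ v : V, c ((σ ^ m) v) = c v := by
    intro m
    induction m with
    | zero => intro v; simp
    | succ m ih => intro v; rw [pow_succ, Equiv.Perm.mul_apply, ih, hc1]
  cases k with
  | ofNat m => simpa using hn m v
  | negSucc m =>
    have h2 := hn (m + 1) (((σ ^ (m + 1))⁻¹) v)
    simp only [Equiv.Perm.coe_inv, Equiv.apply_symm_apply] at h2
    rw [zpow_negSucc]
    exact h2.symm

noncomputable instance (σ : Equiv.Perm V) : DecidableEq (Qt σ) := Classical.decEq _

def colorEquiv : {c : V → Bool // c ∘ σ = c} ≃ (Qt σ → Bool) where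
  toFun c q := Quotient.liftOn' q c.1 (by
    intro a b hab
    obtain ⟨k, hk⟩ := (qv_eq_iff σ a b).mp (Quotient.sound' hab)
    rw [← hk, color_zpow σ c.2])
  invFun f := ⟨fun v => f (Quotient.mk'' v), funext fun v => congrArg f (qv_mk_apply σ v)⟩
  left_inv c := Subtype.ext rfl
  right_inv f := funext fun q => Quotient.inductionOn' q fun v => rfl

def mainType : Type _ := {p : (V → Bool) × SimpleGraph V //
    (∀ u v, p.2.Adj u v → p.1 u ≠ p.1 v) ∧ p.1 ∘ σ = p.1 ∧
    (∀ u v, p.2.Adj (σ u) (σ v) ↔ p.2.Adj u v)}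

def mainEquiv : mainType σ ≃ Σ f : Qt σ → Bool, GraphSub σ f := by
  refine Equiv.trans (?_ : mainType σ ≃ Σ c : {c : V → Bool // c ∘ σ = c},
    {G : SimpleGraph V // (∀ u v, G.Adj u v → c.1 u ≠ c.1 v) ∧
      ∀ u v, G.Adj (σ u) (σ v) ↔ G.Adj u v}) ?_
  · exact
      { toFun := fun p => ⟨⟨p.1.1, p.2.2.1⟩, ⟨p.1.2, ⟨p.2.1, p.2.2.2⟩⟩⟩
        invFun := fun s => ⟨(s.1.1, s.2.1), ⟨s.2.2.1, s.1.2, s.2.2.2⟩⟩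
        left_inv := fun p => rfl
        right_inv := fun s => rfl }
  · refine Equiv.sigmaCongr (colorEquiv σ) fun c => Equiv.subtypeEquivRight fun G => ?_
    exact Iff.rfl

lemma card_main : Nat.card (mainType σ) =
    ∑ f : Qt σ → Bool, 2 ^ (∑ z ∈ Finset.univ.filter
      (fun z : Qt σ × Qt σ => f z.1 = false ∧ f z.2 = true),
        Nat.gcd (sz σ z.1) (sz σ z.2)) := by
  classical
  rw [Nat.card_congr (mainEquiv σ)]
  have : ∀ f : Qt σ → Bool, Finite (GraphSub σ f) := by
    intro f; unfold GraphSub; infer_instance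
  rw [nat_card_sigma]
  refine Finset.sum_congr rfl fun f _ => ?_
  rw [card_graphSub, card_orbSub]


lemma card_bool_fun {β : Type*} [Fintype β] (m : ℕ) :
    Nat.card {h : β → Bool // Nat.card {y : β // h y = false} = m} =
      (Fintype.card β).choose m := by
  classical
  have e : {h : β → Bool // Nat.card {y : β // h y = false} = m} ≃
      {s : Finset β // s.card = m} :=
    { toFun := fun h => ⟨Finset.univ.filter (fun y => h.1 y = false), by
        rw [← Fintype.card_subtype, ← Nat.card_eq_fintype_card]
        exact h.2⟩
      invFun := fun s => ⟨fun y => decide (y ∉ s.1), by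
        rw [Nat.card_eq_fintype_card, Fintype.card_subtype]
        have hfs : Finset.univ.filter (fun y => decide (y ∉ s.1) = false) = s.1 := by
          ext y; simp
        rw [hfs, s.2]⟩
      left_inv := fun h => Subtype.ext (funext fun y => by
        cases hy : h.1 y <;> simp [hy])
      right_inv := fun s => Subtype.ext (by ext y; simp) }
  rw [Nat.card_congr e, Nat.card_eq_fintype_card, Fintype.card_finset_len]

lemma card_colorings {α : Type*} [Fintype α] (g : α → ℕ) (μ : Multiset ℕ)
    (hμ : μ ≤ Finset.univ.val.map g) :
    Nat.card {f : α → Bool //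
        (Finset.univ.filter (fun a => f a = false)).val.map g = μ} =
      ∏ i ∈ (Finset.univ.val.map g).toFinset,
        ((Finset.univ.val.map g).count i).choose (μ.count (i : ℕ)) := by
  classical
  set lamM : Multiset ℕ := Finset.univ.val.map g with hlamM
  have hmem : ∀ a : α, g a ∈ lamM.toFinset := fun a => by
    rw [Multiset.mem_toFinset, hlamM]
    exact Multiset.mem_map_of_mem g (by simp)
  have hcount : ∀ (f : α → Bool) (i : ℕ),
      ((Finset.univ.filter (fun a => f a = false)).val.map g).count i =
        Nat.card {a : α // f a = false ∧ g a = i} := by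
    intro f i
    rw [Multiset.count_map, ← Finset.filter_val, Finset.filter_filter, ← Finset.card_def,
      ← Fintype.card_subtype, ← Nat.card_eq_fintype_card]
    exact Nat.card_congr (Equiv.subtypeEquivRight fun a => by
      constructor
      · rintro ⟨h1, h2⟩; exact ⟨h1, h2.symm⟩
      · rintro ⟨h1, h2⟩; exact ⟨h1, h2.symm⟩)
  have hlamcount : ∀ i : ℕ, lamM.count i = Nat.card {a : α // g a = i} := by
    intro i
    rw [hlamM, Multiset.count_map, ← Finset.filter_val, ← Finset.card_def,
      ← Fintype.card_subtype, ← Nat.card_eq_fintype_card]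
    exact Nat.card_congr (Equiv.subtypeEquivRight fun a => eq_comm)
  have hiff : ∀ f : α → Bool,
      ((Finset.univ.filter (fun a => f a = false)).val.map g = μ) ↔
        (∀ i : lamM.toFinset,
          Nat.card {a : α // f a = false ∧ g a = (i : ℕ)} = μ.count (i : ℕ)) := by
    intro f
    constructor
    · intro h i
      rw [← hcount f i, h]
    · intro h
      refine Multiset.ext.mpr fun i => ?_
      by_cases hi : i ∈ lamM.toFinset
      · rw [hcount]
        exact h ⟨i, hi⟩
      · have h1 : μ.count (i : ℕ) = 0 := by
          rw [Multiset.count_eq_zero]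
          intro hm
          exact hi (Multiset.mem_toFinset.mpr (Multiset.mem_of_le hμ hm))
        have h2 : ((Finset.univ.filter (fun a => f a = false)).val.map g).count i = 0 := by
          rw [Multiset.count_eq_zero]
          intro hm
          obtain ⟨a, _, rfl⟩ := Multiset.mem_map.mp hm
          exact hi (hmem a)
        rw [h1, h2]
  set F : α → lamM.toFinset := fun a => ⟨g a, hmem a⟩ with hF
  have hcard2 : ∀ (f : α → Bool) (i : lamM.toFinset),
      Nat.card {y : {a : α // F a = i} // f y.1 = false} =
        Nat.card {a : α // f a = false ∧ g a = (i : ℕ)} := by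
    intro f i
    refine Nat.card_congr ((Equiv.subtypeSubtypeEquivSubtypeInter
      (fun a : α => F a = i) (fun a => f a = false)).trans
      (Equiv.subtypeEquivRight fun a => ?_))
    rw [Subtype.ext_iff, hF]
    exact and_comm
  have e : {f : α → Bool // (Finset.univ.filter (fun a => f a = false)).val.map g = μ} ≃
      Π i : lamM.toFinset,
        {h : {a : α // F a = i} → Bool //
          Nat.card {y : {a : α // F a = i} // h y = false} = μ.count (i : ℕ)} := by
    refine (Equiv.subtypeEquivRight fun f => (hiff f).trans
      (forall_congr' fun i => ?_)).trans
      ((Equiv.subtypeEquiv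
        ({ toFun := fun f i y => f y.1
           invFun := fun fc a => fc (F a) ⟨a, rfl⟩
           left_inv := fun f => rfl
           right_inv := fun fc => funext fun i => funext fun y => by
             obtain ⟨a, ha⟩ := y
             subst ha
             rfl } :
          (α → Bool) ≃ Π i : lamM.toFinset, ({a : α // F a = i} → Bool))
        fun f => Iff.rfl).trans Equiv.subtypePiEquivPi)
    rw [← hcard2 f i]
    exact Iff.rfl
  rw [Nat.card_congr e, Nat.card_pi]
  have hterm : ∀ i : lamM.toFinset,
      Nat.card {h : {a : α // F a = i} → Bool //
          Nat.card {y : {a : α // F a = i} // h y = false} = μ.count (i : ℕ)} =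
        (lamM.count (i : ℕ)).choose (μ.count (i : ℕ)) := by
    intro i
    rw [card_bool_fun]
    congr 1
    rw [hlamcount, ← Nat.card_eq_fintype_card]
    refine Nat.card_congr (Equiv.subtypeEquivRight fun a => ?_)
    rw [Subtype.ext_iff, hF]
  rw [Finset.prod_congr rfl fun i _ => hterm i]
  exact Finset.prod_coe_sort lamM.toFinset (fun i => (lamM.count i).choose (μ.count i))


end BG

namespace BG

variable {V : Type*} [Fintype V] [DecidableEq V] (σ : Equiv.Perm V)

lemma cycleTypeFull_eq :
    cycleTypeFull σ = Multiset.map (sz σ) (Finset.univ : Finset (Qt σ)).val := by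
  unfold cycleTypeFull
  have h : (Fintype.ofFinite (MulAction.orbitRel.Quotient (Subgroup.zpowers σ) V)) =
      (inferInstance : Fintype (Qt σ)) := Subsingleton.elim _ _
  rw [h]
  rfl

lemma zMult_extend (lam μ : Multiset ℕ) (h : μ.toFinset ⊆ lam.toFinset) :
    zMult μ = ∏ i ∈ lam.toFinset, i ^ μ.count i * (μ.count i).factorial := by
  unfold zMult
  refine Finset.prod_subset h fun i _ hi => ?_
  rw [Multiset.count_eq_zero_of_notMem (fun hmem => hi (Multiset.mem_toFinset.mpr hmem))]
  simp

lemma zMult_mul_eq (lam μ : Multiset ℕ) (hμ : μ ≤ lam) :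
    (∏ i ∈ lam.toFinset, (lam.count i).choose (μ.count i)) * (zMult μ * zMult (lam - μ)) =
      zMult lam := by
  have h1 : μ.toFinset ⊆ lam.toFinset := fun i hi =>
    Multiset.mem_toFinset.mpr (Multiset.mem_of_le hμ (Multiset.mem_toFinset.mp hi))
  have h2 : (lam - μ).toFinset ⊆ lam.toFinset := fun i hi =>
    Multiset.mem_toFinset.mpr (Multiset.mem_of_le (tsub_le_self) (Multiset.mem_toFinset.mp hi))
  rw [zMult_extend lam μ h1, zMult_extend lam (lam - μ) h2]
  unfold zMult
  rw [← Finset.prod_mul_distrib, ← Finset.prod_mul_distrib]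
  refine Finset.prod_congr rfl fun i _ => ?_
  have hm : μ.count i ≤ lam.count i := Multiset.count_le_of_le i hμ
  rw [Multiset.count_sub]
  have hp : i ^ μ.count i * i ^ (lam.count i - μ.count i) = i ^ lam.count i := by
    rw [← pow_add, Nat.add_sub_cancel' hm]
  have hf : (lam.count i).choose (μ.count i) * (μ.count i).factorial *
      (lam.count i - μ.count i).factorial = (lam.count i).factorial :=
    Nat.choose_mul_factorial_mul_factorial hm
  calc (lam.count i).choose (μ.count i) *
        (i ^ μ.count i * (μ.count i).factorial *
          (i ^ (lam.count i - μ.count i) * (lam.count i - μ.count i).factorial))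
      = (i ^ μ.count i * i ^ (lam.count i - μ.count i)) *
        ((lam.count i).choose (μ.count i) * (μ.count i).factorial *
          (lam.count i - μ.count i).factorial) := by ring
    _ = i ^ lam.count i * (lam.count i).factorial := by rw [hp, hf]

lemma zMult_pos (κ : Multiset ℕ) (hκ : ∀ i ∈ κ, 0 < i) : 0 < zMult κ := by
  refine Finset.prod_pos fun i hi => ?_
  exact Nat.mul_pos (Nat.pow_pos (hκ i (Multiset.mem_toFinset.mp hi)))
    (Nat.factorial_pos _)

/-- the multiset of sizes of false-colored orbits -/
noncomputable def muF (f : Qt σ → Bool) : Multiset ℕ :=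
  Multiset.map (sz σ) (Finset.univ.filter (fun q => f q = false)).val

lemma mu_le (f : Qt σ → Bool) : muF σ f ≤ cycleTypeFull σ := by
  rw [cycleTypeFull_eq, muF]
  exact Multiset.map_le_map (by rw [Finset.filter_val]; exact Multiset.filter_le _ _)

lemma nu_eq (f : Qt σ → Bool) :
    cycleTypeFull σ - muF σ f =
      Multiset.map (sz σ) (Finset.univ.filter (fun q => f q = true)).val := by
  have hsplit : (Finset.univ.filter (fun q : Qt σ => f q = false)).val +
      (Finset.univ.filter (fun q : Qt σ => f q = true)).val =
        (Finset.univ : Finset (Qt σ)).val := by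
    have h0 : Finset.univ.filter (fun q : Qt σ => f q = true) =
        Finset.univ.filter (fun q => ¬ (f q = false)) := by
      ext q; simp
    rw [h0, Finset.filter_val, Finset.filter_val]
    exact Multiset.filter_add_not _ _
  rw [cycleTypeFull_eq, ← hsplit, Multiset.map_add, muF, add_tsub_cancel_left]

lemma pow_E_eq (f : Qt σ → Bool) :
    ((2 : ℚ) ^ (∑ z ∈ Finset.univ.filter
        (fun z : Qt σ × Qt σ => f z.1 = false ∧ f z.2 = true),
          Nat.gcd (sz σ z.1) (sz σ z.2))) =
      ((muF σ f).map fun i =>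
        (((cycleTypeFull σ - muF σ f)).map fun j => (2 : ℚ) ^ Nat.gcd i j).prod).prod := by
  classical
  rw [← Finset.prod_pow_eq_pow_sum]
  rw [show Finset.univ.filter (fun z : Qt σ × Qt σ => f z.1 = false ∧ f z.2 = true) =
      (Finset.univ.filter (fun q : Qt σ => f q = false)) ×ˢ
        (Finset.univ.filter (fun q : Qt σ => f q = true)) from by
    ext z; simp [Finset.mem_product]]
  rw [Finset.prod_product]
  rw [nu_eq, muF]
  rw [Multiset.map_map, Finset.prod_eq_multiset_prod]
  refine congrArg Multiset.prod (Multiset.map_congr rfl fun q _ => ?_)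
  dsimp only [Function.comp]
  rw [Multiset.map_map, Finset.prod_eq_multiset_prod]
  rfl


end BG

open BG in
/-- Let `σ` be a permutation of `Fin n` with (full) cycle type `λ`.  The number of
bicolored graphs `(c, G)` on `Fin n` such that `σ` is a color-preserving automorphism
equals `∑_{μ ∪ ν = λ} (z_λ / (z_μ z_ν)) ∏_{i ∈ μ, j ∈ ν} 2 ^ gcd (i, j)`, the sum being
over ordered pairs of multisets `(μ, ν)` with multiset union `λ`. -/
theorem count_bicolored_color_preserving (n : ℕ) (hn : 1 ≤ n) (σ : Equiv.Perm (Fin n)) :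
    (Nat.card {p : (Fin n → Bool) × SimpleGraph (Fin n) //
        (∀ u v, p.2.Adj u v → p.1 u ≠ p.1 v) ∧ p.1 ∘ σ = p.1 ∧
        (∀ u v, p.2.Adj (σ u) (σ v) ↔ p.2.Adj u v)} : ℚ) =
      ∑ μ ∈ (cycleTypeFull σ).powerset.toFinset,
        (zMult (cycleTypeFull σ) : ℚ) / (zMult μ * zMult (cycleTypeFull σ - μ)) *
          (μ.map fun i =>
            ((cycleTypeFull σ - μ).map fun j => (2 : ℚ) ^ Nat.gcd i j).prod).prod := by
  classical
  show (Nat.card (BG.mainType σ) : ℚ) = _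
  rw [BG.card_main σ]
  rw [Nat.cast_sum]
  simp only [Nat.cast_pow, Nat.cast_ofNat]
  have hmaps : ∀ f ∈ (Finset.univ : Finset (Qt σ → Bool)),
      muF σ f ∈ (cycleTypeFull σ).powerset.toFinset := fun f _ =>
    Multiset.mem_toFinset.mpr (Multiset.mem_powerset.mpr (mu_le σ f))
  rw [← Finset.sum_fiberwise_of_maps_to hmaps
    (fun f => (2 : ℚ) ^ (∑ z ∈ Finset.univ.filter
      (fun z : Qt σ × Qt σ => f z.1 = false ∧ f z.2 = true),
        Nat.gcd (sz σ z.1) (sz σ z.2)))]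
  refine Finset.sum_congr rfl fun μ hμt => ?_
  have hμ : μ ≤ cycleTypeFull σ := Multiset.mem_powerset.mp (Multiset.mem_toFinset.mp hμt)
  rw [Finset.sum_congr rfl (fun f hf => by
    rw [pow_E_eq σ f, (Finset.mem_filter.mp hf).2])]
  rw [Finset.sum_const, nsmul_eq_mul]
  congr 1
  have hμ' : μ ≤ Multiset.map (sz σ) (Finset.univ : Finset (Qt σ)).val := by
    rwa [← cycleTypeFull_eq]
  have hcard : (Finset.univ.filter (fun f : Qt σ → Bool => muF σ f = μ)).card =
      ∏ i ∈ (cycleTypeFull σ).toFinset,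
        ((cycleTypeFull σ).count i).choose (μ.count i) := by
    rw [← Fintype.card_subtype, ← Nat.card_eq_fintype_card]
    have hc := BG.card_colorings (sz σ) μ hμ'
    rw [show {f : Qt σ → Bool // muF σ f = μ} =
      {f : Qt σ → Bool //
        (Finset.univ.filter (fun a => f a = false)).val.map (sz σ) = μ} from rfl]
    rw [hc, ← cycleTypeFull_eq]
  have hpos_parts : ∀ i ∈ cycleTypeFull σ, 0 < i := by
    rw [cycleTypeFull_eq]
    intro i hi
    obtain ⟨q, _, rfl⟩ := Multiset.mem_map.mp hi
    exact sz_pos σ q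
  have hzμ : 0 < zMult μ := zMult_pos μ (fun i hi => hpos_parts i (Multiset.mem_of_le hμ hi))
  have hzν : 0 < zMult (cycleTypeFull σ - μ) :=
    zMult_pos _ (fun i hi => hpos_parts i (Multiset.mem_of_le tsub_le_self hi))
  have hne : ((zMult μ : ℚ) * (zMult (cycleTypeFull σ - μ) : ℚ)) ≠ 0 := by
    have := hzμ.ne'
    have := hzν.ne'
    positivity
  rw [hcard, eq_div_iff hne]
  exact_mod_cast BG.zMult_mul_eq (cycleTypeFull σ) μ hμ
end

section
/- Let n ≥ 1, let T be the permutation of ZMod (2n) given by T(x) = x + 1, and let E be the set of unordered pairs {x, y} of elements of ZMod (2n) such that x − y is odd (i.e., the image of x − y in ZMod 2 is 1). Then T maps E to itself, and the number of orbits of the cyclic group generated by T acting on E equals ⌈n/2⌉. Moreover, if n is even then every orbit has cardinality 2n, while if n is odd the n pairs {x, x + n} form a single orbit of cardinality n and every other orbit has cardinality 2n. -/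
/-- Let `T : x ↦ x + 1` on `ZMod (2n)` and let `E` be the set of unordered pairs
`{x, y}` with `x - y` odd.  Then `T` maps `E` to itself; the induced action of the
cyclic group generated by `T` on `E` has `⌈n/2⌉` orbits; if `n` is even every orbit has
cardinality `2n`, while if `n` is odd the `n` pairs `{x, x + n}` form a single orbit of
cardinality `n` and every other orbit has cardinality `2n`. -/
theorem orbits_within_cycle_color_reversing (n : ℕ) (hn : 1 ≤ n)
    (T : Equiv.Perm (ZMod (2 * n))) (hT : ∀ x, T x = x + 1)
    (S : Equiv.Perm (Sym2 (ZMod (2 * n)))) (hS : ∀ p, S p = Sym2.map T p)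
    (E : Set (Sym2 (ZMod (2 * n))))
    (hE : E = {p | ∃ x y : ZMod (2 * n),
      p = s(x, y) ∧ ZMod.castHom (dvd_mul_right 2 n) (ZMod 2) (x - y) = 1}) :
    Sym2.map T '' E = E ∧
    Nat.card {q : MulAction.orbitRel.Quotient (Subgroup.zpowers S) (Sym2 (ZMod (2 * n))) //
        q.orbit ⊆ E} = (n + 1) / 2 ∧
    (Even n → ∀ p ∈ E, Nat.card (MulAction.orbit (Subgroup.zpowers S) p) = 2 * n) ∧
    (Odd n →
      (∀ x : ZMod (2 * n),
        MulAction.orbit (Subgroup.zpowers S) s(x, x + (n : ZMod (2 * n))) =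
          {p | ∃ y : ZMod (2 * n), p = s(y, y + (n : ZMod (2 * n)))}) ∧
      Nat.card {p : Sym2 (ZMod (2 * n)) //
          ∃ y : ZMod (2 * n), p = s(y, y + (n : ZMod (2 * n)))} = n ∧
      ∀ p ∈ E, (¬ ∃ y : ZMod (2 * n), p = s(y, y + (n : ZMod (2 * n)))) →
        Nat.card (MulAction.orbit (Subgroup.zpowers S) p) = 2 * n) := by
  haveI : NeZero (2 * n) := ⟨by omega⟩
  set φ := ZMod.castHom (dvd_mul_right 2 n) (ZMod 2) with hφdef
  have hncast : ∀ k : ZMod (2 * n), ((k.val : ℕ) : ZMod (2 * n)) = k := by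
    intro k; rw [ZMod.natCast_val, ZMod.cast_id]
  have hSinv : ∀ a b : ZMod (2 * n), S⁻¹ s(a, b) = s(a - 1, b - 1) := by
    intro a b
    apply S.injective
    rw [Equiv.Perm.inv_def, Equiv.apply_symm_apply, hS, Sym2.map_pair_eq, hT, hT, sub_add_cancel,
      sub_add_cancel]
  have hpow : ∀ (m : ℤ) (a b : ZMod (2 * n)),
      (S ^ m) s(a, b) = s(a + (m : ZMod (2 * n)), b + (m : ZMod (2 * n))) := by
    intro m
    induction m using Int.induction_on with
    | zero => intro a b; simp
    | succ k ih =>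
        intro a b
        rw [zpow_add_one, Equiv.Perm.mul_apply, hS, Sym2.map_pair_eq, hT, hT, ih]
        push_cast; ring_nf
    | pred k ih =>
        intro a b
        rw [zpow_sub_one, Equiv.Perm.mul_apply, hSinv, ih]
        push_cast; ring_nf
  have horb : ∀ a b : ZMod (2 * n),
      MulAction.orbit (Subgroup.zpowers S) s(a, b)
        = {p | ∃ k : ZMod (2 * n), p = s(a + k, b + k)} := by
    intro a b
    ext p
    constructor
    · rintro ⟨⟨g, hg⟩, rfl⟩
      obtain ⟨m, rfl⟩ := Subgroup.mem_zpowers_iff.mp hg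
      exact ⟨(m : ZMod (2 * n)), hpow m a b⟩
    · rintro ⟨k, rfl⟩
      refine ⟨⟨S ^ (k.val : ℤ), ⟨(k.val : ℤ), rfl⟩⟩, ?_⟩
      have hck : ((k.val : ℤ) : ZMod (2 * n)) = k := by push_cast; exact hncast k
      show (S ^ (k.val : ℤ)) s(a, b) = _
      rw [hpow, hck]
  have hmemE : ∀ x y : ZMod (2 * n), s(x, y) ∈ E ↔ φ (x - y) = 1 := by
    intro x y
    rw [hE]
    constructor
    · rintro ⟨x', y', hxy, h1⟩
      rcases Sym2.eq_iff.mp hxy with ⟨rfl, rfl⟩ | ⟨rfl, rfl⟩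
      · exact h1
      · have hh : x - y = -(y - x) := by ring
        rw [hh, map_neg, h1]; decide
    · intro h; exact ⟨x, y, rfl, h⟩
  have hφval : ∀ d : ZMod (2 * n), φ d = 1 ↔ d.val % 2 = 1 := by
    intro d
    have h1 : φ d = ((d.val : ℕ) : ZMod 2) := by
      rw [hφdef, ZMod.castHom_apply, ← ZMod.natCast_val]
    rw [h1, ← ZMod.natCast_mod]
    rcases Nat.mod_two_eq_zero_or_one d.val with h | h <;> rw [h] <;> simp
  have h2d : ∀ d : ZMod (2 * n), d + d = 0 → d = 0 ∨ d = (n : ZMod (2 * n)) := by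
    intro d hd
    have hv : ((d.val + d.val : ℕ) : ZMod (2 * n)) = 0 := by
      push_cast [hncast]; exact hd
    rw [ZMod.natCast_eq_zero_iff] at hv
    obtain ⟨c, hc⟩ := hv
    have hlt := d.val_lt
    have hc2 : c ≤ 1 := by
      by_contra hcc
      push_neg at hcc
      have : 2 * n * 2 ≤ 2 * n * c := Nat.mul_le_mul_left _ hcc
      omega
    have hcases : d.val = 0 ∨ d.val = n := by interval_cases c <;> omega
    rcases hcases with h | h
    · left; rw [← hncast d, h]; simp
    · right; rw [← hncast d, h]
  have hcard2n : ∀ a b : ZMod (2 * n), b - a ≠ 0 → b - a ≠ (n : ZMod (2 * n)) →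
      Nat.card (MulAction.orbit (Subgroup.zpowers S) s(a, b)) = 2 * n := by
    intro a b h0 hnn
    have hset : MulAction.orbit (Subgroup.zpowers S) s(a, b)
        = Set.range (fun k : ZMod (2 * n) => s(a + k, b + k)) := by
      rw [horb]; ext p; simp [eq_comm]
    rw [hset, Nat.card_range_of_injective, Nat.card_zmod]
    intro k k' hk
    rcases Sym2.eq_iff.mp hk with ⟨h1, _⟩ | ⟨h1, h2⟩
    · exact add_left_cancel h1
    · exfalso
      have hd : (b - a) + (b - a) = 0 := by linear_combination h2 - h1
      rcases h2d _ hd with h | h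
      · exact h0 h
      · exact hnn h
  -- helpers about the quotient
  have hmkeq : ∀ p q : Sym2 (ZMod (2 * n)), p ∈ MulAction.orbit (Subgroup.zpowers S) q →
      (Quotient.mk'' p : MulAction.orbitRel.Quotient (Subgroup.zpowers S)
        (Sym2 (ZMod (2 * n)))) = Quotient.mk'' q := by
    intro p q h
    exact MulAction.orbitRel.Quotient.mem_orbit.mp
      (by rw [MulAction.orbitRel.Quotient.orbit_mk]; exact h)
  have hmkmem : ∀ p q : Sym2 (ZMod (2 * n)),
      (Quotient.mk'' p : MulAction.orbitRel.Quotient (Subgroup.zpowers S)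
        (Sym2 (ZMod (2 * n)))) = Quotient.mk'' q →
      p ∈ MulAction.orbit (Subgroup.zpowers S) q := by
    intro p q h
    rw [← MulAction.orbitRel.Quotient.orbit_mk q]
    exact MulAction.orbitRel.Quotient.mem_orbit.mpr h
  have hshift : ∀ x y : ZMod (2 * n),
      (Quotient.mk'' s(x, y) : MulAction.orbitRel.Quotient (Subgroup.zpowers S)
        (Sym2 (ZMod (2 * n)))) = Quotient.mk'' s(0, y - x) := by
    intro x y
    apply hmkeq
    rw [horb]
    exact ⟨x, by rw [zero_add, sub_add_cancel]⟩
  have hflip : ∀ d : ZMod (2 * n),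
      (Quotient.mk'' s(0, d) : MulAction.orbitRel.Quotient (Subgroup.zpowers S)
        (Sym2 (ZMod (2 * n)))) = Quotient.mk'' s(0, -d) := by
    intro d
    apply hmkeq
    rw [horb]
    exact ⟨d, by rw [zero_add, neg_add_cancel]; exact Sym2.eq_swap⟩
  have hφodd : ∀ j : ℕ, φ ((2 * j + 1 : ℕ) : ZMod (2 * n)) = 1 := by
    intro j
    rw [map_natCast, ← ZMod.natCast_mod, show (2 * j + 1) % 2 = 1 from by omega,
      Nat.cast_one]
  have hcastinj : ∀ a b : ℕ, a < 2 * n → b < 2 * n →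
      ((a : ZMod (2 * n)) = (b : ZMod (2 * n))) → a = b := by
    intro a b ha hb h
    have := congrArg ZMod.val h
    rwa [ZMod.val_cast_of_lt ha, ZMod.val_cast_of_lt hb] at this
  have hnn2 : ((n : ℕ) : ZMod (2 * n)) + ((n : ℕ) : ZMod (2 * n)) = 0 := by
    rw [← Nat.cast_add, show n + n = 2 * n from by ring, ZMod.natCast_self]
  -- Part 1
  have part1 : Sym2.map T '' E = E := by
    ext p
    constructor
    · rintro ⟨q, hq, rfl⟩
      rw [hE] at hq
      obtain ⟨x, y, rfl, h1⟩ := hq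
      rw [Sym2.map_pair_eq, hT, hT, hmemE, show x + 1 - (y + 1) = x - y from by ring]
      exact h1
    · intro hp
      rw [hE] at hp
      obtain ⟨x, y, rfl, h1⟩ := hp
      refine ⟨s(x - 1, y - 1), ?_, ?_⟩
      · rw [hmemE, show x - 1 - (y - 1) = x - y from by ring]; exact h1
      · rw [Sym2.map_pair_eq, hT, hT, sub_add_cancel, sub_add_cancel]
  -- Part 2
  have part2 : Nat.card {q : MulAction.orbitRel.Quotient (Subgroup.zpowers S)
      (Sym2 (ZMod (2 * n))) // q.orbit ⊆ E} = (n + 1) / 2 := by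
    have hbound : ∀ k : Fin ((n + 1) / 2), 2 * k.1 + 1 ≤ n := by
      intro k; have := k.2; omega
    set F : Fin ((n + 1) / 2) → {q : MulAction.orbitRel.Quotient (Subgroup.zpowers S)
        (Sym2 (ZMod (2 * n))) // q.orbit ⊆ E} :=
      fun k => ⟨Quotient.mk'' s((0 : ZMod (2 * n)), ((2 * k.1 + 1 : ℕ) : ZMod (2 * n))),
        by
          rw [MulAction.orbitRel.Quotient.orbit_mk, horb]
          rintro p ⟨m, rfl⟩
          rw [hmemE, show 0 + m - (((2 * k.1 + 1 : ℕ) : ZMod (2 * n)) + m)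
            = -((2 * k.1 + 1 : ℕ) : ZMod (2 * n)) from by ring, map_neg, hφodd]
          decide⟩ with hFdef
    have hinj : Function.Injective F := by
      intro j k h
      have h' := congrArg Subtype.val h
      simp only [hFdef] at h'
      have hmem := hmkmem _ _ h'
      rw [horb] at hmem
      obtain ⟨m, hm⟩ := hmem
      have hjb := hbound j
      have hkb := hbound k
      rcases Sym2.eq_iff.mp hm with ⟨hm1, hm2⟩ | ⟨hm1, hm2⟩
      · rw [zero_add] at hm1
        rw [← hm1, add_zero] at hm2
        have := hcastinj _ _ (by omega) (by omega) hm2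
        exact Fin.ext (by omega)
      · rw [zero_add] at hm2
        rw [← hm2] at hm1
        have hsum : (((2 * k.1 + 1) + (2 * j.1 + 1) : ℕ) : ZMod (2 * n)) = 0 := by
          push_cast at hm1 ⊢
          linear_combination -hm1
        rw [ZMod.natCast_eq_zero_iff] at hsum
        obtain ⟨c, hc⟩ := hsum
        have hc2 : c ≤ 1 := by
          by_contra hcc
          push_neg at hcc
          have : 2 * n * 2 ≤ 2 * n * c := Nat.mul_le_mul_left _ hcc
          omega
        have : c = 0 ∨ c = 1 := by omega
        rcases this with rfl | rfl
        · exact Fin.ext (by omega)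
        · exact Fin.ext (by omega)
    have hsurj : Function.Surjective F := by
      rintro ⟨q, hq⟩
      revert hq
      induction q using Quotient.inductionOn' with
      | h p =>
        intro hq
        have hpE : p ∈ E := hq (by
          rw [MulAction.orbitRel.Quotient.orbit_mk]
          exact MulAction.mem_orbit_self p)
        rw [hE] at hpE
        obtain ⟨x, y, rfl, h1⟩ := hpE
        have hdodd : (x - y).val % 2 = 1 := (hφval _).mp h1
        have hdlt := (x - y).val_lt
        have hq0 : (Quotient.mk'' s(x, y) : MulAction.orbitRel.Quotient
            (Subgroup.zpowers S) (Sym2 (ZMod (2 * n))))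
            = Quotient.mk'' s(0, -(x - y)) := by
          rw [hshift x y, show y - x = -(x - y) from by ring]
        by_cases hle : (x - y).val ≤ n
        · refine ⟨⟨((x - y).val - 1) / 2, by omega⟩, ?_⟩
          apply Subtype.ext
          simp only [hFdef]
          rw [show 2 * (((x - y).val - 1) / 2) + 1 = (x - y).val from by omega,
            hncast, hq0]
          exact hflip _
        · refine ⟨⟨(2 * n - (x - y).val - 1) / 2, by omega⟩, ?_⟩
          apply Subtype.ext
          simp only [hFdef]
          rw [show 2 * ((2 * n - (x - y).val - 1) / 2) + 1 = 2 * n - (x - y).val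
            from by omega, hq0]
          congr 1
          have h2 : ((2 * n - (x - y).val) + (x - y).val : ℕ) = 2 * n := by omega
          have h3 : (((2 * n - (x - y).val) + (x - y).val : ℕ) : ZMod (2 * n)) = 0 := by
            rw [h2, ZMod.natCast_self]
          push_cast [hncast] at h3
          rw [show ((2 * n - (x - y).val : ℕ) : ZMod (2 * n)) = -(x - y)
            from by linear_combination h3]
    have := Nat.card_eq_of_bijective F ⟨hinj, hsurj⟩
    rw [Nat.card_eq_fintype_card, Fintype.card_fin] at this
    exact this.symm
  -- a lemma used in parts 3 and 4c
  have hd0 : ∀ x y : ZMod (2 * n), φ (x - y) = 1 → y - x ≠ 0 := by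
    intro x y h1 h0
    have hxy : x - y = 0 := by linear_combination -h0
    rw [hxy, map_zero] at h1
    exact one_ne_zero h1.symm
  -- Part 3
  have part3 : Even n → ∀ p ∈ E, Nat.card (MulAction.orbit (Subgroup.zpowers S) p)
      = 2 * n := by
    intro he p hp
    rw [hE] at hp
    obtain ⟨x, y, rfl, h1⟩ := hp
    refine hcard2n x y (hd0 x y h1) ?_
    intro hyx
    have hxy : x - y = -(n : ZMod (2 * n)) := by linear_combination -hyx
    have hneg : -((n : ℕ) : ZMod (2 * n)) = ((n : ℕ) : ZMod (2 * n)) := by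
      linear_combination -hnn2
    rw [hxy] at h1
    push_cast at hneg h1
    rw [hneg] at h1
    have hval : ((n : ℕ) : ZMod (2 * n)).val = n := ZMod.val_cast_of_lt (by omega)
    rw [hφval] at h1
    rw [hval] at h1
    rcases he with ⟨t, ht⟩
    omega
  -- Part 4a
  have part4a : ∀ x : ZMod (2 * n),
      MulAction.orbit (Subgroup.zpowers S) s(x, x + (n : ZMod (2 * n))) =
        {p | ∃ y : ZMod (2 * n), p = s(y, y + (n : ZMod (2 * n)))} := by
    intro x
    rw [horb]
    ext p
    simp only [Set.mem_setOf_eq]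
    constructor
    · rintro ⟨k, rfl⟩
      exact ⟨x + k, by rw [show x + (n : ZMod (2 * n)) + k
        = x + k + (n : ZMod (2 * n)) from by ring]⟩
    · rintro ⟨y, rfl⟩
      exact ⟨y - x, by rw [show x + (y - x) = y from by ring,
        show x + (n : ZMod (2 * n)) + (y - x) = y + (n : ZMod (2 * n)) from by ring]⟩
  -- Part 4b
  have part4b : Nat.card {p : Sym2 (ZMod (2 * n)) //
      ∃ y : ZMod (2 * n), p = s(y, y + (n : ZMod (2 * n)))} = n := by
    set G : Fin n → {p : Sym2 (ZMod (2 * n)) //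
        ∃ y : ZMod (2 * n), p = s(y, y + (n : ZMod (2 * n)))} :=
      fun i => ⟨s(((i.1 : ℕ) : ZMod (2 * n)),
        ((i.1 : ℕ) : ZMod (2 * n)) + (n : ZMod (2 * n))), ⟨_, rfl⟩⟩ with hGdef
    have hinj : Function.Injective G := by
      intro i j h
      have h' := congrArg Subtype.val h
      simp only [hGdef] at h'
      have hi := i.2
      have hj := j.2
      rcases Sym2.eq_iff.mp h' with ⟨h1, _⟩ | ⟨h1, h2⟩
      · exact Fin.ext (hcastinj _ _ (by omega) (by omega) h1)
      · exfalso
        have : ((i.1 : ℕ) : ZMod (2 * n)) = ((j.1 + n : ℕ) : ZMod (2 * n)) := by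
          push_cast
          linear_combination h1
        have := hcastinj _ _ (by omega) (by omega) this
        omega
    have hsurj : Function.Surjective G := by
      rintro ⟨p, y, rfl⟩
      have hylt := y.val_lt
      by_cases hlt : y.val < n
      · refine ⟨⟨y.val, hlt⟩, ?_⟩
        apply Subtype.ext
        simp only [hGdef]
        rw [hncast]
      · refine ⟨⟨y.val - n, by omega⟩, ?_⟩
        apply Subtype.ext
        simp only [hGdef]
        have h2 : ((y.val - n) + n : ℕ) = y.val := by omega
        have h3 : (((y.val - n) + n : ℕ) : ZMod (2 * n)) = y := by rw [h2, hncast]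
        push_cast at h3
        have e1 : ((y.val - n : ℕ) : ZMod (2 * n)) = y + (n : ZMod (2 * n)) := by
          linear_combination h3 - hnn2
        rw [e1, show y + (n : ZMod (2 * n)) + (n : ZMod (2 * n)) = y
          from by linear_combination hnn2]
        exact Sym2.eq_swap
    have := Nat.card_eq_of_bijective G ⟨hinj, hsurj⟩
    rw [Nat.card_eq_fintype_card, Fintype.card_fin] at this
    exact this.symm
  -- Part 4c
  have part4c : ∀ p ∈ E, (¬ ∃ y : ZMod (2 * n), p = s(y, y + (n : ZMod (2 * n)))) →
      Nat.card (MulAction.orbit (Subgroup.zpowers S) p) = 2 * n := by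
    intro p hp hnot
    rw [hE] at hp
    obtain ⟨x, y, rfl, h1⟩ := hp
    refine hcard2n x y (hd0 x y h1) ?_
    intro hyx
    exact hnot ⟨x, by rw [show x + (n : ZMod (2 * n)) = y from by linear_combination -hyx]⟩
  exact ⟨part1, part2, part3, fun _ => ⟨part4a, part4b, part4c⟩⟩
end

section
/- Let m, n ≥ 1 and let S = {(x, y) ∈ ZMod (2m) × ZMod (2n) : the image of x in ZMod 2 differs from the image of y in ZMod 2}. The permutation T(x, y) = (x + 1, y + 1) maps S to itself; every orbit of the cyclic group generated by T acting on S has cardinality 2·lcm(m, n), and the number of orbits equals gcd(m, n). -/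
/-- Let `S` be the set of pairs `(x, y) ∈ ZMod (2m) × ZMod (2n)` of opposite parity and
let `T (x, y) = (x + 1, y + 1)`.  Then `T` maps `S` to itself, every orbit of the cyclic
group generated by `T` on `S` has cardinality `2 · lcm (m, n)`, and the number of orbits
is `gcd (m, n)`. -/
theorem orbits_between_cycles_color_reversing (m n : ℕ) (hm : 1 ≤ m) (hn : 1 ≤ n)
    (T : Equiv.Perm (ZMod (2 * m) × ZMod (2 * n)))
    (hT : ∀ p, T p = (p.1 + 1, p.2 + 1))
    (S : Set (ZMod (2 * m) × ZMod (2 * n)))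
    (hS : S = {p | ZMod.castHom (dvd_mul_right 2 m) (ZMod 2) p.1 ≠
                   ZMod.castHom (dvd_mul_right 2 n) (ZMod 2) p.2}) :
    (⇑T) '' S = S ∧
    (∀ p ∈ S, Nat.card (MulAction.orbit (Subgroup.zpowers T) p) = 2 * Nat.lcm m n) ∧
    Nat.card {q : MulAction.orbitRel.Quotient (Subgroup.zpowers T)
        (ZMod (2 * m) × ZMod (2 * n)) // q.orbit ⊆ S} = Nat.gcd m n := by
  haveI hm' : NeZero (2 * m) := ⟨by omega⟩
  haveI hn' : NeZero (2 * n) := ⟨by omega⟩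
  have hg1 : 1 ≤ Nat.gcd m n := Nat.gcd_pos_of_pos_left n hm
  haveI hG : NeZero (2 * Nat.gcd m n) := ⟨by omega⟩
  have hdm : 2 * Nat.gcd m n ∣ 2 * m := mul_dvd_mul_left 2 (Nat.gcd_dvd_left m n)
  have hdn : 2 * Nat.gcd m n ∣ 2 * n := mul_dvd_mul_left 2 (Nat.gcd_dvd_right m n)
  have hd2 : (2 : ℕ) ∣ 2 * Nat.gcd m n := dvd_mul_right 2 _
  -- powers of T
  have hTn : ∀ (k : ℕ) (p : ZMod (2 * m) × ZMod (2 * n)),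
      (T ^ k) p = (p.1 + (k : ZMod (2 * m)), p.2 + (k : ZMod (2 * n))) := by
    intro k
    induction k with
    | zero => intro p; simp
    | succ k ih =>
      intro p
      rw [pow_succ', Equiv.Perm.mul_apply, hT, ih]
      push_cast
      simp only [Prod.mk.injEq]
      constructor <;> ring
  have hTz : ∀ (k : ℤ) (p : ZMod (2 * m) × ZMod (2 * n)),
      (T ^ k) p = (p.1 + (k : ZMod (2 * m)), p.2 + (k : ZMod (2 * n))) := by
    intro k p
    cases k with
    | ofNat k => rw [Int.ofNat_eq_coe, zpow_natCast, hTn]; push_cast; rfl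
    | negSucc k =>
      rw [zpow_negSucc]
      apply Equiv.injective (T ^ (k + 1))
      rw [show (T ^ (k + 1)) ((T ^ (k + 1))⁻¹ p) = p from Equiv.apply_symm_apply _ p, hTn]
      have h1 : ((Int.negSucc k : ℤ) : ZMod (2 * m)) + ((k + 1 : ℕ) : ZMod (2 * m)) = 0 := by
        push_cast [Int.negSucc_eq]; ring
      have h2 : ((Int.negSucc k : ℤ) : ZMod (2 * n)) + ((k + 1 : ℕ) : ZMod (2 * n)) = 0 := by
        push_cast [Int.negSucc_eq]; ring
      ext
      · simp only; rw [add_assoc, h1, add_zero]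
      · simp only; rw [add_assoc, h2, add_zero]
  -- orbit description
  have horb : ∀ p : ZMod (2 * m) × ZMod (2 * n),
      MulAction.orbit (Subgroup.zpowers T) p =
        Set.range (fun k : ℤ => (p.1 + (k : ZMod (2 * m)), p.2 + (k : ZMod (2 * n)))) := by
    intro p
    ext q
    constructor
    · rintro ⟨⟨σ, k, rfl⟩, rfl⟩
      exact ⟨k, (hTz k p).symm⟩
    · rintro ⟨k, rfl⟩
      exact ⟨⟨T ^ k, ⟨k, rfl⟩⟩, hTz k p⟩
  -- part 1
  have hSiff : ∀ p, T p ∈ S ↔ p ∈ S := by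
    intro p
    rw [hT p, hS]
    simp only [Set.mem_setOf_eq, map_add, map_one]
    rw [ne_eq, add_left_inj, ← ne_eq]
  have h1 : (⇑T) '' S = S := by
    ext q
    constructor
    · rintro ⟨p, hp, rfl⟩
      exact (hSiff p).2 hp
    · intro hq
      refine ⟨T.symm q, ?_, T.apply_symm_apply q⟩
      rw [← hSiff, T.apply_symm_apply]
      exact hq
  -- part 2
  have h2 : ∀ p : ZMod (2 * m) × ZMod (2 * n),
      Nat.card (MulAction.orbit (Subgroup.zpowers T) p) = 2 * Nat.lcm m n := by
    intro p
    rw [horb p]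
    have hr : Set.range (fun k : ℤ => (p.1 + (k : ZMod (2 * m)), p.2 + (k : ZMod (2 * n)))) =
        (fun q => p + q) '' (AddSubgroup.zmultiples ((1, 1) : ZMod (2 * m) × ZMod (2 * n)) : Set _) := by
      ext q
      simp only [Set.mem_range, Set.mem_image, SetLike.mem_coe, AddSubgroup.mem_zmultiples_iff]
      constructor
      · rintro ⟨k, rfl⟩
        exact ⟨((k : ZMod (2 * m)), (k : ZMod (2 * n))), ⟨k, by
          rw [Prod.smul_mk, Int.smul_one_eq_cast, Int.smul_one_eq_cast]⟩, rfl⟩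
      · rintro ⟨x, ⟨k, rfl⟩, rfl⟩
        exact ⟨k, by rw [Prod.smul_mk, Int.smul_one_eq_cast, Int.smul_one_eq_cast]; rfl⟩
    rw [hr, Nat.card_image_of_injective (add_right_injective p)]
    rw [SetLike.coe_sort_coe, Nat.card_zmultiples, Prod.addOrderOf]
    simp only [ZMod.addOrderOf_one]
    exact Nat.lcm_mul_left 2 m n
  -- part 3
  set G : ℕ := 2 * Nat.gcd m n with hGdef
  set F : ZMod (2 * m) × ZMod (2 * n) → ZMod G := fun p =>
    ZMod.castHom hdm (ZMod G) p.1 - ZMod.castHom hdn (ZMod G) p.2 with hF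
  -- S membership via F
  have hmemS : ∀ p, p ∈ S ↔ ZMod.castHom hd2 (ZMod 2) (F p) ≠ 0 := by
    intro p
    rw [hS, Set.mem_setOf_eq, hF]
    simp only [map_sub]
    rw [← RingHom.comp_apply, ← RingHom.comp_apply, ZMod.castHom_comp, ZMod.castHom_comp]
    simp only [ne_eq, sub_eq_zero]
  -- F is constant on orbits
  have hFT : ∀ (k : ℤ) p, F ((T ^ k) p) = F p := by
    intro k p
    rw [hTz, hF]
    simp only [map_add, map_intCast]
    ring
  -- equal F implies same orbit
  have hFinj : ∀ p q : ZMod (2 * m) × ZMod (2 * n), F p = F q →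
      p ∈ MulAction.orbit (Subgroup.zpowers T) q := by
    intro p q h
    have hc : ((p.1 - q.1).val : ZMod G) = ((p.2 - q.2).val : ZMod G) := by
      rw [ZMod.natCast_val, ZMod.natCast_val, ← ZMod.castHom_apply (h := hdm),
        ← ZMod.castHom_apply (h := hdn), map_sub, map_sub]
      rw [hF] at h
      linear_combination h
    have hmod : (p.1 - q.1).val ≡ (p.2 - q.2).val [MOD Nat.gcd (2 * m) (2 * n)] := by
      rw [Nat.gcd_mul_left]
      exact (ZMod.natCast_eq_natCast_iff _ _ _).1 hc
    obtain ⟨k, hk1, hk2⟩ := Nat.chineseRemainder' hmod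
    rw [horb q]
    refine ⟨(k : ℤ), ?_⟩
    have e1 : ((k : ℤ) : ZMod (2 * m)) = p.1 - q.1 := by
      push_cast
      rw [(ZMod.natCast_eq_natCast_iff _ _ _).2 hk1, ZMod.natCast_val, ZMod.cast_id]
    have e2 : ((k : ℤ) : ZMod (2 * n)) = p.2 - q.2 := by
      push_cast
      rw [(ZMod.natCast_eq_natCast_iff _ _ _).2 hk2, ZMod.natCast_val, ZMod.cast_id]
    ext
    · simp only; rw [e1]; ring
    · simp only; rw [e2]; ring
  -- F respects the orbit relation
  have hresp : ∀ a b : ZMod (2 * m) × ZMod (2 * n),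
      a ∈ MulAction.orbit (Subgroup.zpowers T) b → F a = F b := by
    intro a b hab
    obtain ⟨⟨σ, k, rfl⟩, rfl⟩ := hab
    exact hFT k b
  set Φ : MulAction.orbitRel.Quotient (Subgroup.zpowers T) (ZMod (2 * m) × ZMod (2 * n)) → ZMod G :=
    Quotient.lift F (fun a b hab => hresp a b ((MulAction.orbitRel_apply).1 hab)) with hPhi
  have hPhiBij : Function.Bijective Φ := by
    constructor
    · intro a b
      induction a using Quotient.inductionOn' with | h a =>
      induction b using Quotient.inductionOn' with | h b =>
      intro hab
      exact Quotient.sound' (hFinj a b hab)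
    · intro z
      refine ⟨Quotient.mk'' (((z.val : ℕ) : ZMod (2 * m)), 0), ?_⟩
      show F _ = z
      rw [hF]
      simp only [map_zero, sub_zero, ZMod.castHom_apply, ZMod.cast_natCast hdm]
      exact ZMod.natCast_rightInverse z
  have hprop : ∀ q : MulAction.orbitRel.Quotient (Subgroup.zpowers T) (ZMod (2 * m) × ZMod (2 * n)),
      q.orbit ⊆ S ↔ ZMod.castHom hd2 (ZMod 2) (Φ q) ≠ 0 := by
    intro q
    induction q using Quotient.inductionOn' with | h p =>
    rw [MulAction.orbitRel.Quotient.orbit_mk p]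
    have hPhip : Φ (Quotient.mk'' p) = F p := rfl
    rw [hPhip]
    constructor
    · intro h
      exact (hmemS p).1 (h (MulAction.mem_orbit_self p))
    · intro h x hx
      obtain ⟨⟨σ, k, rfl⟩, rfl⟩ := hx
      rw [hmemS]
      show ZMod.castHom hd2 (ZMod 2) (F ((T ^ k) p)) ≠ 0
      rw [hFT k p]
      exact h
  have hcard : Nat.card {q : MulAction.orbitRel.Quotient (Subgroup.zpowers T)
      (ZMod (2 * m) × ZMod (2 * n)) // q.orbit ⊆ S} =
      Nat.card {z : ZMod G // ZMod.castHom hd2 (ZMod 2) z ≠ 0} :=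
    Nat.card_congr (Equiv.subtypeEquiv (Equiv.ofBijective Φ hPhiBij) hprop)
  have hodd : ∀ z : ZMod G, (ZMod.castHom hd2 (ZMod 2) z ≠ 0) ↔ z.val % 2 = 1 := by
    intro z
    rw [ZMod.castHom_apply, ← ZMod.natCast_val, ne_eq, ZMod.natCast_eq_zero_iff]
    omega
  have e3 : {z : ZMod G // z.val % 2 = 1} ≃ Fin (Nat.gcd m n) :=
    { toFun := fun z => ⟨z.1.val / 2, by have := ZMod.val_lt z.1; have h2 := z.2; omega⟩
      invFun := fun j => ⟨((2 * j.1 + 1 : ℕ) : ZMod G), by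
        rw [ZMod.val_natCast]
        have hj := j.2
        have hlt : 2 * j.1 + 1 < G := by omega
        rw [Nat.mod_eq_of_lt hlt]
        omega⟩
      left_inv := fun z => Subtype.ext (by
        have h2 := z.2
        have hv : 2 * (z.1.val / 2) + 1 = z.1.val := by omega
        show ((2 * (z.1.val / 2) + 1 : ℕ) : ZMod G) = z.1
        rw [hv]
        exact ZMod.natCast_rightInverse z.1)
      right_inv := fun j => by
        ext
        show ((2 * j.1 + 1 : ℕ) : ZMod G).val / 2 = j.1
        rw [ZMod.val_natCast]
        have hj := j.2
        have hlt : 2 * j.1 + 1 < G := by omega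
        rw [Nat.mod_eq_of_lt hlt]
        omega }
  have hcount : Nat.card {z : ZMod G // ZMod.castHom hd2 (ZMod 2) z ≠ 0} = Nat.gcd m n := by
    rw [Nat.card_congr ((Equiv.subtypeEquivRight hodd).trans e3)]
    simp
  refine ⟨h1, fun p _ => h2 p, ?_⟩
  rw [hcard, hcount]
end

section
/- Let σ be a permutation of Fin N all of whose orbits (cycles) have even cardinality, and let λ = (λ_1 ≥ λ_2 ≥ … ≥ λ_l) be the multiset of semilengths of the cycles of σ (so the cycle lengths are 2λ_1, …, 2λ_l and N = 2(λ_1 + … + λ_l)). Then the number of bicolored graphs (c, G) on Fin N such that c(σ(x)) ≠ c(x) for all x and σ is an automorphism of G equals 2^l · ∏_{i=1}^{l} 2^{⌈λ_i/2⌉} · ∏_{1 ≤ i < j ≤ l} 2^{gcd(λ_i, λ_j)}. -/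
open MulAction Function Subgroup
namespace CB
variable {N : ℕ} (σ : Equiv.Perm (Fin N))



abbrev Q (σ : Equiv.Perm (Fin N)) := MulAction.orbitRel.Quotient (Subgroup.zpowers σ) (Fin N)

noncomputable def rep (q : Q σ) : Fin N := Quotient.out q

noncomputable def per (q : Q σ) : ℕ := Function.minimalPeriod (σ • ·) (rep σ q)

noncomputable def cls (x : Fin N) : Q σ := Quotient.mk'' x

lemma cls_rep (q : Q σ) : cls σ (rep σ q) = q := Quotient.out_eq' q

lemma smul_eq (k : ℤ) (x : Fin N) : (σ ^ k) x = (σ ^ k) • x := rfl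

lemma cls_pow (k : ℤ) (x : Fin N) : cls σ ((σ ^ k) x) = cls σ x := by
  apply Quotient.sound'
  rw [MulAction.orbitRel_apply]
  exact ⟨⟨σ ^ k, zpow_mem (Subgroup.mem_zpowers σ) k⟩, rfl⟩

lemma pow_rep_fixed {q : Q σ} {k : ℤ} : (σ ^ k) (rep σ q) = rep σ q ↔ (per σ q : ℤ) ∣ k := by
  rw [smul_eq]
  exact MulAction.zpow_smul_eq_iff_minimalPeriod_dvd

lemma pow_rep_eq {q : Q σ} {k j : ℤ} :
    (σ ^ k) (rep σ q) = (σ ^ j) (rep σ q) ↔ (per σ q : ℤ) ∣ (k - j) := by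
  rw [← pow_rep_fixed σ]
  constructor
  · intro h
    have h2 := congrArg (fun y => (σ ^ (-j)) y) h
    simp only [← Equiv.Perm.mul_apply, ← zpow_add] at h2
    rw [sub_eq_add_neg, add_comm]
    rw [neg_add_cancel] at h2
    simpa using h2
  · intro h
    have h2 := congrArg (fun y => (σ ^ j) y) h
    simp only [← Equiv.Perm.mul_apply, ← zpow_add] at h2
    rw [add_sub_cancel] at h2
    exact h2

lemma exists_pow_rep (x : Fin N) : ∃ k : ℤ, (σ ^ k) (rep σ (cls σ x)) = x := by
  have hx : x ∈ MulAction.orbit (Subgroup.zpowers σ) (rep σ (cls σ x)) := by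
    rw [← MulAction.orbitRel_apply]
    exact Quotient.exact' (Quotient.out_eq' (cls σ x)).symm
  obtain ⟨⟨g, m, rfl⟩, hg⟩ := hx
  exact ⟨m, hg⟩

lemma card_orbit_eq_per (q : Q σ) :
    Nat.card (MulAction.orbit (Subgroup.zpowers σ) (rep σ q)) = per σ q := by
  letI : Fintype (MulAction.orbit (Subgroup.zpowers σ) (rep σ q)) := Fintype.ofFinite _
  rw [Nat.card_eq_fintype_card, ← MulAction.minimalPeriod_eq_card]
  rfl


/-- integer parity as Bool -/
def ip (k : ℤ) : Bool := decide (k % 2 = 1)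

lemma ip_add_one (k : ℤ) : ip (k + 1) = ! ip k := by
  unfold ip
  have h : k % 2 = 0 ∨ k % 2 = 1 := Int.emod_two_eq_zero_or_one k
  rcases h with h | h <;> rw [show (k+1) % 2 = (k % 2 + 1) % 2 by omega] <;> rw [h] <;> simp

lemma ip_congr {k j : ℤ} (h : (2:ℤ) ∣ (k - j)) : ip k = ip j := by
  unfold ip
  rw [decide_eq_decide]
  omega

lemma pow_succ_apply (k : ℤ) (x : Fin N) : (σ ^ (k + 1)) x = σ ((σ ^ k) x) := by
  rw [show (k+1) = 1 + k by ring, zpow_one_add, Equiv.Perm.mul_apply]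

variable {σ} {c : Fin N → Bool}

lemma color_pow (hc : ∀ x, c (σ x) ≠ c x) (k : ℤ) (x : Fin N) : c ((σ ^ k) x) = xor (ip k) (c x) := by
  induction k using Int.induction_on with
  | zero => simp [ip]
  | succ n ih =>
      rw [pow_succ_apply, ip_add_one]
      have h2 := hc ((σ ^ (n:ℤ)) x)
      revert h2; rw [ih]
      cases ip (n:ℤ) <;> cases c x <;> simp
  | pred n ih =>
      have hs : σ ((σ ^ (-(n:ℤ) - 1)) x) = (σ ^ (-(n:ℤ))) x := by
        rw [← pow_succ_apply]; norm_num
      have h2 := hc ((σ ^ (-(n:ℤ) - 1)) x)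
      rw [hs, ih] at h2
      have hip : ip (-(n:ℤ)) = ! ip (-(n:ℤ)-1) := by
        have := ip_add_one (-(n:ℤ)-1)
        rw [show (-(n:ℤ)-1+1) = -(n:ℤ) by ring] at this
        exact this
      rw [hip] at h2
      revert h2
      cases ip (-(n:ℤ)-1) <;> cases c x <;> simp

section Color
variable (σ)
noncomputable def ek (x : Fin N) : ℤ := (exists_pow_rep σ x).choose
lemma ek_spec (x : Fin N) : (σ ^ ek σ x) (rep σ (cls σ x)) = x := (exists_pow_rep σ x).choose_spec
noncomputable def par (x : Fin N) : Bool := ip (ek σ x)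

variable {σ}
lemma par_unique (heven : ∀ q : Q σ, Even (per σ q)) {x : Fin N} {k : ℤ}
    (h : (σ ^ k) (rep σ (cls σ x)) = x) : ip k = par σ x := by
  have h2 : (σ ^ k) (rep σ (cls σ x)) = (σ ^ ek σ x) (rep σ (cls σ x)) := by
    rw [h, ek_spec]
  rw [pow_rep_eq] at h2
  apply ip_congr
  obtain ⟨m, hm⟩ := heven (cls σ x)
  obtain ⟨t, ht⟩ := h2
  refine ⟨m * t, ?_⟩
  rw [ht]
  push_cast [hm]
  ring

lemma par_apply (heven : ∀ q : Q σ, Even (per σ q)) (x : Fin N) :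
    par σ (σ x) = ! par σ x := by
  have hcls : cls σ (σ x) = cls σ x := by
    have := cls_pow σ 1 x
    rwa [zpow_one] at this
  have h : (σ ^ (ek σ x + 1)) (rep σ (cls σ (σ x))) = σ x := by
    rw [hcls, pow_succ_apply, ek_spec]
  have := par_unique heven h
  rw [ip_add_one] at this
  rw [← this]
  rfl

lemma par_rep (heven : ∀ q : Q σ, Even (per σ q)) (q : Q σ) : par σ (rep σ q) = false := by
  have h : (σ ^ (0:ℤ)) (rep σ (cls σ (rep σ q))) = rep σ q := by
    rw [cls_rep]; simp
  have := par_unique heven h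
  rw [← this]; simp [ip]

noncomputable def colorEquiv (heven : ∀ q : Q σ, Even (per σ q)) :
    {c : Fin N → Bool // ∀ x, c (σ x) ≠ c x} ≃ (Q σ → Bool) where
  toFun c := fun q => c.1 (rep σ q)
  invFun b := ⟨fun x => xor (par σ x) (b (cls σ x)), by
    intro x
    have h1 : cls σ (σ x) = cls σ x := by
      have := cls_pow σ 1 x; rwa [zpow_one] at this
    show xor (par σ (σ x)) (b (cls σ (σ x))) ≠ xor (par σ x) (b (cls σ x))
    rw [h1, par_apply heven]
    cases par σ x <;> cases b (cls σ x) <;> simp⟩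
  left_inv c := by
    apply Subtype.ext
    funext x
    have h1 : c.1 x = xor (ip (ek σ x)) (c.1 (rep σ (cls σ x))) := by
      conv_lhs => rw [← ek_spec σ x]
      exact color_pow c.2 _ _
    simp only [h1, par]
  right_inv b := by
    funext q
    simp only [cls_rep, par_rep heven]
    cases b q <;> simp

lemma card_colorings (heven : ∀ q : Q σ, Even (per σ q)) :
    Nat.card {c : Fin N → Bool // ∀ x, c (σ x) ≠ c x} = 2 ^ Nat.card (Q σ) := by
  rw [Nat.card_congr (colorEquiv heven)]
  rw [Nat.card_fun]
  simp

end Color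

section Pairs
variable (σ)

lemma comp_pow (m k : ℤ) (x : Fin N) : (σ ^ m) ((σ ^ k) x) = (σ ^ (m + k)) x := by
  rw [zpow_add, Equiv.Perm.mul_apply]

def prel (u v : Fin N × Fin N) : Prop :=
  ∃ k : ℤ, ((σ ^ k) u.1, (σ ^ k) u.2) = v ∨ ((σ ^ k) u.1, (σ ^ k) u.2) = (v.2, v.1)

lemma prel_refl (u : Fin N × Fin N) : prel σ u u := ⟨0, Or.inl (by simp)⟩

variable {σ}

lemma prel_symm {u v : Fin N × Fin N} (h : prel σ u v) : prel σ v u := by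
  obtain ⟨k, h | h⟩ := h
  · refine ⟨-k, Or.inl ?_⟩
    rw [← h]
    simp [comp_pow]
  · refine ⟨-k, Or.inr ?_⟩
    have h1 : (σ ^ k) u.1 = v.2 := congrArg Prod.fst h
    have h2 : (σ ^ k) u.2 = v.1 := congrArg Prod.snd h
    rw [← h1, ← h2]
    simp [comp_pow]

lemma prel_trans {u v w : Fin N × Fin N} (h : prel σ u v) (h' : prel σ v w) : prel σ u w := by
  obtain ⟨k, h | h⟩ := h <;> obtain ⟨m, h' | h'⟩ := h' <;>
    have h1 := congrArg Prod.fst h <;> have h2 := congrArg Prod.snd h <;>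
    have h1' := congrArg Prod.fst h' <;> have h2' := congrArg Prod.snd h' <;>
    simp only at h1 h2 h1' h2'
  · exact ⟨m + k, Or.inl (by rw [← comp_pow, ← comp_pow, h1, h2, h1', h2'])⟩
  · exact ⟨m + k, Or.inr (by rw [← comp_pow, ← comp_pow, h1, h2, h1', h2'])⟩
  · exact ⟨m + k, Or.inr (by rw [← comp_pow, ← comp_pow, h1, h2, h1', h2'])⟩
  · exact ⟨m + k, Or.inl (by rw [← comp_pow, ← comp_pow, h1, h2, h1', h2'])⟩

lemma color_step {c : Fin N → Bool} (hc : ∀ x, c (σ x) ≠ c x) (x : Fin N) :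
    c (σ x) = ! c x := by
  have := hc x
  cases h1 : c (σ x) <;> cases h2 : c x <;> simp_all

variable (σ) in
/-- the setoid on differently-colored pairs -/
def psetoid (c : Fin N → Bool) : Setoid {d : Fin N × Fin N // c d.1 ≠ c d.2} :=
  ⟨fun d e => prel σ d.1 e.1, ⟨fun d => prel_refl σ d.1, prel_symm, prel_trans⟩⟩

lemma adj_pow {G : SimpleGraph (Fin N)} (hG : ∀ u v, G.Adj (σ u) (σ v) ↔ G.Adj u v)
    (k : ℤ) (u v : Fin N) : G.Adj ((σ ^ k) u) ((σ ^ k) v) ↔ G.Adj u v := by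
  induction k using Int.induction_on with
  | zero => simp
  | succ n ih =>
      rw [pow_succ_apply, pow_succ_apply, hG]
      exact ih
  | pred n ih =>
      have h1 : σ ((σ ^ (-(n:ℤ) - 1)) u) = (σ ^ (-(n:ℤ))) u := by
        rw [← pow_succ_apply]; norm_num
      have h2 : σ ((σ ^ (-(n:ℤ) - 1)) v) = (σ ^ (-(n:ℤ))) v := by
        rw [← pow_succ_apply]; norm_num
      rw [← ih, ← h1, ← h2, hG]

/-- turn a boolean function on pair-classes into a graph -/
def toGraph (c : Fin N → Bool) (hc : ∀ x, c (σ x) ≠ c x)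
    (B : Quotient (psetoid σ c) → Bool) :
    {G : SimpleGraph (Fin N) //
      (∀ u v, G.Adj u v → c u ≠ c v) ∧ (∀ u v, G.Adj (σ u) (σ v) ↔ G.Adj u v)} :=
  ⟨{
    Adj := fun u v => ∃ h : c u ≠ c v, B (Quotient.mk _ ⟨(u, v), h⟩) = true
    symm := by
      refine ⟨?_⟩; rintro u v ⟨h, hB⟩
      refine ⟨fun he => h he.symm, ?_⟩
      rw [← hB]
      congr 1
      apply Quotient.sound
      exact ⟨0, Or.inr (by simp)⟩
    loopless := by refine ⟨?_⟩; rintro u ⟨h, _⟩; exact h rfl }, by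
    constructor
    · rintro u v ⟨h, _⟩; exact h
    · intro u v
      constructor
      · rintro ⟨h, hB⟩
        have hcu : c u ≠ c v := by
          intro he; apply h; rw [color_step hc, color_step hc, he]
        refine ⟨hcu, ?_⟩
        rw [← hB]
        congr 1
        apply Quotient.sound
        refine ⟨1, Or.inl ?_⟩
        simp [zpow_one]
      · rintro ⟨h, hB⟩
        have hcu : c (σ u) ≠ c (σ v) := by
          intro he; apply h
          rw [color_step hc, color_step hc] at he
          cases (c u) <;> cases (c v) <;> simp_all
        refine ⟨hcu, ?_⟩
        rw [← hB]
        congr 1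
        apply Quotient.sound
        refine ⟨-1, Or.inl ?_⟩
        have e1 : (σ ^ (-1:ℤ)) (σ u) = u := by
          rw [show σ u = (σ ^ (1:ℤ)) u by simp, comp_pow]; simp
        have e2 : (σ ^ (-1:ℤ)) (σ v) = v := by
          rw [show σ v = (σ ^ (1:ℤ)) v by simp, comp_pow]; simp
        rw [e1, e2]⟩

lemma toGraph_bijective (c : Fin N → Bool) (hc : ∀ x, c (σ x) ≠ c x) :
    Function.Bijective (toGraph c hc) := by
  constructor
  · intro B B' hBB
    have hAdj : ∀ u v, (toGraph c hc B).1.Adj u v ↔ (toGraph c hc B').1.Adj u v := by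
      intro u v
      rw [hBB]
    funext d
    induction d using Quotient.inductionOn with
    | h d =>
      obtain ⟨⟨u, v⟩, hd⟩ := d
      have h1 := hAdj u v
      simp only [toGraph] at h1
      rcases hB : B (Quotient.mk _ ⟨(u, v), hd⟩) with _ | _ <;>
        rcases hB' : B' (Quotient.mk _ ⟨(u, v), hd⟩) with _ | _
      · rfl
      · exfalso
        obtain ⟨h', hB2⟩ := h1.mpr ⟨hd, hB'⟩
        rw [hB2] at hB; simp at hB
      · exfalso
        obtain ⟨h', hB2⟩ := h1.mp ⟨hd, hB⟩
        rw [hB2] at hB'; simp at hB'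
      · rfl
  · rintro ⟨G, hG1, hG2⟩
    classical
    refine ⟨Quotient.lift (fun d => decide (G.Adj d.1.1 d.1.2)) ?_, ?_⟩
    · rintro ⟨⟨u1, u2⟩, hu⟩ ⟨⟨v1, v2⟩, hv⟩ ⟨k, h | h⟩ <;>
        have h1 := congrArg Prod.fst h <;> have h2 := congrArg Prod.snd h <;>
        simp only at h1 h2 <;>
        simp only [decide_eq_decide]
      · rw [← h1, ← h2, adj_pow hG2]
      · rw [← h1, ← h2, adj_pow hG2]
        exact G.adj_comm _ _
    · apply Subtype.ext
      ext u v
      simp only [toGraph, Quotient.lift_mk, decide_eq_true_eq]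
      constructor
      · rintro ⟨h, hB⟩; exact hB
      · intro h; exact ⟨hG1 u v h, h⟩

lemma card_graphs (c : Fin N → Bool) (hc : ∀ x, c (σ x) ≠ c x) :
    Nat.card {G : SimpleGraph (Fin N) //
      (∀ u v, G.Adj u v → c u ≠ c v) ∧ (∀ u v, G.Adj (σ u) (σ v) ↔ G.Adj u v)} =
      2 ^ Nat.card (Quotient (psetoid σ c)) := by
  rw [← Nat.card_eq_of_bijective _ (toGraph_bijective c hc), Nat.card_fun]
  simp

end Pairs

section Count
variable (σ)

lemma ip_odd (m : ℤ) : ip (2*m+1) = true := by unfold ip; rw [decide_eq_true_eq]; omega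

lemma ip_even (m : ℤ) : ip (2*m) = false := by
  unfold ip; rw [decide_eq_false_iff_not]; omega

lemma per_pos (q : Q σ) : 0 < per σ q := by
  have h : NeZero (Function.minimalPeriod (σ • ·) (rep σ q)) :=
    MulAction.minimalPeriod_pos σ (rep σ q)
  exact Nat.pos_of_ne_zero h.ne

lemma cls_pow_rep (k : ℤ) (q : Q σ) : cls σ ((σ ^ k) (rep σ q)) = q := by
  rw [cls_pow, cls_rep]

/-- cross-cycle index pairs -/
abbrev crossIdx := {p : Q σ × Q σ // rep σ p.1 < rep σ p.2}

noncomputable def gcdP (p : Q σ × Q σ) : ℕ := Nat.gcd (per σ p.1 / 2) (per σ p.2 / 2)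

noncomputable abbrev JT := (Σ q : Q σ, Fin ((per σ q / 2 + 1) / 2)) ⊕
  (Σ p : crossIdx σ, Fin (gcdP σ p.1))

noncomputable def ofs (c : Fin N → Bool) (p : Q σ × Q σ) : ℤ :=
  if c (rep σ p.1) = c (rep σ p.2) then 1 else 0

variable {σ}

lemma gcd_per_eq (heven : ∀ q : Q σ, Even (per σ q)) (p : Q σ × Q σ) :
    Nat.gcd (per σ p.1) (per σ p.2) = 2 * gcdP σ p := by
  have h1 : per σ p.1 = 2 * (per σ p.1 / 2) := by
    obtain ⟨m, hm⟩ := heven p.1; omega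
  have h2 : per σ p.2 = 2 * (per σ p.2 / 2) := by
    obtain ⟨m, hm⟩ := heven p.2; omega
  rw [gcdP]
  conv_lhs => rw [h1, h2]
  exact Nat.gcd_mul_left 2 _ _

noncomputable def theta (c : Fin N → Bool) (hc : ∀ x, c (σ x) ≠ c x) :
    JT σ → Quotient (psetoid σ c)
  | Sum.inl ⟨q, i⟩ => Quotient.mk _ ⟨(rep σ q, (σ ^ (2*((i:ℕ):ℤ)+1)) (rep σ q)), by
      show c (rep σ q) ≠ c ((σ ^ (2*((i:ℕ):ℤ)+1)) (rep σ q))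
      rw [color_pow hc, ip_odd]
      cases c (rep σ q) <;> simp⟩
  | Sum.inr ⟨⟨p, hp⟩, j⟩ =>
      Quotient.mk _ ⟨((σ ^ (2*((j:ℕ):ℤ) + ofs σ c p)) (rep σ p.1), rep σ p.2), by
      show c ((σ ^ (2*((j:ℕ):ℤ) + ofs σ c p)) (rep σ p.1)) ≠ c (rep σ p.2)
      rw [color_pow hc]
      unfold ofs
      by_cases he : c (rep σ p.1) = c (rep σ p.2)
      · rw [if_pos he, ip_odd, he]
        cases c (rep σ p.2) <;> simp
      · rw [if_neg he, add_zero, ip_even]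
        simpa using he⟩

end Count

section Inj

lemma dvd_small_eq {n D : ℤ} (h : n ∣ D) (h1 : -n < D) (h2 : D < n) : D = 0 := by
  have hn : 0 < n := by omega
  rcases h with ⟨w, rfl⟩
  rcases lt_trichotomy w 0 with hw | hw | hw
  · have h3 : w ≤ -1 := by omega
    have h4 : n * w ≤ n * (-1) := mul_le_mul_of_nonneg_left h3 hn.le
    rw [mul_neg_one] at h4
    linarith
  · rw [hw, mul_zero]
  · have h3 : (1:ℤ) ≤ w := by omega
    have h4 : n * 1 ≤ n * w := mul_le_mul_of_nonneg_left h3 hn.le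
    rw [mul_one] at h4
    linarith

lemma ofs_cases (c : Fin N → Bool) (p : Q σ × Q σ) : ofs σ c p = 0 ∨ ofs σ c p = 1 := by
  unfold ofs
  split <;> simp

lemma theta_injective (c : Fin N → Bool) (hc : ∀ x, c (σ x) ≠ c x)
    (heven : ∀ q : Q σ, Even (per σ q)) : Function.Injective (theta c hc) := by
  intro x y hxy
  rcases x with ⟨q, i⟩ | ⟨⟨p, hp⟩, j⟩ <;> rcases y with ⟨q', i'⟩ | ⟨⟨p', hp'⟩, j'⟩
  · -- inl / inl
    have hrel := Quotient.exact hxy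
    obtain ⟨m, hm | hm⟩ := hrel <;>
      have h1 := congrArg Prod.fst hm <;> have h2 := congrArg Prod.snd hm <;>
      simp only at h1 h2
    · -- same orientation
      have hcq := congrArg (cls σ) h1
      rw [cls_pow_rep, cls_rep] at hcq
      subst hcq
      rw [pow_rep_fixed] at h1
      rw [comp_pow, pow_rep_eq] at h2
      have hdvd : (per σ q : ℤ) ∣ ((2*((i:ℕ):ℤ)+1) - (2*((i':ℕ):ℤ)+1)) := by
        have hd := dvd_sub h2 h1
        have he : (m + (2*((i:ℕ):ℤ)+1) - (2*((i':ℕ):ℤ)+1)) - m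
            = (2*((i:ℕ):ℤ)+1) - (2*((i':ℕ):ℤ)+1) := by ring
        rwa [he] at hd
      have hlam : per σ q = 2 * (per σ q / 2) := by obtain ⟨w, hw⟩ := heven q; omega
      have hi : (i:ℕ) < (per σ q / 2 + 1) / 2 := i.2
      have hi' : (i':ℕ) < (per σ q / 2 + 1) / 2 := i'.2
      have hz := dvd_small_eq hdvd (by omega) (by omega)
      have : (i:ℕ) = (i':ℕ) := by omega
      rw [show i = i' from Fin.ext this]
    · -- swapped orientation
      have hcq := congrArg (cls σ) h1
      rw [cls_pow_rep, cls_pow_rep] at hcq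
      subst hcq
      rw [pow_rep_eq] at h1
      rw [comp_pow, pow_rep_fixed] at h2
      have hdvd : (per σ q : ℤ) ∣ ((2*((i:ℕ):ℤ)+1) + (2*((i':ℕ):ℤ)+1)) := by
        have hd := dvd_sub h2 h1
        have he : (m + (2*((i:ℕ):ℤ)+1)) - (m - (2*((i':ℕ):ℤ)+1))
            = (2*((i:ℕ):ℤ)+1) + (2*((i':ℕ):ℤ)+1) := by ring
        rwa [he] at hd
      have hlam : per σ q = 2 * (per σ q / 2) := by obtain ⟨w, hw⟩ := heven q; omega
      have hi : (i:ℕ) < (per σ q / 2 + 1) / 2 := i.2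
      have hi' : (i':ℕ) < (per σ q / 2 + 1) / 2 := i'.2
      have hdvd2 : (per σ q : ℤ) ∣ ((2*((i:ℕ):ℤ)+1) + (2*((i':ℕ):ℤ)+1)) - per σ q :=
        dvd_sub hdvd dvd_rfl
      have hz := dvd_small_eq hdvd2 (by omega) (by omega)
      have : (i:ℕ) = (i':ℕ) := by omega
      rw [show i = i' from Fin.ext this]
  · -- inl / inr : impossible
    exfalso
    have hrel := Quotient.exact hxy
    obtain ⟨m, hm | hm⟩ := hrel <;>
      have h1 := congrArg Prod.fst hm <;> have h2 := congrArg Prod.snd hm <;>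
      simp only at h1 h2
    · -- (σ^m rep q, σ^m σ^k rep q) = (σ^a rep p'.1, rep p'.2)
      have hcq1 := congrArg (cls σ) h1
      rw [cls_pow_rep, cls_pow_rep] at hcq1
      have hcq2 := congrArg (cls σ) h2
      rw [comp_pow, cls_pow_rep, cls_rep] at hcq2
      rw [← hcq1, ← hcq2] at hp'
      exact lt_irrefl _ hp'
    · have hcq1 := congrArg (cls σ) h1
      rw [cls_pow_rep, cls_rep] at hcq1
      have hcq2 := congrArg (cls σ) h2
      rw [comp_pow, cls_pow_rep, cls_pow_rep] at hcq2
      rw [← hcq1, ← hcq2] at hp'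
      exact lt_irrefl _ hp'
  · -- inr / inl : impossible
    exfalso
    have hrel := Quotient.exact hxy
    obtain ⟨m, hm | hm⟩ := hrel <;>
      have h1 := congrArg Prod.fst hm <;> have h2 := congrArg Prod.snd hm <;>
      simp only at h1 h2
    · have hcq1 := congrArg (cls σ) h1
      rw [comp_pow, cls_pow_rep, cls_rep] at hcq1
      have hcq2 := congrArg (cls σ) h2
      rw [cls_pow_rep, cls_pow_rep] at hcq2
      rw [hcq1, hcq2] at hp
      exact lt_irrefl _ hp
    · have hcq1 := congrArg (cls σ) h1
      rw [comp_pow, cls_pow_rep, cls_pow_rep] at hcq1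
      have hcq2 := congrArg (cls σ) h2
      rw [cls_pow_rep, cls_rep] at hcq2
      rw [hcq1, hcq2] at hp
      exact lt_irrefl _ hp
  · -- inr / inr
    have hrel := Quotient.exact hxy
    obtain ⟨m, hm | hm⟩ := hrel <;>
      have h1 := congrArg Prod.fst hm <;> have h2 := congrArg Prod.snd hm <;>
      simp only at h1 h2
    · -- same orientation
      have hcq1 := congrArg (cls σ) h1
      rw [comp_pow, cls_pow_rep, cls_pow_rep] at hcq1
      have hcq2 := congrArg (cls σ) h2
      rw [cls_pow_rep, cls_rep] at hcq2
      obtain ⟨q1, q2⟩ := p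
      obtain ⟨q1', q2'⟩ := p'
      simp only at hcq1 hcq2 h1 h2 hp hp' ⊢
      subst hcq1
      subst hcq2
      rw [comp_pow, pow_rep_eq] at h1
      rw [pow_rep_fixed] at h2
      -- 2g ∣ n1 and 2g ∣ n2
      have hG2 : Nat.gcd (per σ q1) (per σ q2) = 2 * gcdP σ (q1, q2) :=
        gcd_per_eq heven (q1, q2)
      have hd1 : ((2 * gcdP σ (q1, q2) : ℕ) : ℤ) ∣ (per σ q1 : ℤ) := by
        rw [← hG2]; exact_mod_cast Int.natCast_dvd_natCast.mpr (Nat.gcd_dvd_left _ _)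
      have hd2 : ((2 * gcdP σ (q1, q2) : ℕ) : ℤ) ∣ (per σ q2 : ℤ) := by
        rw [← hG2]; exact_mod_cast Int.natCast_dvd_natCast.mpr (Nat.gcd_dvd_right _ _)
      have hdvd : ((2 * gcdP σ (q1, q2) : ℕ) : ℤ) ∣
          ((2*((j:ℕ):ℤ) + ofs σ c (q1, q2)) - (2*((j':ℕ):ℤ) + ofs σ c (q1, q2))) := by
        have hA := dvd_trans hd1 h1
        have hB := dvd_trans hd2 h2
        have hd := dvd_sub hA hB
        have he : (m + (2*((j:ℕ):ℤ) + ofs σ c (q1, q2)) - (2*((j':ℕ):ℤ) + ofs σ c (q1, q2))) - m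
            = (2*((j:ℕ):ℤ) + ofs σ c (q1, q2)) - (2*((j':ℕ):ℤ) + ofs σ c (q1, q2)) := by ring
        rwa [he] at hd
      have hj : (j:ℕ) < gcdP σ (q1, q2) := j.2
      have hj' : (j':ℕ) < gcdP σ (q1, q2) := j'.2
      have ho := ofs_cases c (q1, q2)
      have hz := dvd_small_eq hdvd (by push_cast; omega) (by push_cast; omega)
      have : (j:ℕ) = (j':ℕ) := by omega
      rw [show j = j' from Fin.ext this]
    · -- swapped orientation : impossible
      exfalso
      have hcq1 := congrArg (cls σ) h1
      rw [comp_pow, cls_pow_rep, cls_rep] at hcq1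
      have hcq2 := congrArg (cls σ) h2
      rw [cls_pow_rep, cls_pow_rep] at hcq2
      have h3 : rep σ p.1 < rep σ p.2 := hp
      rw [hcq1, hcq2] at h3
      exact lt_irrefl _ (h3.trans hp')

end Inj

section Surj

lemma ip_eq_iff {k j : ℤ} : ip k = ip j ↔ (2:ℤ) ∣ (k - j) := by
  unfold ip
  rw [decide_eq_decide]
  omega

lemma rep_inj {q q' : Q σ} (h : rep σ q = rep σ q') : q = q' := by
  have h2 := congrArg (cls σ) h
  rwa [cls_rep, cls_rep] at h2

lemma per_even_int (heven : ∀ q : Q σ, Even (per σ q)) (q : Q σ) :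
    (2:ℤ) ∣ (per σ q : ℤ) := by
  obtain ⟨m, hm⟩ := heven q
  exact ⟨m, by push_cast [hm]; ring⟩

lemma cross_repr (c : Fin N → Bool) (hc : ∀ x, c (σ x) ≠ c x)
    (heven : ∀ q : Q σ, Even (per σ q)) {u v : Fin N} (hd : c u ≠ c v)
    (hlt : rep σ (cls σ u) < rep σ (cls σ v)) :
    ∃ jj : Fin (gcdP σ (cls σ u, cls σ v)),
      theta c hc (Sum.inr ⟨⟨(cls σ u, cls σ v), hlt⟩, jj⟩) =
        Quotient.mk (psetoid σ c) ⟨(u, v), hd⟩ := by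
  set q1 := cls σ u with hq1
  set q2 := cls σ v with hq2
  have ha := ek_spec σ u
  have hb := ek_spec σ v
  set a := ek σ u
  set b := ek σ v
  set g := gcdP σ (q1, q2) with hgdef
  have hgpos : 0 < g := by
    have h1 := per_pos σ q1
    have h2 := per_pos σ q2
    have e1 : per σ q1 = 2 * (per σ q1 / 2) := by obtain ⟨m, hm⟩ := heven q1; omega
    have e2 : 0 < per σ q1 / 2 := by omega
    rw [hgdef, gcdP]
    exact Nat.gcd_pos_of_pos_left _ e2
  set G2 : ℤ := ((2 * g : ℕ) : ℤ) with hG2def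
  have hG2pos : 0 < G2 := by rw [hG2def]; push_cast; omega
  set t := (a - b) % G2 with ht
  have ht0 : 0 ≤ t := Int.emod_nonneg _ (by omega)
  have htlt : t < G2 := Int.emod_lt_of_pos _ hG2pos
  have hw : a - b - t = G2 * ((a - b) / G2) := by
    rw [ht, Int.emod_def]; ring
  set w := (a - b) / G2
  -- divisibility of per's by G2
  have hgcd : Nat.gcd (per σ q1) (per σ q2) = 2 * g := gcd_per_eq heven (q1, q2)
  have hd1 : G2 ∣ (per σ q1 : ℤ) := by
    rw [hG2def, ← hgcd]
    exact Int.natCast_dvd_natCast.mpr (Nat.gcd_dvd_left _ _)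
  have hd2 : G2 ∣ (per σ q2 : ℤ) := by
    rw [hG2def, ← hgcd]
    exact Int.natCast_dvd_natCast.mpr (Nat.gcd_dvd_right _ _)
  have h2G2 : (2:ℤ) ∣ G2 := by rw [hG2def]; push_cast; exact ⟨g, by ring⟩
  -- color / parity analysis
  have hcu : c u = xor (ip a) (c (rep σ q1)) := by rw [← ha]; exact color_pow hc _ _
  have hcv : c v = xor (ip b) (c (rep σ q2)) := by rw [← hb]; exact color_pow hc _ _
  have hpar : (2:ℤ) ∣ (t - ofs σ c (q1, q2)) := by
    rw [hcu, hcv] at hd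
    have htab : (2:ℤ) ∣ (a - b - t) := dvd_trans h2G2 ⟨w, hw⟩
    by_cases he : c (rep σ q1) = c (rep σ q2)
    · have hofs : ofs σ c (q1, q2) = 1 := by unfold ofs; rw [if_pos he]
      rw [hofs]
      have hne : ip a ≠ ip b := by
        intro heq
        rw [heq, he] at hd
        exact hd rfl
      have : ¬ (2:ℤ) ∣ (a - b) := fun hdd => hne (ip_eq_iff.mpr hdd)
      omega
    · have hofs : ofs σ c (q1, q2) = 0 := by unfold ofs; rw [if_neg he]
      rw [hofs, sub_zero]
      have heq : ip a = ip b := by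
        by_contra hne
        apply hd
        cases hA : ip a <;> cases hB : ip b <;>
          cases hr1 : c (rep σ q1) <;> cases hr2 : c (rep σ q2) <;> simp_all
      have := ip_eq_iff.mp heq
      omega
  have hto : ofs σ c (q1, q2) = 0 ∨ ofs σ c (q1, q2) = 1 := ofs_cases c _
  refine ⟨⟨t.toNat / 2, show t.toNat / 2 < g by omega⟩, ?_⟩
  have hexp : (2 * ((t.toNat / 2 : ℕ) : ℤ) + ofs σ c (q1, q2)) = t := by omega
  show Quotient.mk (psetoid σ c)
      ⟨((σ ^ (2 * ((t.toNat / 2 : ℕ) : ℤ) + ofs σ c (q1, q2))) (rep σ q1), rep σ q2), _⟩ =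
    Quotient.mk (psetoid σ c) ⟨(u, v), hd⟩
  apply Quotient.sound
  -- Bezout
  set X := Int.gcdA (per σ q1 : ℤ) (per σ q2 : ℤ) with hX
  set Y := Int.gcdB (per σ q1 : ℤ) (per σ q2 : ℤ) with hY
  have hbez : G2 = (per σ q1 : ℤ) * X + (per σ q2 : ℤ) * Y := by
    rw [hG2def, ← hgcd]
    have := Int.gcd_eq_gcd_ab (per σ q1 : ℤ) (per σ q2 : ℤ)
    rw [Int.gcd_natCast_natCast] at this
    exact this
  set k := b + w * Y * (per σ q2 : ℤ) with hk
  refine ⟨k, Or.inl ?_⟩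
  have e1 : (σ ^ k) ((σ ^ (2 * ((t.toNat / 2 : ℕ) : ℤ) + ofs σ c (q1, q2))) (rep σ q1)) = u := by
    rw [hexp, comp_pow, ← ha, pow_rep_eq]
    refine ⟨-(X * w), ?_⟩
    have : k + t - a = (k + t - a) := rfl
    rw [hk]
    linear_combination (-w) * hbez - hw
  have e2 : (σ ^ k) (rep σ q2) = v := by
    rw [← hb, pow_rep_eq]
    exact ⟨w * Y, by rw [hk]; ring⟩
  show ((σ ^ k) _, (σ ^ k) _) = (u, v)
  rw [e1, e2]

end Surj

section Surj2

lemma theta_surjective (c : Fin N → Bool) (hc : ∀ x, c (σ x) ≠ c x)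
    (heven : ∀ q : Q σ, Even (per σ q)) : Function.Surjective (theta c hc) := by
  intro z
  induction z using Quotient.inductionOn with
  | h d =>
    obtain ⟨⟨u, v⟩, hd⟩ := d
    by_cases hqq : cls σ u = cls σ v
    · -- same cycle
      have ha := ek_spec σ u
      have hb' := ek_spec σ v
      rw [← hqq] at hb'
      set a := ek σ u
      set b := ek σ v
      set q := cls σ u with hq
      set r := rep σ q
      set n := per σ q with hn
      have hnpos : 0 < n := per_pos σ q
      have hneven : n = 2 * (n / 2) := by obtain ⟨m, hm⟩ := heven q; omega
      have h2n : (2:ℤ) ∣ (n:ℤ) := per_even_int heven q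
      have hcu : c u = xor (ip a) (c r) := by rw [← ha]; exact color_pow hc _ _
      have hcv : c v = xor (ip b) (c r) := by rw [← hb']; exact color_pow hc _ _
      have hne : ip a ≠ ip b := by
        intro heq
        rw [hcu, hcv, heq] at hd
        exact hd rfl
      have hodd : ¬ (2:ℤ) ∣ (b - a) := by
        intro h2
        exact hne (ip_eq_iff.mpr (by omega)).symm
      set k := (b - a) % (n:ℤ) with hk
      have hk0 : 0 ≤ k := Int.emod_nonneg _ (by omega)
      have hkn : k < (n:ℤ) := Int.emod_lt_of_pos _ (by omega)
      have hwk : b - a - k = (n:ℤ) * ((b - a) / (n:ℤ)) := by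
        rw [hk, Int.emod_def]; ring
      have hkodd : ¬ (2:ℤ) ∣ k := by
        intro h2
        apply hodd
        have h2' : (2:ℤ) ∣ (b - a - k) := dvd_trans h2n ⟨_, hwk⟩
        omega
      by_cases hKle : k ≤ (n:ℤ) / 2
      · refine ⟨Sum.inl ⟨q, ⟨(k.toNat - 1) / 2, ?_⟩⟩, ?_⟩
        · show (k.toNat - 1) / 2 < (n / 2 + 1) / 2
          omega
        · show Quotient.mk (psetoid σ c)
            ⟨(r, (σ ^ (2 * (((k.toNat - 1) / 2 : ℕ) : ℤ) + 1)) r), _⟩ =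
            Quotient.mk (psetoid σ c) ⟨(u, v), hd⟩
          apply Quotient.sound
          have hexp : (2 * (((k.toNat - 1) / 2 : ℕ) : ℤ) + 1) = k := by omega
          refine ⟨a, Or.inl ?_⟩
          have e1 : (σ ^ a) r = u := ha
          have e2 : (σ ^ a) ((σ ^ (2 * (((k.toNat - 1) / 2 : ℕ) : ℤ) + 1)) r) = v := by
            rw [hexp, comp_pow, ← hb', pow_rep_eq]
            refine ⟨-((b - a) / (n:ℤ)), ?_⟩
            linear_combination -hwk
          show ((σ ^ a) _, (σ ^ a) _) = (u, v)
          rw [e1, e2]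
      · refine ⟨Sum.inl ⟨q, ⟨((n - k.toNat) - 1) / 2, ?_⟩⟩, ?_⟩
        · show ((n - k.toNat) - 1) / 2 < (n / 2 + 1) / 2
          omega
        · show Quotient.mk (psetoid σ c)
            ⟨(r, (σ ^ (2 * ((((n - k.toNat) - 1) / 2 : ℕ) : ℤ) + 1)) r), _⟩ =
            Quotient.mk (psetoid σ c) ⟨(u, v), hd⟩
          apply Quotient.sound
          have hexp : (2 * ((((n - k.toNat) - 1) / 2 : ℕ) : ℤ) + 1) = (n:ℤ) - k := by omega
          refine ⟨b, Or.inr ?_⟩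
          have e1 : (σ ^ b) r = v := hb'
          have e2 : (σ ^ b) ((σ ^ (2 * ((((n - k.toNat) - 1) / 2 : ℕ) : ℤ) + 1)) r) = u := by
            rw [hexp, comp_pow, ← ha, pow_rep_eq]
            refine ⟨1 + (b - a) / (n:ℤ), ?_⟩
            linear_combination hwk
          show ((σ ^ b) _, (σ ^ b) _) = (v, u)
          rw [e1, e2]
    · -- different cycles
      have hrne : rep σ (cls σ u) ≠ rep σ (cls σ v) := fun h => hqq (rep_inj h)
      rcases lt_or_gt_of_ne hrne with hlt | hgt
      · obtain ⟨jj, hjj⟩ := cross_repr c hc heven hd hlt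
        exact ⟨_, hjj⟩
      · have hd' : c v ≠ c u := fun h => hd h.symm
        obtain ⟨jj, hjj⟩ := cross_repr c hc heven hd' hgt
        refine ⟨_, hjj.trans ?_⟩
        apply Quotient.sound
        exact ⟨0, Or.inr (by simp)⟩

end Surj2

section Sums

lemma double_sum {α β : Type*} [Fintype α] [LinearOrder β] (v : α → β)
    (hv : Function.Injective v) (f : α → α → ℕ) (hf : ∀ a b, f a b = f b a)
    (s : Finset (α × α)) (hs : ∀ p : α × α, p ∈ s ↔ v p.1 < v p.2) :
    ∑ p : α × α, f p.1 p.2 = 2 * (∑ p ∈ s, f p.1 p.2) + ∑ a : α, f a a := by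
  classical
  have hseq : s = Finset.univ.filter (fun p : α × α => v p.1 < v p.2) := by
    ext p
    simp [hs p]
  rw [hseq]
  have hsplit := Finset.sum_filter_add_sum_filter_not Finset.univ
    (fun p : α × α => v p.1 < v p.2) (fun p => f p.1 p.2)
  have hsplit2 := Finset.sum_filter_add_sum_filter_not
    (Finset.univ.filter (fun p : α × α => ¬ v p.1 < v p.2))
    (fun p : α × α => v p.2 < v p.1) (fun p => f p.1 p.2)
  have hswap : ∑ p ∈ (Finset.univ.filter (fun p : α × α => ¬ v p.1 < v p.2)).filter
        (fun p : α × α => v p.2 < v p.1), f p.1 p.2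
      = ∑ p ∈ Finset.univ.filter (fun p : α × α => v p.1 < v p.2), f p.1 p.2 := by
    refine Finset.sum_bij' (fun p _ => Prod.swap p) (fun p _ => Prod.swap p) ?_ ?_ ?_ ?_ ?_
    · intro p hp
      simp only [Finset.mem_filter, Finset.mem_univ, true_and] at hp ⊢
      exact hp.2
    · intro p hp
      simp only [Finset.mem_filter, Finset.mem_univ, true_and] at hp ⊢
      exact ⟨not_lt_of_gt hp, hp⟩
    · intro p _; exact Prod.swap_swap p
    · intro p _; exact Prod.swap_swap p
    · intro p _; exact hf p.1 p.2
  have hdiag : ∑ p ∈ (Finset.univ.filter (fun p : α × α => ¬ v p.1 < v p.2)).filter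
        (fun p : α × α => ¬ v p.2 < v p.1), f p.1 p.2
      = ∑ a : α, f a a := by
    refine Finset.sum_bij' (fun p _ => p.1) (fun a _ => (a, a)) ?_ ?_ ?_ ?_ ?_
    · intro p hp
      exact Finset.mem_univ _
    · intro a _
      simp only [Finset.mem_filter, Finset.mem_univ, true_and]
      exact ⟨lt_irrefl _, lt_irrefl _⟩
    · intro p hp
      simp only [Finset.mem_filter, Finset.mem_univ, true_and] at hp
      have : v p.1 = v p.2 := le_antisymm (not_lt.mp hp.2) (not_lt.mp hp.1)
      have := hv this
      ext
      · rfl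
      · exact this
    · intro a _; rfl
    · intro p hp
      simp only [Finset.mem_filter, Finset.mem_univ, true_and] at hp
      have h : v p.1 = v p.2 := le_antisymm (not_lt.mp hp.2) (not_lt.mp hp.1)
      exact congrArg (f p.1) (hv h).symm
  omega

lemma fin_sum_list {M : Type*} [AddCommMonoid M] (L : List ℕ) (f : ℕ → M) :
    ∑ i : Fin L.length, f (L.get i) = (L.map f).sum := by
  rw [← List.sum_ofFn]
  congr 1
  rw [← List.ofFn_getElem_eq_map]
  rfl

end Sums

lemma card_qorbit (q : Q σ) : Nat.card q.orbit = per σ q := by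
  rw [MulAction.orbitRel.Quotient.orbit_eq_orbit_out q Quotient.out_eq']
  exact card_orbit_eq_per σ q

def mainEquiv (σ : Equiv.Perm (Fin N)) :
    {p : (Fin N → Bool) × SimpleGraph (Fin N) //
        (∀ u v, p.2.Adj u v → p.1 u ≠ p.1 v) ∧
        (∀ x, p.1 (σ x) ≠ p.1 x) ∧
        (∀ u v, p.2.Adj (σ u) (σ v) ↔ p.2.Adj u v)} ≃
    Σ c : {c : Fin N → Bool // ∀ x, c (σ x) ≠ c x},
      {G : SimpleGraph (Fin N) //
        (∀ u v, G.Adj u v → c.1 u ≠ c.1 v) ∧ (∀ u v, G.Adj (σ u) (σ v) ↔ G.Adj u v)} where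
  toFun p := ⟨⟨p.1.1, p.2.2.1⟩, ⟨p.1.2, p.2.1, p.2.2.2⟩⟩
  invFun s := ⟨(s.1.1, s.2.1), ⟨s.2.2.1, s.1.2, s.2.2.2⟩⟩
  left_inv p := rfl
  right_inv s := rfl
end CB

/-- Let `σ` be a permutation of `Fin N` all of whose cycles have even length, with
sorted list `L = (λ₁ ≥ … ≥ λ_l)` of semilengths of its cycles.  The number of bicolored
graphs `(c, G)` on `Fin N` for which `σ` is a color-reversing automorphism is
`2 ^ l · ∏ i, 2 ^ ⌈λᵢ/2⌉ · ∏_{i < j} 2 ^ gcd (λᵢ, λⱼ)`. -/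
theorem count_bicolored_color_reversing (N : ℕ) (σ : Equiv.Perm (Fin N))
    (heven : ∀ v : Fin N, Even (Nat.card (MulAction.orbit (Subgroup.zpowers σ) v)))
    (L : List ℕ) (hsort : L.Pairwise (· ≥ ·))
    (hL : (L : Multiset ℕ) = (cycleTypeFull σ).map (· / 2)) :
    Nat.card {p : (Fin N → Bool) × SimpleGraph (Fin N) //
        (∀ u v, p.2.Adj u v → p.1 u ≠ p.1 v) ∧
        (∀ x, p.1 (σ x) ≠ p.1 x) ∧
        (∀ u v, p.2.Adj (σ u) (σ v) ↔ p.2.Adj u v)} =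
      2 ^ L.length * (∏ i : Fin L.length, 2 ^ ((L.get i + 1) / 2)) *
        ∏ q ∈ Finset.univ.filter (fun q : Fin L.length × Fin L.length => q.1 < q.2),
          2 ^ Nat.gcd (L.get q.1) (L.get q.2) := by
  classical
  letI instQ : Fintype (CB.Q σ) := Fintype.ofFinite _
  have hevenq : ∀ q : CB.Q σ, Even (CB.per σ q) := by
    intro q
    have h := heven (CB.rep σ q)
    rwa [CB.card_orbit_eq_per] at h
  have hctf : (cycleTypeFull σ).map (· / 2)
      = (Finset.univ : Finset (CB.Q σ)).val.map (fun q => CB.per σ q / 2) := by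
    have h1 : cycleTypeFull σ
        = (Finset.univ : Finset (CB.Q σ)).val.map (fun q => Nat.card q.orbit) := rfl
    rw [h1, Multiset.map_map]
    congr 1
    funext q
    show Nat.card q.orbit / 2 = CB.per σ q / 2
    rw [CB.card_qorbit]
  rw [hctf] at hL
  have htrans : ∀ f : ℕ → ℕ,
      ∑ i : Fin L.length, f (L.get i) = ∑ q : CB.Q σ, f (CB.per σ q / 2) := by
    intro f
    rw [CB.fin_sum_list]
    have h3 : ((L : Multiset ℕ).map f).sum = (L.map f).sum := by
      rw [Multiset.map_coe, Multiset.sum_coe]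
    rw [← h3, hL, Multiset.map_map]
    rfl
  have hlen : L.length = Fintype.card (CB.Q σ) := by
    have h2 := congrArg Multiset.card hL
    simpa using h2
  -- left-hand side
  rw [Nat.card_congr (CB.mainEquiv σ)]
  letI instG : ∀ c : {c : Fin N → Bool // ∀ x, c (σ x) ≠ c x}, Fintype
      {G : SimpleGraph (Fin N) //
        (∀ u v, G.Adj u v → c.1 u ≠ c.1 v) ∧ (∀ u v, G.Adj (σ u) (σ v) ↔ G.Adj u v)} :=
    fun c => Fintype.ofFinite _
  letI instC : Fintype {c : Fin N → Bool // ∀ x, c (σ x) ≠ c x} := Fintype.ofFinite _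
  rw [Nat.card_eq_fintype_card, Fintype.card_sigma]
  have hG : ∀ c : {c : Fin N → Bool // ∀ x, c (σ x) ≠ c x},
      Fintype.card {G : SimpleGraph (Fin N) //
        (∀ u v, G.Adj u v → c.1 u ≠ c.1 v) ∧ (∀ u v, G.Adj (σ u) (σ v) ↔ G.Adj u v)}
        = 2 ^ Nat.card (CB.JT σ) := by
    intro c
    rw [← Nat.card_eq_fintype_card, CB.card_graphs c.1 c.2]
    congr 1
    exact (Nat.card_eq_of_bijective _
      ⟨CB.theta_injective c.1 c.2 hevenq, CB.theta_surjective c.1 c.2 hevenq⟩).symm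
  simp only [hG]
  rw [Finset.sum_const, smul_eq_mul, Finset.card_univ, ← Nat.card_eq_fintype_card,
    CB.card_colorings hevenq]
  -- card of JT
  have hJT : Nat.card (CB.JT σ) = (∑ q : CB.Q σ, (CB.per σ q / 2 + 1) / 2) +
      ∑ p ∈ Finset.univ.filter
        (fun p : CB.Q σ × CB.Q σ => CB.rep σ p.1 < CB.rep σ p.2), CB.gcdP σ p := by
    rw [Nat.card_eq_fintype_card]
    rw [Fintype.card_sum, Fintype.card_sigma, Fintype.card_sigma]
    simp only [Fintype.card_fin]
    congr 1
    exact (Finset.sum_subtype _ (fun p => by simp) (fun p => CB.gcdP σ p)).symm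
  -- sums transfer
  have hS1 : ∑ i : Fin L.length, (L.get i + 1) / 2
      = ∑ q : CB.Q σ, (CB.per σ q / 2 + 1) / 2 := by
    simpa using htrans (fun x => (x + 1) / 2)
  have htot : ∑ p : Fin L.length × Fin L.length, Nat.gcd (L.get p.1) (L.get p.2)
      = ∑ p : CB.Q σ × CB.Q σ, Nat.gcd (CB.per σ p.1 / 2) (CB.per σ p.2 / 2) := by
    rw [Fintype.sum_prod_type, Fintype.sum_prod_type]
    have hinner : ∀ x : ℕ, ∑ j : Fin L.length, Nat.gcd x (L.get j)
        = ∑ q : CB.Q σ, Nat.gcd x (CB.per σ q / 2) := fun x => by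
      simpa using htrans (fun y => Nat.gcd x y)
    calc ∑ i : Fin L.length, ∑ j : Fin L.length, Nat.gcd (L.get i) (L.get j)
        = ∑ i : Fin L.length, ∑ q : CB.Q σ, Nat.gcd (L.get i) (CB.per σ q / 2) :=
          Finset.sum_congr rfl (fun i _ => hinner _)
      _ = ∑ q' : CB.Q σ, ∑ q : CB.Q σ, Nat.gcd (CB.per σ q' / 2) (CB.per σ q / 2) := by
          simpa using htrans (fun x => ∑ q : CB.Q σ, Nat.gcd x (CB.per σ q / 2))
  have hdiag : ∑ i : Fin L.length, Nat.gcd (L.get i) (L.get i)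
      = ∑ q : CB.Q σ, Nat.gcd (CB.per σ q / 2) (CB.per σ q / 2) := by
    simpa using htrans (fun x => Nat.gcd x x)
  have hFside := CB.double_sum (fun i : Fin L.length => i) (fun _ _ h => h)
    (fun i j => Nat.gcd (L.get i) (L.get j)) (fun i j => Nat.gcd_comm _ _)
    (Finset.univ.filter (fun q : Fin L.length × Fin L.length => q.1 < q.2))
    (fun p => by simp)
  have hQside := CB.double_sum (CB.rep σ) (fun _ _ h => CB.rep_inj h)
    (fun a b => Nat.gcd (CB.per σ a / 2) (CB.per σ b / 2)) (fun a b => Nat.gcd_comm _ _)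
    (Finset.univ.filter (fun p : CB.Q σ × CB.Q σ => CB.rep σ p.1 < CB.rep σ p.2))
    (fun p => by simp)
  have hS2 : ∑ q ∈ Finset.univ.filter
        (fun q : Fin L.length × Fin L.length => q.1 < q.2),
        Nat.gcd (L.get q.1) (L.get q.2)
      = ∑ p ∈ Finset.univ.filter
        (fun p : CB.Q σ × CB.Q σ => CB.rep σ p.1 < CB.rep σ p.2), CB.gcdP σ p := by
    have hg : ∀ p : CB.Q σ × CB.Q σ, CB.gcdP σ p
        = Nat.gcd (CB.per σ p.1 / 2) (CB.per σ p.2 / 2) := fun p => rfl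
    simp only [hg]
    omega
  rw [Finset.prod_pow_eq_pow_sum, Finset.prod_pow_eq_pow_sum, hS1, hS2, hJT, pow_add]
  rw [Nat.card_eq_fintype_card (α := CB.Q σ), ← hlen]
  ring
end

section
/- For every n ≥ 1, 2·B_n = C_n + F_n, where B_n is the number of isomorphism classes of connected bipartite simple graphs on n vertices, C_n is the number of isomorphism classes of connected bicolored graphs on n vertices, and F_n is the number of isomorphism classes of connected bicolored graphs (c, G) on n vertices that are isomorphic (as bicolored graphs) to their color reversal (¬ ∘ c, G). -/
/-- Isomorphism of bicolored graphs: a graph isomorphism `φ` from `G` to `G'` with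
`c' ∘ φ = c`. -/
def BicoloredIso {n : ℕ} (p q : (Fin n → Bool) × SimpleGraph (Fin n)) : Prop :=
  ∃ φ : p.2 ≃g q.2, ∀ v, q.1 (φ v) = p.1 v
namespace TwoBAux

variable {n : ℕ}

/-- Bicolored connected graphs. -/
def A (n : ℕ) := {p : (Fin n → Bool) × SimpleGraph (Fin n) //
  (∀ u v, p.2.Adj u v → p.1 u ≠ p.1 v) ∧ p.2.Connected}

/-- Connected bipartite graphs. -/
def Bt (n : ℕ) := {G : SimpleGraph (Fin n) //
  G.Connected ∧ ∃ c : Fin n → Bool, ∀ u v, G.Adj u v → c u ≠ c v}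

def rA (n : ℕ) : A n → A n → Prop := fun p q => BicoloredIso p.1 q.1
def rB (n : ℕ) : Bt n → Bt n → Prop := fun G H => Nonempty (G.1 ≃g H.1)

lemma rA_equiv : Equivalence (rA n) where
  refl p := ⟨(SimpleGraph.Iso.refl : p.1.2 ≃g p.1.2), fun _ => rfl⟩
  symm := by
    rintro p q ⟨φ, h⟩
    refine ⟨φ.symm, fun v => ?_⟩
    have := h (φ.symm v)
    simpa using this.symm
  trans := by
    rintro p q r ⟨φ, h⟩ ⟨ψ, h'⟩
    exact ⟨φ.trans ψ, fun v => (h' (φ v)).trans (h v)⟩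

lemma rB_equiv : Equivalence (rB n) where
  refl G := ⟨(SimpleGraph.Iso.refl : G.1 ≃g G.1)⟩
  symm := by rintro G H ⟨φ⟩; exact ⟨φ.symm⟩
  trans := by rintro G H K ⟨φ⟩ ⟨ψ⟩; exact ⟨φ.trans ψ⟩

lemma quot_mk_eq_iff {α : Type*} {r : α → α → Prop} (h : Equivalence r) {a b : α} :
    Quot.mk r a = Quot.mk r b ↔ r a b :=
  Iff.trans Quot.eq h.eqvGen_iff

/-- Two proper 2-colorings of a connected graph agree up to a global flip. -/
lemma color_unique {G : SimpleGraph (Fin n)} (hG : G.Connected)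
    {c d : Fin n → Bool} (hc : ∀ u v, G.Adj u v → c u ≠ c v)
    (hd : ∀ u v, G.Adj u v → d u ≠ d v) :
    (∀ v, d v = c v) ∨ (∀ v, d v = !c v) := by
  have step : ∀ {a b : Fin n}, G.Adj a b → (d a = c a ↔ d b = c b) := by
    intro a b hab
    have h1 := hc a b hab
    have h2 := hd a b hab
    cases hca : c a <;> cases hcb : c b <;> cases hda : d a <;> cases hdb : d b <;>
      simp_all
  have key : ∀ {u v : Fin n}, G.Walk u v → (d u = c u ↔ d v = c v) := by
    intro u v w
    induction w with
    | nil => exact Iff.rfl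
    | cons h _ ih => exact (step h).trans ih
  obtain ⟨v0⟩ := hG.nonempty
  by_cases h0 : d v0 = c v0
  · exact Or.inl fun v => (key (hG v0 v).some).mp h0
  · refine Or.inr fun v => ?_
    have : ¬ d v = c v := fun h => h0 ((key (hG v0 v).some).mpr h)
    cases hdv : d v <;> cases hcv : c v <;> simp_all

/-- Flip the coloring of a bicolored graph. -/
def flipA (p : A n) : A n :=
  ⟨(fun v => !p.1.1 v, p.1.2), fun u v h he => p.2.1 u v h (by simpa using he), p.2.2⟩

lemma flipA_flipA (p : A n) : flipA (flipA p) = p := by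
  apply Subtype.ext
  apply Prod.ext
  · funext v; simp [flipA]
  · rfl

lemma rA_flipA {p q : A n} (h : rA n p q) : rA n (flipA p) (flipA q) := by
  obtain ⟨φ, h⟩ := h
  exact ⟨φ, fun v => by simp [flipA, h v]; exact h v⟩

/-- If the underlying graphs are isomorphic, the bicolored graphs are isomorphic
directly or after a flip. -/
lemma fiber_cases (p q : A n) (φ : p.1.2 ≃g q.1.2) :
    rA n p q ∨ rA n (flipA p) q := by
  have hd : ∀ u v, p.1.2.Adj u v → q.1.1 (φ u) ≠ q.1.1 (φ v) := by
    intro u v h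
    exact q.2.1 _ _ (φ.map_rel_iff.mpr h)
  rcases color_unique p.2.2 p.2.1 hd with h | h
  · exact Or.inl ⟨φ, h⟩
  · exact Or.inr ⟨φ, h⟩

def toB (p : A n) : Bt n := ⟨p.1.2, p.2.2, p.1.1, p.2.1⟩

end TwoBAux
namespace TwoBAux

variable {n : ℕ}

def Sset (n : ℕ) := {x : Quot (rA n) //
  ∃ p, x = Quot.mk (rA n) p ∧ BicoloredIso p.1 (fun v => !p.1.1 v, p.1.2)}

def fQ (n : ℕ) : Quot (rA n) → Quot (rB n) :=
  Quot.map toB (fun _ _ h => h.elim fun φ _ => ⟨φ⟩)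

def revQ (n : ℕ) : Quot (rA n) → Quot (rA n) :=
  Quot.map flipA (fun _ _ h => rA_flipA h)

noncomputable def gQ (n : ℕ) : Quot (rB n) → Quot (rA n) := fun b =>
  Quot.mk (rA n) ⟨(b.out.2.2.choose, b.out.1), b.out.2.2.choose_spec, b.out.2.1⟩

lemma fQ_gQ (b : Quot (rB n)) : fQ n (gQ n b) = b := by
  show Quot.mk (rB n) (toB _) = b
  have h : toB ⟨(b.out.2.2.choose, b.out.1), b.out.2.2.choose_spec, b.out.2.1⟩ = b.out :=
    Subtype.ext rfl
  rw [h, Quot.out_eq]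

lemma gQ_inj {b b' : Quot (rB n)} (h : gQ n b = gQ n b') : b = b' := by
  have := congrArg (fQ n) h
  rwa [fQ_gQ, fQ_gQ] at this

lemma revQ_revQ (x : Quot (rA n)) : revQ n (revQ n x) = x := by
  induction x using Quot.ind with
  | mk p =>
    show Quot.mk (rA n) (flipA (flipA p)) = Quot.mk (rA n) p
    rw [flipA_flipA]

lemma fQ_revQ (x : Quot (rA n)) : fQ n (revQ n x) = fQ n x := by
  induction x using Quot.ind with
  | mk p =>
    show Quot.mk (rB n) (toB (flipA p)) = Quot.mk (rB n) (toB p)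
    have : toB (flipA p) = toB p := Subtype.ext rfl
    rw [this]

lemma fQ_fiber {x y : Quot (rA n)} (h : fQ n x = fQ n y) : y = x ∨ y = revQ n x := by
  induction x using Quot.ind with
  | mk p =>
  induction y using Quot.ind with
  | mk q =>
    obtain ⟨φ⟩ : rB n (toB p) (toB q) := (quot_mk_eq_iff rB_equiv).mp h
    rcases fiber_cases p q φ with h' | h'
    · exact Or.inl (Quot.sound (rA_equiv.symm h'))
    · exact Or.inr (Quot.sound (rA_equiv.symm h'))

lemma memS_iff (x : Quot (rA n)) :
    (∃ p, x = Quot.mk (rA n) p ∧ BicoloredIso p.1 (fun v => !p.1.1 v, p.1.2)) ↔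
      revQ n x = x := by
  constructor
  · rintro ⟨p, rfl, h⟩
    exact Quot.sound (rA_equiv.symm h)
  · intro h
    obtain ⟨p, rfl⟩ := Quot.exists_rep x
    have h' : rA n (flipA p) p := (quot_mk_eq_iff rA_equiv).mp h
    exact ⟨p, rfl, rA_equiv.symm h'⟩

open Classical in
noncomputable def Fmap (n : ℕ) : Quot (rB n) × Bool → Quot (rA n) ⊕ Sset n := fun bb =>
  if bb.2 = true then
    (if h : revQ n (gQ n bb.1) = gQ n bb.1 then
      Sum.inr ⟨gQ n bb.1, (memS_iff _).mpr h⟩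
    else Sum.inl (revQ n (gQ n bb.1)))
  else Sum.inl (gQ n bb.1)

lemma Fmap_false (b : Quot (rB n)) : Fmap n (b, false) = Sum.inl (gQ n b) := by
  simp [Fmap]

lemma Fmap_true_pos (b : Quot (rB n)) (h : revQ n (gQ n b) = gQ n b) :
    Fmap n (b, true) = Sum.inr ⟨gQ n b, (memS_iff _).mpr h⟩ := by
  simp only [Fmap, if_true]
  rw [dif_pos h]

lemma Fmap_true_neg (b : Quot (rB n)) (h : ¬ revQ n (gQ n b) = gQ n b) :
    Fmap n (b, true) = Sum.inl (revQ n (gQ n b)) := by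
  simp only [Fmap, if_true]
  rw [dif_neg h]

lemma Fmap_injective : Function.Injective (Fmap n) := by
  rintro ⟨b, β⟩ ⟨b', β'⟩ h
  cases β <;> cases β'
  · rw [Fmap_false, Fmap_false] at h
    exact congrArg (·, false) (gQ_inj (Sum.inl.inj h))
  · by_cases h2 : revQ n (gQ n b') = gQ n b'
    · rw [Fmap_false, Fmap_true_pos _ h2] at h
      exact absurd h (by simp)
    · rw [Fmap_false, Fmap_true_neg _ h2] at h
      have he : gQ n b = revQ n (gQ n b') := Sum.inl.inj h
      have hb : b = b' := by
        rw [← fQ_gQ (n := n) b, ← fQ_gQ (n := n) b', he, fQ_revQ]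
      exact absurd (hb ▸ he).symm h2
  · by_cases h1 : revQ n (gQ n b) = gQ n b
    · rw [Fmap_true_pos _ h1, Fmap_false] at h
      exact absurd h (by simp)
    · rw [Fmap_true_neg _ h1, Fmap_false] at h
      have he : revQ n (gQ n b) = gQ n b' := Sum.inl.inj h
      have hb : b = b' := by
        rw [← fQ_gQ (n := n) b, ← fQ_gQ (n := n) b', ← he, fQ_revQ]
      exact absurd (hb ▸ he) h1
  · by_cases h1 : revQ n (gQ n b) = gQ n b <;>
      by_cases h2 : revQ n (gQ n b') = gQ n b'
    · rw [Fmap_true_pos _ h1, Fmap_true_pos _ h2] at h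
      have : gQ n b = gQ n b' := congrArg Subtype.val (Sum.inr.inj h)
      exact congrArg (·, true) (gQ_inj this)
    · rw [Fmap_true_pos _ h1, Fmap_true_neg _ h2] at h
      exact absurd h (by simp)
    · rw [Fmap_true_neg _ h1, Fmap_true_pos _ h2] at h
      exact absurd h (by simp)
    · rw [Fmap_true_neg _ h1, Fmap_true_neg _ h2] at h
      have he : revQ n (gQ n b) = revQ n (gQ n b') := Sum.inl.inj h
      have : gQ n b = gQ n b' := by
        have := congrArg (revQ n) he
        rwa [revQ_revQ, revQ_revQ] at this
      exact congrArg (·, true) (gQ_inj this)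

lemma Fmap_surjective : Function.Surjective (Fmap n) := by
  rintro (x | ⟨x, hx⟩)
  · have hf : fQ n (gQ n (fQ n x)) = fQ n x := fQ_gQ _
    rcases fQ_fiber hf with h | h
    · exact ⟨(fQ n x, false), by rw [Fmap_false, ← h]⟩
    · by_cases h1 : revQ n (gQ n (fQ n x)) = gQ n (fQ n x)
      · have hx2 : x = gQ n (fQ n x) := h.trans h1
        exact ⟨(fQ n x, false), by rw [Fmap_false, ← hx2]⟩
      · exact ⟨(fQ n x, true), by rw [Fmap_true_neg _ h1, ← h]⟩
  · have hfix : revQ n x = x := (memS_iff x).mp hx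
    have hf : fQ n (gQ n (fQ n x)) = fQ n x := fQ_gQ _
    have hx2 : x = gQ n (fQ n x) := by
      rcases fQ_fiber hf with h | h
      · exact h
      · exact hfix.symm.trans ((congrArg (revQ n) h).trans (revQ_revQ _))
    have h1 : revQ n (gQ n (fQ n x)) = gQ n (fQ n x) := by rw [← hx2, hfix]
    refine ⟨(fQ n x, true), ?_⟩
    rw [Fmap_true_pos _ h1]
    exact congrArg Sum.inr (Subtype.ext hx2.symm)

lemma finite_A : Finite (A n) := by unfold A; exact Subtype.finite
lemma finite_Bt : Finite (Bt n) := by unfold Bt; exact Subtype.finite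

end TwoBAux

/-- For `n ≥ 1`: `2 Bₙ = Cₙ + Fₙ`, where `Bₙ` counts isomorphism classes of connected
bipartite simple graphs on `n` vertices, `Cₙ` counts isomorphism classes of connected
bicolored graphs on `n` vertices, and `Fₙ` counts isomorphism classes of connected
bicolored graphs isomorphic to their color reversal. -/
theorem two_mul_connected_bipartite_classes (n : ℕ) (hn : 1 ≤ n) :
    2 * Nat.card (Quot fun
        (G H : {G : SimpleGraph (Fin n) //
          G.Connected ∧ ∃ c : Fin n → Bool, ∀ u v, G.Adj u v → c u ≠ c v}) =>
        Nonempty (G.1 ≃g H.1)) =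
      Nat.card (Quot fun
          (p q : {p : (Fin n → Bool) × SimpleGraph (Fin n) //
            (∀ u v, p.2.Adj u v → p.1 u ≠ p.1 v) ∧ p.2.Connected}) =>
          BicoloredIso p.1 q.1) +
      Nat.card {x : Quot fun
          (p q : {p : (Fin n → Bool) × SimpleGraph (Fin n) //
            (∀ u v, p.2.Adj u v → p.1 u ≠ p.1 v) ∧ p.2.Connected}) =>
          BicoloredIso p.1 q.1 //
        ∃ p, x = Quot.mk _ p ∧ BicoloredIso p.1 (fun v => !p.1.1 v, p.1.2)} := by
  haveI : Finite (TwoBAux.A n) := TwoBAux.finite_A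
  haveI : Finite (TwoBAux.Bt n) := TwoBAux.finite_Bt
  haveI : Finite (Quot (TwoBAux.rA n)) := Finite.of_surjective _ Quot.mk_surjective
  haveI : Finite (Quot (TwoBAux.rB n)) := Finite.of_surjective _ Quot.mk_surjective
  haveI : Finite (TwoBAux.Sset n) := by unfold TwoBAux.Sset; exact Subtype.finite
  have key : Nat.card (Quot (TwoBAux.rB n) × Bool) =
      Nat.card (Quot (TwoBAux.rA n) ⊕ TwoBAux.Sset n) :=
    Nat.card_eq_of_bijective _ ⟨TwoBAux.Fmap_injective, TwoBAux.Fmap_surjective⟩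
  rw [Nat.card_prod, Nat.card_sum] at key
  have hb : Nat.card Bool = 2 := by simp [Nat.card_eq_fintype_card]
  rw [hb] at key
  show 2 * Nat.card (Quot (TwoBAux.rB n)) =
    Nat.card (Quot (TwoBAux.rA n)) + Nat.card (TwoBAux.Sset n)
  omega
end

section
/- Let g_e and g_τ be formal power series in ℚ[[x]] with zero constant term, and define f_e = exp(∑_{k≥1} g_e(x^k)/k) and f_τ = exp(∑_{k≥1, k odd} g_τ(x^k)/k + ∑_{k≥2, k even} g_e(x^k)/k). Then g_e(x) = ∑_{k≥1} (μ(k)/k)·log f_e(x^k) and g_τ(x) = ∑_{k≥1, k odd} (μ(k)/k)·log f_τ(x^k) + ∑_{k≥2, k even} (μ(k)/k)·log f_e(x^k), where μ is the Möbius function. -/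
/-- Composition `f ∘ g` of formal power series, intended for `g` with zero constant
term (in which case only `k ≤ n` contribute to the `n`-th coefficient). -/
noncomputable def pcomp (f g : PowerSeries ℚ) : PowerSeries ℚ :=
  PowerSeries.mk fun n => ∑ k ∈ Finset.range (n + 1),
    PowerSeries.coeff k f * PowerSeries.coeff n (g ^ k)

/-- Formal logarithm of a power series with constant term `1`, via
`log F = ∑_{k ≥ 1} (-1)^{k+1} (F - 1)^k / k`. -/
noncomputable def plog (F : PowerSeries ℚ) : PowerSeries ℚ :=
  pcomp (PowerSeries.mk fun k => if k = 0 then 0 else (-1) ^ (k + 1) / (k : ℚ)) (F - 1)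

/-- Formal exponential of a power series with zero constant term. -/
noncomputable def pexp (u : PowerSeries ℚ) : PowerSeries ℚ :=
  pcomp (PowerSeries.exp ℚ) u

/-- The substitution `g(x^k)` of `x^k` into a formal power series `g`, for `k ≥ 1`. -/
noncomputable def substPow (g : PowerSeries ℚ) (k : ℕ) : PowerSeries ℚ :=
  PowerSeries.mk fun n => if k ∣ n then PowerSeries.coeff (n / k) g else 0

/-- The coefficientwise sum `∑_{k ≥ 1} h k` of a family of power series, intended for
families where the `n`-th coefficient of `h k` vanishes whenever `k > n` (so only
finitely many `k` contribute to each coefficient). -/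
noncomputable def seriesSum (h : ℕ → PowerSeries ℚ) : PowerSeries ℚ :=
  PowerSeries.mk fun n => ∑ k ∈ Finset.Icc 1 n, PowerSeries.coeff n (h k)

open PowerSeries Finset

lemma coeff_pcomp (f g : PowerSeries ℚ) (n : ℕ) :
    coeff n (pcomp f g) = ∑ k ∈ range (n + 1), coeff k f * coeff n (g ^ k) := by
  simp [pcomp]

lemma coeff_pow_eq_zero {g : PowerSeries ℚ} (hg : constantCoeff g = 0)
    {n k : ℕ} (h : n < k) : coeff n (g ^ k) = 0 := by
  have : (X : PowerSeries ℚ) ^ k ∣ g ^ k := pow_dvd_pow_of_dvd (X_dvd_iff.mpr hg) k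
  exact X_pow_dvd_iff.mp this n h

lemma coeff_pcomp_sum {g : PowerSeries ℚ} (hg : constantCoeff g = 0)
    (f : PowerSeries ℚ) {n N : ℕ} (h : n ≤ N) :
    coeff n (pcomp f g)
      = coeff n (∑ k ∈ range (N + 1), coeff k f • g ^ k) := by
  rw [coeff_pcomp, map_sum]
  simp only [coeff_smul, smul_eq_mul]
  apply Finset.sum_subset (range_subset_range.2 (by omega))
  intro k _ hk
  rw [mem_range, not_lt] at hk
  rw [coeff_pow_eq_zero hg (by omega), mul_zero]

lemma coeff_mul_congr {A A' B : PowerSeries ℚ} {n : ℕ}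
    (h : ∀ m ≤ n, coeff m A = coeff m A') :
    coeff n (A * B) = coeff n (A' * B) := by
  rw [coeff_mul, coeff_mul]
  refine Finset.sum_congr rfl fun p hp => ?_
  rw [Finset.HasAntidiagonal.mem_antidiagonal] at hp
  rw [h p.1 (by omega)]

lemma pcomp_add_left (a b g : PowerSeries ℚ) :
    pcomp (a + b) g = pcomp a g + pcomp b g := by
  ext n
  simp [coeff_pcomp, add_mul, Finset.sum_add_distrib]

lemma pcomp_one (g : PowerSeries ℚ) : pcomp 1 g = 1 := by
  ext n
  rw [coeff_pcomp]
  rw [Finset.sum_eq_single 0]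
  · simp
  · intro k _ hk
    rw [coeff_one, if_neg hk, zero_mul]
  · simp

lemma pcomp_sub_left (a b g : PowerSeries ℚ) :
    pcomp (a - b) g = pcomp a g - pcomp b g := by
  ext n
  simp [coeff_pcomp, sub_mul, Finset.sum_sub_distrib]

lemma pcomp_X {g : PowerSeries ℚ} (hg : constantCoeff g = 0) : pcomp X g = g := by
  ext n
  rw [coeff_pcomp]
  rw [Finset.sum_eq_single 1]
  · cases n with
    | zero => simp [coeff_pow_eq_zero hg]
    | succ n => simp
  · intro k _ hk
    rw [coeff_X, if_neg hk, zero_mul]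
  · intro h
    simp only [mem_range, not_lt] at h
    have hn : n = 0 := by omega
    subst hn
    simp [coeff_zero_eq_constantCoeff, hg]

lemma sq_tri (F : ℕ → ℕ → ℚ) (c : ℕ → ℚ) (n : ℕ) (hc : ∀ m, n < m → c m = 0) :
    ∑ m ∈ range (n + 1), ∑ p ∈ Finset.HasAntidiagonal.antidiagonal m, F p.1 p.2 * c m
      = ∑ i ∈ range (n + 1), ∑ j ∈ range (n + 1), F i j * c (i + j) := by
  have h1 : ∀ m ∈ range (n + 1), ∑ p ∈ Finset.HasAntidiagonal.antidiagonal m, F p.1 p.2 * c m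
      = ∑ p ∈ Finset.HasAntidiagonal.antidiagonal m, F p.1 p.2 * c (p.1 + p.2) :=
    fun m _ => Finset.sum_congr rfl fun p hp => by rw [Finset.HasAntidiagonal.mem_antidiagonal.mp hp]
  rw [Finset.sum_congr rfl h1, ← Finset.sum_product']
  rw [← Finset.sum_filter_of_ne (p := fun q : ℕ × ℕ => q.1 + q.2 ≤ n)
    (fun q _ hne => by by_contra hcon; exact hne (by rw [hc _ (by omega), mul_zero]))]
  rw [Finset.sum_sigma']
  refine Finset.sum_nbij' (fun x => (x.2.1, x.2.2)) (fun q => ⟨q.1 + q.2, q⟩) ?_ ?_ ?_ ?_ ?_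
  · intro x hx
    simp only [Finset.mem_sigma, mem_range, Finset.HasAntidiagonal.mem_antidiagonal] at hx
    simp only [Finset.mem_filter, Finset.mem_product, mem_range]
    omega
  · intro q hq
    simp only [Finset.mem_filter, Finset.mem_product, mem_range] at hq
    refine Finset.mem_sigma.mpr ⟨?_, Finset.HasAntidiagonal.mem_antidiagonal.mpr rfl⟩
    exact mem_range.mpr (Nat.lt_succ_of_le hq.2)
  · intro x hx
    simp only [Finset.mem_sigma, mem_range, Finset.HasAntidiagonal.mem_antidiagonal] at hx
    simp [hx.2]
  · intro q hq
    rfl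
  · intro x hx
    rfl

lemma coeff_mul_congr' {A B B' : PowerSeries ℚ} {n : ℕ}
    (h : ∀ m ≤ n, coeff m B = coeff m B') :
    coeff n (A * B) = coeff n (A * B') := by
  rw [mul_comm, mul_comm A B']
  exact coeff_mul_congr h

lemma pcomp_mul {g : PowerSeries ℚ} (hg : constantCoeff g = 0) (a b : PowerSeries ℚ) :
    pcomp (a * b) g = pcomp a g * pcomp b g := by
  ext n
  -- replace both factors by their partial sums
  have hA : ∀ m ≤ n, coeff m (pcomp a g)
      = coeff m (∑ k ∈ range (n + 1), coeff k a • g ^ k) :=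
    fun m hm => coeff_pcomp_sum hg a hm
  have hB : ∀ m ≤ n, coeff m (pcomp b g)
      = coeff m (∑ k ∈ range (n + 1), coeff k b • g ^ k) :=
    fun m hm => coeff_pcomp_sum hg b hm
  rw [coeff_mul_congr hA, coeff_mul_congr' hB]
  rw [Finset.sum_mul_sum]
  rw [coeff_pcomp]
  simp only [smul_mul_smul_comm, ← pow_add]
  rw [map_sum]
  simp only [map_sum, coeff_smul, smul_eq_mul, PowerSeries.coeff_mul, Finset.sum_mul]
  exact sq_tri (fun i j => coeff i a * coeff j b) (fun m => coeff n (g ^ m)) n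
    (fun m hm => coeff_pow_eq_zero hg hm)

lemma pcomp_pow {g : PowerSeries ℚ} (hg : constantCoeff g = 0) (a : PowerSeries ℚ) (k : ℕ) :
    pcomp (a ^ k) g = (pcomp a g) ^ k := by
  induction k with
  | zero => simpa using pcomp_one g
  | succ k ih => rw [pow_succ, pow_succ, pcomp_mul hg, ih]

lemma pcomp_assoc {g h : PowerSeries ℚ} (hg : constantCoeff g = 0)
    (hh : constantCoeff h = 0) (f : PowerSeries ℚ) :
    pcomp (pcomp f g) h = pcomp f (pcomp g h) := by
  ext n
  rw [coeff_pcomp, coeff_pcomp]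
  have h1 : ∀ k ∈ range (n + 1), coeff k (pcomp f g) * coeff n (h ^ k)
      = ∑ j ∈ range (n + 1), coeff j f * (coeff k (g ^ j) * coeff n (h ^ k)) := by
    intro k hk
    rw [mem_range] at hk
    rw [coeff_pcomp, Finset.sum_mul]
    simp only [mul_assoc]
    apply Finset.sum_subset (range_subset_range.2 (by omega))
    intro j _ hj
    rw [mem_range, not_lt] at hj
    rw [coeff_pow_eq_zero hg (by omega), zero_mul, mul_zero]
  rw [Finset.sum_congr rfl h1, Finset.sum_comm]
  refine Finset.sum_congr rfl fun j _ => ?_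
  rw [← Finset.mul_sum]
  congr 1
  rw [← pcomp_pow hh, coeff_pcomp]

noncomputable def Laux : PowerSeries ℚ :=
  PowerSeries.mk fun k => if k = 0 then 0 else (-1) ^ (k + 1) / (k : ℚ)

lemma derivative_exp : d⁄dX ℚ (exp ℚ) = exp ℚ := by
  ext n
  rw [coeff_derivative, coeff_exp, coeff_exp]
  have h0 : ((n + 1).factorial : ℚ) ≠ 0 := Nat.cast_ne_zero.mpr (Nat.factorial_ne_zero _)
  have h1 : ((n).factorial : ℚ) ≠ 0 := Nat.cast_ne_zero.mpr (Nat.factorial_ne_zero _)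
  have : ((n + 1).factorial : ℚ) = (n + 1) * n.factorial := by
    rw [Nat.factorial_succ]; push_cast; ring
  simp only [Algebra.algebraMap_self, RingHom.id_apply]
  rw [this]
  field_simp

lemma derivative_pcomp {g : PowerSeries ℚ} (hg : constantCoeff g = 0) (f : PowerSeries ℚ) :
    d⁄dX ℚ (pcomp f g) = pcomp (d⁄dX ℚ f) g * d⁄dX ℚ g := by
  ext n
  rw [coeff_derivative, coeff_pcomp_sum hg f (le_refl (n + 1)), ← coeff_derivative]
  have hT : ∀ m ≤ n, coeff m (pcomp (d⁄dX ℚ f) g)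
      = coeff m (∑ j ∈ range (n + 1), coeff j (d⁄dX ℚ f) • g ^ j) :=
    fun m hm => coeff_pcomp_sum hg _ hm
  rw [coeff_mul_congr hT]
  congr 1
  rw [map_sum]
  rw [Finset.sum_range_succ']
  simp only [Derivation.map_smul, Derivation.leibniz_pow]
  simp only [pow_zero, Nat.sub_zero, zero_smul, smul_zero, add_zero, Nat.add_sub_cancel]
  rw [Finset.sum_mul]
  refine Finset.sum_congr rfl fun i _ => ?_
  rw [coeff_derivative]
  rw [← Nat.cast_smul_eq_nsmul ℚ, smul_smul, smul_eq_mul, smul_mul_assoc]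
  push_cast
  rfl

lemma derivative_Laux : d⁄dX ℚ Laux = PowerSeries.mk fun k => (-1 : ℚ) ^ k := by
  ext n
  rw [coeff_derivative]
  have h : ((n : ℚ) + 1) ≠ 0 := by positivity
  simp only [Laux, coeff_mk, Nat.succ_ne_zero, if_false]
  push_cast
  field_simp
  ring

lemma geom_mul : (PowerSeries.mk fun k => ((-1 : ℚ)) ^ k) * (1 + X) = 1 := by
  ext n
  rw [mul_add, mul_one, map_add]
  cases n with
  | zero => simp
  | succ n =>
    rw [PowerSeries.coeff_succ_mul_X]
    simp [pow_succ]

lemma constantCoeff_pcomp (f g : PowerSeries ℚ) :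
    constantCoeff (pcomp f g) = constantCoeff f := by
  rw [← coeff_zero_eq_constantCoeff, coeff_pcomp]
  simp [← coeff_zero_eq_constantCoeff]

lemma log_exp : pcomp Laux (exp ℚ - 1) = X := by
  have hh : constantCoeff (exp ℚ - 1) = 0 := by
    simp [map_sub, constantCoeff_exp]
  apply PowerSeries.derivative.ext
  · rw [derivative_pcomp hh, derivative_Laux, derivative_X]
    rw [map_sub, _root_.derivative_exp, Derivation.map_one_eq_zero, sub_zero]
    have hexp : exp ℚ = pcomp (1 + X) (exp ℚ - 1) := by
      rw [pcomp_add_left, pcomp_one, pcomp_X hh]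
      ring
    nth_rewrite 2 [hexp]
    rw [← pcomp_mul hh, geom_mul, pcomp_one]
  · rw [constantCoeff_pcomp]
    simp [Laux, ← coeff_zero_eq_constantCoeff, constantCoeff_X]

lemma plog_def (F : PowerSeries ℚ) : plog F = pcomp Laux (F - 1) := rfl

lemma plog_pexp {u : PowerSeries ℚ} (hu : constantCoeff u = 0) : plog (pexp u) = u := by
  have he1 : constantCoeff (exp ℚ - 1) = 0 := by simp [map_sub, constantCoeff_exp]
  rw [plog_def, pexp]
  have : pcomp (exp ℚ) u - 1 = pcomp (exp ℚ - 1) u := by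
    rw [pcomp_sub_left, pcomp_one]
  rw [this, ← pcomp_assoc he1 hu, log_exp, pcomp_X hu]

lemma constantCoeff_pexp (u : PowerSeries ℚ) : constantCoeff (pexp u) = 1 := by
  rw [pexp, constantCoeff_pcomp, constantCoeff_exp]

lemma substPow_eq_pcomp (g : PowerSeries ℚ) {k : ℕ} (hk : 1 ≤ k) :
    substPow g k = pcomp g (X ^ k) := by
  ext n
  rw [coeff_pcomp, substPow, coeff_mk]
  simp only [← pow_mul, PowerSeries.coeff_X_pow]
  by_cases h : k ∣ n
  · obtain ⟨j, rfl⟩ := h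
    rw [if_pos ⟨j, rfl⟩, Nat.mul_div_cancel_left _ (show 0 < k by omega)]
    symm
    refine (Finset.sum_eq_single j ?_ ?_).trans ?_
    · intro m _ hm
      have hne : ¬ (k * j = k * m) := fun hc => hm
        (by have := Nat.eq_of_mul_eq_mul_left (show 0 < k by omega) hc; omega)
      rw [if_neg hne, mul_zero]
    · intro hj
      exfalso
      rw [mem_range, not_lt] at hj
      have := Nat.le_mul_of_pos_left j (show 0 < k by omega)
      omega
    · rw [if_pos rfl, mul_one]
  · rw [if_neg h]
    symm
    apply Finset.sum_eq_zero
    intro m _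
    rw [if_neg (fun hc => h ⟨m, hc⟩), mul_zero]

lemma plog_substPow_pexp {u : PowerSeries ℚ} (hu : constantCoeff u = 0)
    {m : ℕ} (hm : 1 ≤ m) : plog (substPow (pexp u) m) = substPow u m := by
  have hX : constantCoeff ((X : PowerSeries ℚ) ^ m) = 0 := by
    rw [map_pow, constantCoeff_X, zero_pow (by omega)]
  have hF1 : constantCoeff (pexp u - 1) = 0 := by
    rw [map_sub, constantCoeff_pexp, map_one, sub_self]
  rw [substPow_eq_pcomp _ hm, plog_def]
  have h2 : pcomp (pexp u) (X ^ m) - 1 = pcomp (pexp u - 1) (X ^ m) := by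
    rw [pcomp_sub_left, pcomp_one]
  rw [h2, ← pcomp_assoc hF1 hX, ← plog_def, plog_pexp hu, substPow_eq_pcomp _ hm]

lemma sum_Icc_dvd (n : ℕ) (F : ℕ → ℚ) :
    ∑ m ∈ Finset.Icc 1 n, (if m ∣ n then F m else 0) = ∑ m ∈ n.divisors, F m := by
  rw [Nat.divisors, Finset.sum_filter, Finset.Ico_add_one_right_eq_Icc]

lemma constantCoeff_seriesSum (h : ℕ → PowerSeries ℚ) :
    constantCoeff (seriesSum h) = 0 := by
  rw [← coeff_zero_eq_constantCoeff, seriesSum, coeff_mk]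
  simp

lemma seriesSum_congr {h h' : ℕ → PowerSeries ℚ} (H : ∀ m, 1 ≤ m → h m = h' m) :
    seriesSum h = seriesSum h' := by
  ext n
  rw [seriesSum, seriesSum, coeff_mk, coeff_mk]
  refine Finset.sum_congr rfl fun m hm => ?_
  rw [Finset.mem_Icc] at hm
  rw [H m hm.1]

lemma coeff_seriesSum_substPow (c : ℕ → ℚ) (w : ℕ → PowerSeries ℚ) (j : ℕ) :
    coeff j (seriesSum fun k => c k • substPow (w k) k)
      = ∑ k ∈ j.divisors, c k * coeff (j / k) (w k) := by
  rw [seriesSum, coeff_mk, ← sum_Icc_dvd]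
  refine Finset.sum_congr rfl fun k _ => ?_
  rw [coeff_smul, substPow, coeff_mk, smul_eq_mul, mul_ite, mul_zero]

lemma nat_div_helper {m d n : ℕ} (hmd : m ∣ d) (hdn : d ∣ n) (hm : m ≠ 0) (hd : d ≠ 0) :
    (n / m) / (d / m) = n / d := by
  obtain ⟨a, rfl⟩ := hmd
  obtain ⟨t, rfl⟩ := hdn
  have hm' : 0 < m := Nat.pos_of_ne_zero hm
  have ha' : 0 < a := Nat.pos_of_ne_zero (by rintro rfl; simp at hd)
  rw [mul_assoc, Nat.mul_div_cancel_left _ hm', Nat.mul_div_cancel_left _ hm',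
    Nat.mul_div_cancel_left _ ha', ← mul_assoc,
    Nat.mul_div_cancel_left _ (by positivity)]

lemma sum_divisors_mul (n : ℕ) (F : ℕ → ℕ → ℚ) :
    ∑ m ∈ n.divisors, ∑ k ∈ (n / m).divisors, F m k
      = ∑ d ∈ n.divisors, ∑ m ∈ d.divisors, F m (d / m) := by
  rw [Finset.sum_sigma', Finset.sum_sigma']
  refine Finset.sum_nbij' (fun x => ⟨x.1 * x.2, x.1⟩) (fun y => ⟨y.2, y.1 / y.2⟩)
    ?_ ?_ ?_ ?_ ?_
  · rintro ⟨m, k⟩ hx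
    simp only [Finset.mem_sigma, Nat.mem_divisors] at hx ⊢
    obtain ⟨⟨hmn, hn0⟩, hk, hnm0⟩ := hx
    have hm0 : m ≠ 0 := by rintro rfl; simp at hnm0
    have hk0 : k ≠ 0 := by rintro rfl; exact hnm0 (Nat.eq_zero_of_zero_dvd hk)
    have hmkn : m * k ∣ n := by
      have : m * k ∣ m * (n / m) := Nat.mul_dvd_mul_left m hk
      rwa [Nat.mul_div_cancel' hmn] at this
    exact ⟨⟨hmkn, hn0⟩, dvd_mul_right _ _, Nat.mul_ne_zero hm0 hk0⟩
  · rintro ⟨d, m⟩ hy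
    simp only [Finset.mem_sigma, Nat.mem_divisors] at hy ⊢
    obtain ⟨⟨hdn, hn0⟩, hmd, hd0⟩ := hy
    have hm0 : m ≠ 0 := by rintro rfl; exact hd0 (Nat.eq_zero_of_zero_dvd hmd)
    refine ⟨⟨hmd.trans hdn, hn0⟩, ?_, ?_⟩
    · obtain ⟨a, ha⟩ := hmd
      obtain ⟨t, ht⟩ := hdn
      subst ha; subst ht
      rw [Nat.mul_div_cancel_left _ (Nat.pos_of_ne_zero hm0), mul_assoc,
        Nat.mul_div_cancel_left _ (Nat.pos_of_ne_zero hm0)]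
      exact dvd_mul_right _ _
    · obtain ⟨c, hc⟩ := hmd.trans hdn
      subst hc
      rw [Nat.mul_div_cancel_left _ (Nat.pos_of_ne_zero hm0)]
      rintro rfl
      simp at hn0
  · rintro ⟨m, k⟩ hx
    simp only [Finset.mem_sigma, Nat.mem_divisors] at hx
    have hm0 : m ≠ 0 := by rintro rfl; simp at hx
    exact Sigma.ext rfl (heq_of_eq (Nat.mul_div_cancel_left _ (Nat.pos_of_ne_zero hm0)))
  · rintro ⟨d, m⟩ hy
    simp only [Finset.mem_sigma, Nat.mem_divisors] at hy
    exact Sigma.ext (Nat.mul_div_cancel' hy.2.1) HEq.rfl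
  · rintro ⟨m, k⟩ hx
    simp only [Finset.mem_sigma, Nat.mem_divisors] at hx
    have hm0 : m ≠ 0 := by rintro rfl; simp at hx
    dsimp only
    rw [Nat.mul_div_cancel_left _ (Nat.pos_of_ne_zero hm0)]

lemma moebius_sum (d : ℕ) :
    ∑ m ∈ d.divisors, ((ArithmeticFunction.moebius m : ℤ) : ℚ)
      = if d = 1 then 1 else 0 := by
  have hz : ∑ m ∈ d.divisors, ArithmeticFunction.moebius m
      = if d = 1 then 1 else 0 := by
    rw [← ArithmeticFunction.coe_mul_zeta_apply, ArithmeticFunction.moebius_mul_coe_zeta,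
      ArithmeticFunction.one_apply]
  calc ∑ m ∈ d.divisors, ((ArithmeticFunction.moebius m : ℤ) : ℚ)
      = ((∑ m ∈ d.divisors, ArithmeticFunction.moebius m : ℤ) : ℚ) := by push_cast; rfl
    _ = if d = 1 then 1 else 0 := by rw [hz]; split <;> norm_num

lemma collapse1 {d : ℕ} (hd : d ≠ 0) (c : ℚ) :
    ∑ m ∈ d.divisors, ((ArithmeticFunction.moebius m : ℤ) : ℚ) / m * (1 / ((d / m : ℕ) : ℚ) * c)
      = if d = 1 then c else 0 := by
  have h1 : ∀ m ∈ d.divisors,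
      ((ArithmeticFunction.moebius m : ℤ) : ℚ) / m * (1 / ((d / m : ℕ) : ℚ) * c)
        = ((ArithmeticFunction.moebius m : ℤ) : ℚ) * (1 / (d : ℚ) * c) := by
    intro m hm
    rw [Nat.mem_divisors] at hm
    have hm0 : (m : ℚ) ≠ 0 := Nat.cast_ne_zero.mpr (by rintro rfl; exact hd (Nat.eq_zero_of_zero_dvd hm.1))
    have hdm : ((d / m : ℕ) : ℚ) = (d : ℚ) / (m : ℚ) := Nat.cast_div hm.1 hm0
    have hd0 : (d : ℚ) ≠ 0 := Nat.cast_ne_zero.mpr hd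
    rw [hdm]
    field_simp
  rw [Finset.sum_congr rfl h1, ← Finset.sum_mul, moebius_sum]
  split <;> simp_all

lemma core (Z : ℕ → PowerSeries ℚ) (h1 : constantCoeff (Z 1) = 0) :
    Z 1 = seriesSum (fun m => (((ArithmeticFunction.moebius m : ℤ) : ℚ) / (m : ℚ)) •
      substPow (seriesSum fun k => (1 / (k : ℚ)) • substPow (Z (m * k)) k) m) := by
  ext n
  rw [coeff_seriesSum_substPow]
  by_cases hn : n = 0
  · subst hn
    rw [coeff_zero_eq_constantCoeff, h1]
    simp
  have h2 : ∀ m ∈ n.divisors,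
      ((ArithmeticFunction.moebius m : ℤ) : ℚ) / m
          * coeff (n / m) (seriesSum fun k => (1 / (k : ℚ)) • substPow (Z (m * k)) k)
        = ∑ k ∈ (n / m).divisors,
          ((ArithmeticFunction.moebius m : ℤ) : ℚ) / m
            * (1 / (k : ℚ) * coeff (n / m / k) (Z (m * k))) := by
    intro m _
    rw [coeff_seriesSum_substPow, Finset.mul_sum]
  rw [Finset.sum_congr rfl h2, sum_divisors_mul]
  have h3 : ∀ d ∈ n.divisors,
      (∑ m ∈ d.divisors, ((ArithmeticFunction.moebius m : ℤ) : ℚ) / m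
        * (1 / ((d / m : ℕ) : ℚ) * coeff (n / m / (d / m)) (Z (m * (d / m)))))
        = if d = 1 then coeff n (Z 1) else 0 := by
    intro d hd
    rw [Nat.mem_divisors] at hd
    have hd0 : d ≠ 0 := by rintro rfl; exact hd.2 (Nat.eq_zero_of_zero_dvd hd.1)
    have h4 : ∀ m ∈ d.divisors,
        ((ArithmeticFunction.moebius m : ℤ) : ℚ) / m
          * (1 / ((d / m : ℕ) : ℚ) * coeff (n / m / (d / m)) (Z (m * (d / m))))
          = ((ArithmeticFunction.moebius m : ℤ) : ℚ) / m
          * (1 / ((d / m : ℕ) : ℚ) * coeff (n / d) (Z d)) := by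
      intro m hm
      rw [Nat.mem_divisors] at hm
      have hm0 : m ≠ 0 := by rintro rfl; exact hd0 (Nat.eq_zero_of_zero_dvd hm.1)
      rw [nat_div_helper hm.1 hd.1 hm0 hd0, Nat.mul_div_cancel' hm.1]
    rw [Finset.sum_congr rfl h4, collapse1 hd0]
    split
    · next h => subst h; rw [Nat.div_one]
    · rfl
  rw [Finset.sum_congr rfl h3, Finset.sum_ite_eq' n.divisors 1 (fun _ => coeff n (Z 1)),
    if_pos (Nat.one_mem_divisors.mpr hn)]

/-- Möbius inversion for the pair of exponential relations linking `g_e, g_τ` (ogfs of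
connected structures) to `f_e, f_τ` (ogfs of all structures). -/
theorem moebius_inversion_pair (ge gτ : PowerSeries ℚ)
    (hge : PowerSeries.constantCoeff ge = 0)
    (hgτ : PowerSeries.constantCoeff gτ = 0)
    (fe fτ : PowerSeries ℚ)
    (hfe : fe = pexp (seriesSum fun k => (1 / (k : ℚ)) • substPow ge k))
    (hfτ : fτ = pexp (seriesSum fun k =>
      if Odd k then (1 / (k : ℚ)) • substPow gτ k
      else (1 / (k : ℚ)) • substPow ge k)) :
    ge = seriesSum (fun k =>
        (((ArithmeticFunction.moebius k : ℤ) : ℚ) / (k : ℚ)) • plog (substPow fe k)) ∧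
    gτ = seriesSum (fun k =>
        if Odd k then
          (((ArithmeticFunction.moebius k : ℤ) : ℚ) / (k : ℚ)) • plog (substPow fτ k)
        else
          (((ArithmeticFunction.moebius k : ℤ) : ℚ) / (k : ℚ)) • plog (substPow fe k)) := by
  have hue : constantCoeff (seriesSum fun k => (1 / (k : ℚ)) • substPow ge k) = 0 :=
    constantCoeff_seriesSum _
  have huτ : constantCoeff (seriesSum fun k =>
      if Odd k then (1 / (k : ℚ)) • substPow gτ k
      else (1 / (k : ℚ)) • substPow ge k) = 0 := constantCoeff_seriesSum _
  constructor
  · have hfam : ∀ m, 1 ≤ m →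
        (((ArithmeticFunction.moebius m : ℤ) : ℚ) / (m : ℚ)) • plog (substPow fe m)
          = (((ArithmeticFunction.moebius m : ℤ) : ℚ) / (m : ℚ)) •
            substPow (seriesSum fun k => (1 / (k : ℚ)) •
              substPow ((fun _ : ℕ => ge) (m * k)) k) m := by
      intro m hm
      rw [hfe, plog_substPow_pexp hue hm]
    rw [seriesSum_congr hfam]
    exact core (fun _ => ge) hge
  · set Zτ : ℕ → PowerSeries ℚ := fun d => if Odd d then gτ else ge with hZτ
    have hZτ1 : Zτ 1 = gτ := if_pos odd_one
    have hfam : ∀ m, 1 ≤ m →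
        (if Odd m then
          (((ArithmeticFunction.moebius m : ℤ) : ℚ) / (m : ℚ)) • plog (substPow fτ m)
        else
          (((ArithmeticFunction.moebius m : ℤ) : ℚ) / (m : ℚ)) • plog (substPow fe m))
          = (((ArithmeticFunction.moebius m : ℤ) : ℚ) / (m : ℚ)) •
            substPow (seriesSum fun k => (1 / (k : ℚ)) • substPow (Zτ (m * k)) k) m := by
      intro m hm
      by_cases hodd : Odd m
      · rw [if_pos hodd, hfτ, plog_substPow_pexp huτ hm]
        have : (seriesSum fun k =>
            if Odd k then (1 / (k : ℚ)) • substPow gτ k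
            else (1 / (k : ℚ)) • substPow ge k)
            = seriesSum fun k => (1 / (k : ℚ)) • substPow (Zτ (m * k)) k := by
          apply seriesSum_congr
          intro k _
          simp only [hZτ, Nat.odd_mul, hodd, true_and]
          by_cases hk : Odd k
          · rw [if_pos hk, if_pos hk]
          · rw [if_neg hk, if_neg hk]
        rw [this]
      · rw [if_neg hodd, hfe, plog_substPow_pexp hue hm]
        have : (seriesSum fun k => (1 / (k : ℚ)) • substPow ge k)
            = seriesSum fun k => (1 / (k : ℚ)) • substPow (Zτ (m * k)) k := by
          apply seriesSum_congr
          intro k _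
          simp only [hZτ, Nat.odd_mul, hodd, false_and, if_false]
        rw [this]
    rw [seriesSum_congr hfam, ← hZτ1]
    exact core Zτ (by rw [hZτ1]; exact hgτ)
end
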